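/- arXiv:2603.12947 — 6 statements merged into one kernel-verified Lean document; each statement's English description precedes it below -/
import Mathlib

section
/- Let X_T be the binary tree space and let Σ = {x ∈ B_{X_T} : x(s) ∈ {-1, 0, 1} for all s ∈ T}. Then the closed convex hull of Σ equals B_{X_T}. -/
open Metric Filter Topology

/-- Nodes of the infinite binary tree: finite sequences over `{0,1}`. -/
abbrev TreeNode := List Bool

/-- A finite set of nodes is a chain if its elements are pairwise comparable for the
initial-segment (prefix) order. -/
def IsFinChain (A : Finset TreeNode) : Prop := ∀ s ∈ A, ∀ t ∈ A, s <+: t ∨ t <+: s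

/-- A set of nodes is a chain if its elements are pairwise comparable. -/
def IsSetChain (A : Set TreeNode) : Prop := ∀ s ∈ A, ∀ t ∈ A, s <+: t ∨ t <+: s

/-- A branch is a maximal chain of the binary tree. -/
def IsBranch (β : Set TreeNode) : Prop :=
  IsSetChain β ∧ ∀ γ : Set TreeNode, IsSetChain γ → β ⊆ γ → γ = β

/-- A set of nodes is an antichain if its elements are pairwise incomparable. -/
def IsTreeAntichain (A : Set TreeNode) : Prop :=
  ∀ s ∈ A, ∀ t ∈ A, s ≠ t → ¬ s <+: t ∧ ¬ t <+: s

/-- The binary tree norm of a finitely supported function on the tree: the supremum over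
chains `A` of `∑_{t ∈ A} |c t|`. -/
noncomputable def treeNorm (c : TreeNode →₀ ℝ) : ℝ :=
  sSup {r | ∃ A : Finset TreeNode, IsFinChain A ∧ r = ∑ t ∈ A, |c t|}

lemma chain_sum_le_support_sum (c : TreeNode →₀ ℝ) (A : Finset TreeNode) :
    ∑ t ∈ A, |c t| ≤ ∑ t ∈ c.support, |c t| := by
  rw [← Finset.sum_filter_of_ne (p := fun t => c t ≠ 0)
    (fun x _ h => fun h0 => h (by simp [h0]))]
  refine Finset.sum_le_sum_of_subset_of_nonneg ?_ (fun _ _ _ => abs_nonneg _)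
  intro t ht
  simp only [Finset.mem_filter] at ht
  exact Finsupp.mem_support_iff.2 ht.2

lemma treeNorm_le {c : TreeNode →₀ ℝ} {B : ℝ}
    (h : ∀ A : Finset TreeNode, IsFinChain A → ∑ t ∈ A, |c t| ≤ B) : treeNorm c ≤ B := by
  refine csSup_le ⟨0, ∅, by intro s hs; simp at hs, by simp⟩ ?_
  rintro r ⟨A, hA, rfl⟩
  exact h A hA

lemma le_treeNorm {c : TreeNode →₀ ℝ} {A : Finset TreeNode} (hA : IsFinChain A) :
    ∑ t ∈ A, |c t| ≤ treeNorm c := by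
  refine le_csSup ⟨∑ t ∈ c.support, |c t|, ?_⟩ ⟨A, hA, rfl⟩
  rintro r ⟨B, hB, rfl⟩
  exact chain_sum_le_support_sum c B

lemma treeNorm_le_sum (c : TreeNode →₀ ℝ) : treeNorm c ≤ ∑ t ∈ c.support, |c t| :=
  treeNorm_le fun A _ => chain_sum_le_support_sum c A

lemma round_bound {a u Nr k sg : ℝ} (hu : 0 ≤ u) (hNN : Nr * u = 1)
    (h1 : k ≤ Nr * |a|) (h2 : Nr * |a| < k + 1)
    (hsg : sg = if a < 0 then -1 else 1) : |a - k * sg * u| ≤ u := by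
  have hune : u ≠ 0 := by rintro rfl; simp at hNN
  have hupos : 0 < u := lt_of_le_of_ne hu (Ne.symm hune)
  have key : Nr * |a| * u = |a| := by rw [mul_right_comm, hNN, one_mul]
  have e1 : k * u ≤ |a| := by
    calc k * u ≤ Nr * |a| * u := mul_le_mul_of_nonneg_right h1 hu
      _ = |a| := key
  have e2 : |a| < k * u + u := by
    calc |a| = Nr * |a| * u := key.symm
      _ < (k + 1) * u := mul_lt_mul_of_pos_right h2 hupos
      _ = k * u + u := by ring
  by_cases hc : a < 0
  · rw [hsg, if_pos hc]
    rw [abs_of_neg hc] at e1 e2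
    rw [abs_le]
    constructor <;> nlinarith
  · rw [hsg, if_neg hc]
    push_neg at hc
    rw [abs_of_nonneg hc] at e1 e2
    rw [abs_le]
    constructor <;> nlinarith

/-- **The closed convex hull of `Σ` is the unit ball.** In the binary tree space, the set
`Σ = {x ∈ B_{X_T} : x(s) ∈ {-1,0,1} for all s ∈ T}` of unit-ball elements whose coordinates
take only the values `-1, 0, 1` satisfies `closed convex hull (Σ) = B_{X_T}`. -/
theorem binary_tree_sigma_generates_ball {X : Type*} [NormedAddCommGroup X]
    [NormedSpace ℝ X] [CompleteSpace X] (e : TreeNode → X) (coord : TreeNode → X →L[ℝ] ℝ)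
    (hnorm : ∀ c : TreeNode →₀ ℝ, ‖c.sum fun t a => a • e t‖ = treeNorm c)
    (hdense : DenseRange fun c : TreeNode →₀ ℝ => c.sum fun t a => a • e t)
    (hcoord : ∀ s t, coord s (e t) = if s = t then 1 else 0) :
    closure (convexHull ℝ
        {x ∈ closedBall (0 : X) 1 |
          ∀ s : TreeNode, coord s x ∈ ({-1, 0, 1} : Set ℝ)}) =
      closedBall (0 : X) 1 := by
  set T : (TreeNode →₀ ℝ) →ₗ[ℝ] X := Finsupp.linearCombination ℝ e with hTdef
  have hTapp : ∀ c : TreeNode →₀ ℝ, T c = c.sum fun t a => a • e t := fun c =>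
    Finsupp.linearCombination_apply ℝ c
  have hTnorm : ∀ c, ‖T c‖ = treeNorm c := fun c => by rw [hTapp]; exact hnorm c
  have hTcoord : ∀ (s : TreeNode) (c : TreeNode →₀ ℝ), coord s (T c) = c s := by
    intro s c
    rw [hTapp, map_finsuppSum]
    simp only [map_smul, smul_eq_mul, hcoord, mul_ite, mul_one, mul_zero]
    rw [Finsupp.sum_ite_eq]
    by_cases h : s ∈ c.support
    · simp [h]
    · simp [h, Finsupp.notMem_support_iff.1 h]
  set Sig : Set X := {x ∈ closedBall (0 : X) 1 | ∀ s : TreeNode, coord s x ∈ ({-1, 0, 1} : Set ℝ)}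
    with hSigdef
  refine Set.Subset.antisymm ?_ ?_
  · have h1 : Sig ⊆ closedBall (0 : X) 1 := fun x hx => hx.1
    have h2 : convexHull ℝ Sig ⊆ closedBall (0 : X) 1 :=
      convexHull_min h1 (convex_closedBall _ _)
    have := closure_mono h2
    rwa [IsClosed.closure_eq Metric.isClosed_closedBall] at this
  · intro x hx
    rw [Metric.mem_closure_iff]
    intro ε hε
    have hε3 : 0 < ε / 3 := by linarith
    -- approximate x by a finitely supported element
    obtain ⟨c, hcx⟩ := hdense.exists_dist_lt x hε3
    rw [← hTapp] at hcx
    have hxnorm : ‖x‖ ≤ 1 := by simpa [dist_eq_norm] using hx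
    have hTc : ‖T c‖ ≤ 1 + ε / 3 := by
      have : ‖T c‖ ≤ ‖T c - x‖ + ‖x‖ := by
        simpa using norm_add_le (T c - x) x
      have h2 : ‖T c - x‖ < ε / 3 := by rwa [dist_comm, dist_eq_norm] at hcx
      linarith
    set m : ℝ := max 1 (treeNorm c) with hmdef
    have hm1 : 1 ≤ m := le_max_left _ _
    have hm0 : 0 < m := lt_of_lt_of_le one_pos hm1
    have hmle : m ≤ 1 + ε / 3 := by
      apply max_le (by linarith)
      rw [← hTnorm]; exact hTc
    have hcm : treeNorm c ≤ m := le_max_right _ _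
    obtain ⟨c', hc'def⟩ : ∃ c' : TreeNode →₀ ℝ, c' = m⁻¹ • c := ⟨_, rfl⟩
    have hTc' : T c' = m⁻¹ • T c := by rw [hc'def, map_smul]
    have hnc' : treeNorm c' ≤ 1 := by
      rw [← hTnorm, hTc', norm_smul, norm_inv, Real.norm_of_nonneg hm0.le, hTnorm]
      rw [inv_mul_le_iff₀ hm0, mul_one]
      exact hcm
    set S := c'.support with hSdef
    -- choose N
    set N : ℕ := max 1 ⌈3 * (S.card : ℝ) / ε⌉₊ with hNdef
    have hN1 : 1 ≤ N := le_max_left _ _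
    have hN0 : (0 : ℝ) < N := by exact_mod_cast lt_of_lt_of_le one_pos hN1
    have hNcard : (S.card : ℝ) * (N : ℝ)⁻¹ ≤ ε / 3 := by
      have hN2 : ⌈3 * (S.card : ℝ) / ε⌉₊ ≤ N := le_max_right _ _
      have h1 : 3 * (S.card : ℝ) / ε ≤ N :=
        le_trans (Nat.le_ceil _) (Nat.cast_le.2 hN2)
      rw [div_le_iff₀ hε] at h1
      rw [mul_inv_le_iff₀ hN0]
      nlinarith
    -- integer approximation
    set n : TreeNode → ℕ := fun t => ⌊(N : ℝ) * |c' t|⌋₊ with hndef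
    set sgn : TreeNode → ℝ := fun t => if c' t < 0 then -1 else 1 with hsgndef
    have hsgn_abs : ∀ t, |sgn t| = 1 := by
      intro t; simp only [hsgndef]; split <;> simp
    have hn0 : ∀ t, t ∉ S → n t = 0 := by
      intro t ht
      have : c' t = 0 := Finsupp.notMem_support_iff.1 ht
      simp [hndef, this]
    have hn_mem : ∀ t, n t ≠ 0 → t ∈ S := by
      intro t h; by_contra hm; exact h (hn0 t hm)
    have hnle : ∀ t, (n t : ℝ) ≤ (N : ℝ) * |c' t| :=
      fun t => Nat.floor_le (by positivity)
    have hnlt : ∀ t, (N : ℝ) * |c' t| < n t + 1 := fun t => Nat.lt_floor_add_one _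
    set H : TreeNode → ℕ := fun t => ∑ s ∈ S.filter (· <+: t), n s with hHdef
    have hfilter_chain : ∀ t, IsFinChain (S.filter (· <+: t)) := by
      intro t s hs u hu
      simp only [Finset.mem_filter] at hs hu
      exact List.prefix_or_prefix_of_prefix hs.2 hu.2
    have hHle : ∀ t, (H t : ℝ) ≤ N := by
      intro t
      rw [hHdef]
      push_cast
      calc ∑ s ∈ S.filter (· <+: t), (n s : ℝ)
          ≤ ∑ s ∈ S.filter (· <+: t), (N : ℝ) * |c' s| :=
            Finset.sum_le_sum fun s _ => hnle s
        _ = (N : ℝ) * ∑ s ∈ S.filter (· <+: t), |c' s| := by rw [Finset.mul_sum]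
        _ ≤ (N : ℝ) * 1 := by
            apply mul_le_mul_of_nonneg_left _ hN0.le
            exact le_trans (le_treeNorm (hfilter_chain t)) hnc'
        _ = N := mul_one _
    have hHleN : ∀ t, H t ≤ N := fun t => by exact_mod_cast hHle t
    have hnH : ∀ t, n t ≤ H t := by
      intro t
      by_cases ht : t ∈ S
      · exact Finset.single_le_sum (f := fun s => n s) (fun s _ => Nat.zero_le _)
          (Finset.mem_filter.2 ⟨ht, List.prefix_refl t⟩)
      · rw [hn0 t ht]; exact Nat.zero_le _
    have hmono : ∀ s t, s ∈ S → t ∈ S → s <+: t → s ≠ t → H s + n t ≤ H t := by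
      intro s t hs ht hst hne
      have htnot : t ∉ S.filter (· <+: s) := by
        simp only [Finset.mem_filter]
        rintro ⟨-, hts⟩
        exact hne (hst.eq_of_length_le hts.length_le)
      have hsub : insert t (S.filter (· <+: s)) ⊆ S.filter (· <+: t) := by
        intro u hu
        rcases Finset.mem_insert.1 hu with rfl | hu
        · exact Finset.mem_filter.2 ⟨ht, List.prefix_refl u⟩
        · simp only [Finset.mem_filter] at hu ⊢
          exact ⟨hu.1, hu.2.trans hst⟩
      calc H s + n t = ∑ u ∈ insert t (S.filter (· <+: s)), n u := by
            rw [Finset.sum_insert htnot]; ring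
        _ ≤ H t := Finset.sum_le_sum_of_subset hsub
    -- the sigma functions
    set σ : ℕ → (TreeNode →₀ ℝ) := fun i =>
      Finsupp.onFinset S (fun t => if H t - n t ≤ i ∧ i < H t then sgn t else 0)
        (by
          intro t h
          by_contra hts
          apply h
          show (if H t - n t ≤ i ∧ i < H t then sgn t else 0) = 0
          have h0 := hn0 t hts
          rw [if_neg (by omega)]) with hσdef
    have hσapp : ∀ i t, σ i t = if H t - n t ≤ i ∧ i < H t then sgn t else 0 := fun i t => rfl
    have hσsupp : ∀ i, (σ i).support ⊆ S := fun i => Finsupp.support_onFinset_subset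
    have hσ_ne : ∀ i t, σ i t ≠ 0 → (t ∈ S ∧ H t - n t ≤ i ∧ i < H t ∧ 1 ≤ n t) := by
      intro i t h
      rw [hσapp] at h
      split at h
      case isFalse => exact absurd rfl h
      case isTrue hcond =>
        have hnt : 1 ≤ n t := by
          by_contra hn
          have : n t = 0 := by omega
          rw [this] at hcond; omega
        exact ⟨hn_mem t (by omega), hcond.1, hcond.2, hnt⟩
    -- chain bound for σ i
    have hσnorm : ∀ i, treeNorm (σ i) ≤ 1 := by
      intro i
      apply treeNorm_le
      intro A hA
      rw [← Finset.sum_filter_of_ne (p := fun t => σ i t ≠ 0)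
        (fun x _ h => fun h0 => h (by simp [h0]))]
      have hcard : (A.filter (fun t => σ i t ≠ 0)).card ≤ 1 := by
        rw [Finset.card_le_one]
        intro a ha b hb
        simp only [Finset.mem_filter] at ha hb
        obtain ⟨haS, ha1, ha2, ha3⟩ := hσ_ne i a ha.2
        obtain ⟨hbS, hb1, hb2, hb3⟩ := hσ_ne i b hb.2
        by_contra hne
        rcases hA a ha.1 b hb.1 with hab | hba
        · have := hmono a b haS hbS hab hne
          have := hnH b
          omega
        · have := hmono b a hbS haS hba (Ne.symm hne)
          have := hnH a
          omega
      calc ∑ t ∈ A.filter (fun t => σ i t ≠ 0), |σ i t|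
          ≤ (A.filter (fun t => σ i t ≠ 0)).card • (1 : ℝ) := by
            apply Finset.sum_le_card_nsmul
            intro t ht
            rw [hσapp]
            split
            · exact le_of_eq (hsgn_abs t)
            · simp
        _ ≤ 1 := by
            rw [nsmul_eq_mul, mul_one]
            exact_mod_cast hcard
    have hσmem : ∀ i, T (σ i) ∈ Sig := by
      intro i
      constructor
      · rw [mem_closedBall, dist_zero_right, hTnorm]
        exact hσnorm i
      · intro s
        rw [hTcoord, hσapp]
        split
        · simp only [hsgndef]
          split
          · left; rfl
          · right; right; rfl
        · right; left; rfl
    -- sum of the sigmas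
    have hσsum : ∀ t, (∑ i ∈ Finset.range N, σ i) t = (n t : ℝ) * sgn t := by
      intro t
      rw [Finsupp.finset_sum_apply]
      simp only [hσapp]
      rw [Finset.sum_ite, Finset.sum_const, Finset.sum_const_zero, add_zero]
      by_cases hnt : n t = 0
      · have : Finset.filter (fun i => H t - n t ≤ i ∧ i < H t) (Finset.range N) = ∅ := by
          apply Finset.filter_false_of_mem
          intro i _
          rw [hnt]
          omega
        rw [this, hnt]
        simp
      · have hHN : H t ≤ N := hHleN t
        have hnHt : n t ≤ H t := hnH t
        have : Finset.filter (fun i => H t - n t ≤ i ∧ i < H t) (Finset.range N)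
            = Finset.Ico (H t - n t) (H t) := by
          ext i
          simp only [Finset.mem_filter, Finset.mem_range, Finset.mem_Ico]
          omega
        rw [this, Nat.card_Ico]
        have : H t - (H t - n t) = n t := by omega
        rw [this, nsmul_eq_mul]
    -- the candidate point
    set y : X := (N : ℝ)⁻¹ • ∑ i ∈ Finset.range N, T (σ i) with hydef
    have hymem : y ∈ convexHull ℝ Sig := by
      have := Finset.centerMass_mem_convexHull (Finset.range N)
        (w := fun _ => (1 : ℝ)) (z := fun i => T (σ i))
        (fun i _ => zero_le_one)
        (by simp only [Finset.sum_const, Finset.card_range, nsmul_eq_mul, mul_one]; exact hN0)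
        (fun i _ => hσmem i)
      simp only [Finset.centerMass, Finset.sum_const, Finset.card_range, nsmul_eq_mul,
        mul_one, one_smul] at this
      rwa [hydef]
    have hyT : y = T ((N : ℝ)⁻¹ • ∑ i ∈ Finset.range N, σ i) := by
      rw [map_smul, map_sum]
    -- distance bound
    set g : TreeNode →₀ ℝ := c' - (N : ℝ)⁻¹ • ∑ i ∈ Finset.range N, σ i with hgdef
    have hgsupp : g.support ⊆ S := by
      refine subset_trans Finsupp.support_sub ?_
      apply Finset.union_subset subset_rfl
      refine subset_trans Finsupp.support_smul ?_
      refine subset_trans Finsupp.support_finset_sum ?_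
      intro t ht
      rw [Finset.mem_biUnion] at ht
      obtain ⟨i, -, hi⟩ := ht
      exact hσsupp i hi
    have hgbound : ∀ t, t ∈ S → |g t| ≤ (N : ℝ)⁻¹ := by
      intro t _
      have hgt : g t = c' t - (n t : ℝ) * sgn t * (N : ℝ)⁻¹ := by
        rw [hgdef, Finsupp.sub_apply]
        congr 1
        rw [Finsupp.smul_apply, hσsum t, smul_eq_mul]
        ring
      rw [hgt]
      exact round_bound (by positivity) (mul_inv_cancel₀ hN0.ne') (hnle t) (hnlt t)
        (by simp only [hsgndef])
    have hgnorm : ‖T g‖ ≤ ε / 3 := by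
      rw [hTnorm]
      calc treeNorm g ≤ ∑ t ∈ g.support, |g t| := treeNorm_le_sum g
        _ ≤ ∑ t ∈ S, |g t| :=
            Finset.sum_le_sum_of_subset_of_nonneg hgsupp (fun _ _ _ => abs_nonneg _)
        _ ≤ ∑ _t ∈ S, (N : ℝ)⁻¹ := Finset.sum_le_sum fun t ht => hgbound t ht
        _ = (S.card : ℝ) * (N : ℝ)⁻¹ := by rw [Finset.sum_const, nsmul_eq_mul]
        _ ≤ ε / 3 := hNcard
    refine ⟨y, hymem, ?_⟩
    have d1 : dist x (T c) < ε / 3 := hcx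
    have d2 : dist (T c) (T c') ≤ ε / 3 := by
      rw [dist_eq_norm, hTc']
      have : T c - m⁻¹ • T c = (1 - m⁻¹) • T c := by
        rw [sub_smul, one_smul]
      rw [this, norm_smul, Real.norm_of_nonneg (by
        rw [sub_nonneg]
        exact inv_le_one_of_one_le₀ hm1)]
      have hTcm : ‖T c‖ ≤ m := by rw [hTnorm]; exact hcm
      have h1m : 0 ≤ 1 - m⁻¹ := by rw [sub_nonneg]; exact inv_le_one_of_one_le₀ hm1
      calc (1 - m⁻¹) * ‖T c‖ ≤ (1 - m⁻¹) * m := by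
            apply mul_le_mul_of_nonneg_left hTcm h1m
        _ = m - 1 := by field_simp
        _ ≤ ε / 3 := by linarith
    have d3 : dist (T c') y ≤ ε / 3 := by
      rw [hyT, dist_eq_norm, ← map_sub]
      exact hgnorm
    calc dist x y ≤ dist x (T c) + dist (T c) (T c') + dist (T c') y := dist_triangle4 _ _ _ _
      _ < ε / 3 + ε / 3 + ε / 3 := by linarith
      _ = ε := by ring
end

section
/- Let X_T be the binary tree space and Σ = {x ∈ B_{X_T} : x(s) ∈ {-1,0,1} for all s}. For every sequence (V_n) of nonempty relatively weakly open subsets of Σ, there exist x_n ∈ V_n and signs θ_n ∈ {-1,1} such that ‖θ_1 x_1 + ⋯ + θ_n x_n‖ = n for all n. Consequently, (Σ, weak topology) has no countable π-base. -/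
open Metric Filter Topology

/-- `V` is a relatively weakly open subset of `A`. -/
def RelWeakOpen {X : Type*} [NormedAddCommGroup X] [NormedSpace ℝ X]
    (A V : Set X) : Prop :=
  ∃ U : Set (WeakSpace ℝ X), IsOpen U ∧ V = A ∩ U

namespace BTAux

/-- the branching antichain above a node `m` -/
def br (m : TreeNode) (k : ℕ) : TreeNode := m ++ (List.replicate k true ++ [false])

section X
variable {X : Type*} [NormedAddCommGroup X] [NormedSpace ℝ X]

/-- the natural embedding of finitely supported functions, as a linear map -/
noncomputable def JL (e : TreeNode → X) : (TreeNode →₀ ℝ) →ₗ[ℝ] X :=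
  Finsupp.lsum ℝ fun t => LinearMap.toSpanSingleton ℝ X (e t)

end X


lemma finchain_empty : IsFinChain ∅ := by intro s hs; simp at hs

lemma finchain_singleton (t : TreeNode) : IsFinChain {t} := by
  intro s hs u hu
  simp only [Finset.mem_singleton] at hs hu
  subst hs; subst hu; left; exact List.prefix_refl _

lemma treeNorm_set_nonempty (c : TreeNode →₀ ℝ) :
    {r | ∃ A : Finset TreeNode, IsFinChain A ∧ r = ∑ t ∈ A, |c t|}.Nonempty :=
  ⟨0, ∅, finchain_empty, by simp⟩

lemma treeNorm_set_bdd (c : TreeNode →₀ ℝ) :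
    BddAbove {r | ∃ A : Finset TreeNode, IsFinChain A ∧ r = ∑ t ∈ A, |c t|} := by
  refine ⟨∑ t ∈ c.support, |c t|, ?_⟩
  rintro r ⟨A, -, rfl⟩
  have h1 : ∑ t ∈ A, |c t| = ∑ t ∈ A ∩ c.support, |c t| := by
    refine (Finset.sum_subset Finset.inter_subset_left ?_).symm
    intro t htA ht
    simp only [Finset.mem_inter, htA, true_and, Finsupp.mem_support_iff, not_not] at ht
    simp [ht]
  rw [h1]
  exact Finset.sum_le_sum_of_subset_of_nonneg Finset.inter_subset_right
    (fun _ _ _ => abs_nonneg _)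

lemma chain_sum_le_treeNorm {c : TreeNode →₀ ℝ} {A : Finset TreeNode} (hA : IsFinChain A) :
    ∑ t ∈ A, |c t| ≤ treeNorm c :=
  le_csSup (treeNorm_set_bdd c) ⟨A, hA, rfl⟩

lemma treeNorm_le {c : TreeNode →₀ ℝ} {r : ℝ}
    (h : ∀ A : Finset TreeNode, IsFinChain A → ∑ t ∈ A, |c t| ≤ r) : treeNorm c ≤ r := by
  refine csSup_le (treeNorm_set_nonempty c) ?_
  rintro x ⟨A, hA, rfl⟩
  exact h A hA

lemma abs_apply_le_treeNorm (c : TreeNode →₀ ℝ) (t : TreeNode) : |c t| ≤ treeNorm c := by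
  have := chain_sum_le_treeNorm (c := c) (finchain_singleton t)
  simpa using this

lemma treeNorm_le_one {c : TreeNode →₀ ℝ} (h1 : ∀ t, |c t| ≤ 1)
    (h2 : ∀ s t : TreeNode, c s ≠ 0 → c t ≠ 0 → s <+: t → s = t) : treeNorm c ≤ 1 := by
  refine treeNorm_le fun A hA => ?_
  rw [← Finset.sum_filter_of_ne (p := fun t => c t ≠ 0)
    (fun t _ h => by simpa using fun h0 => h (by simp [h0]))]
  set B := A.filter (fun t => c t ≠ 0) with hB
  have hcard : B.card ≤ 1 := by
    refine Finset.card_le_one.2 ?_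
    intro a ha b hb
    simp only [hB, Finset.mem_filter] at ha hb
    rcases hA a ha.1 b hb.1 with h | h
    · exact h2 a b ha.2 hb.2 h
    · exact (h2 b a hb.2 ha.2 h).symm
  calc ∑ t ∈ B, |c t| ≤ B.card • (1:ℝ) := Finset.sum_le_card_nsmul _ _ _ (fun t _ => h1 t)
    _ = (B.card : ℝ) := by simp
    _ ≤ 1 := by exact_mod_cast hcard




/-- the branching antichain above a node `m` -/
lemma br_prefix (m : TreeNode) (k : ℕ) : m <+: br m k := ⟨_, rfl⟩

lemma br_length (m : TreeNode) (k : ℕ) : (br m k).length = m.length + k + 1 := by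
  simp [br]; omega

lemma br_antichain (m : TreeNode) {k l : ℕ} (h : k ≠ l) : ¬ br m k <+: br m l := by
  intro hpre
  rw [br, br, List.prefix_append_right_inj] at hpre
  have hlen := hpre.length_le
  simp only [List.length_append, List.length_replicate, List.length_singleton] at hlen
  have hkl : k < l := by omega
  have hget := hpre.getElem (i := k) (by simp)
  have hL : (List.replicate k true ++ [false])[k]'(by simp) = false := by
    rw [List.getElem_append_right (by simp)]
    simp
  have hR : (List.replicate l true ++ [false])[k]'(by simp; omega) = true := by
    rw [List.getElem_append_left (by simpa using hkl)]
    simp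
  rw [hL, hR] at hget
  exact Bool.false_ne_true hget

lemma chain_has_top {A : Finset TreeNode} (hA : IsFinChain A) :
    ∃ m : TreeNode, ∀ a ∈ A, a <+: m := by
  rcases A.eq_empty_or_nonempty with rfl | hne
  · exact ⟨[], by simp⟩
  obtain ⟨m, hmA, hmax⟩ := A.exists_max_image List.length hne
  refine ⟨m, fun a ha => ?_⟩
  rcases hA a ha m hmA with h | h
  · exact h
  · rw [h.eq_of_length_le (hmax a ha)]


section Xsec
variable {X : Type*} [NormedAddCommGroup X] [NormedSpace ℝ X]


lemma JL_apply (e : TreeNode → X) (c : TreeNode →₀ ℝ) :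
    JL e c = c.sum fun t a => a • e t := rfl

lemma JL_single (e : TreeNode → X) (t : TreeNode) (a : ℝ) :
    JL e (Finsupp.single t a) = a • e t := by
  rw [JL_apply]
  exact Finsupp.sum_single_index (by simp)

lemma coord_JL (e : TreeNode → X) (coord : TreeNode → X →L[ℝ] ℝ)
    (hcoord : ∀ s t, coord s (e t) = if s = t then 1 else 0)
    (s : TreeNode) (c : TreeNode →₀ ℝ) : coord s (JL e c) = c s := by
  rw [JL_apply]
  rw [map_finsuppSum]
  have : ∀ t a, coord s (a • e t) = if s = t then a else 0 := by
    intro t a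
    rw [map_smul, hcoord]
    simp [mul_ite]
  simp only [this]
  classical
  rw [Finsupp.sum_ite_eq]
  simp only [Finsupp.mem_support_iff, ne_eq, ite_not]
  split
  · exact (by simp_all : c s = 0).symm
  · rfl


lemma norm_JL (e : TreeNode → X)
    (hnorm : ∀ c : TreeNode →₀ ℝ, ‖c.sum fun t a => a • e t‖ = treeNorm c)
    (c : TreeNode →₀ ℝ) : ‖JL e c‖ = treeNorm c := hnorm c

lemma chain_functional_bound (e : TreeNode → X) (coord : TreeNode → X →L[ℝ] ℝ)
    (hnorm : ∀ c : TreeNode →₀ ℝ, ‖c.sum fun t a => a • e t‖ = treeNorm c)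
    (hdense : DenseRange fun c : TreeNode →₀ ℝ => c.sum fun t a => a • e t)
    (hcoord : ∀ s t, coord s (e t) = if s = t then 1 else 0)
    (ε : TreeNode → ℝ) (hε : ∀ t, |ε t| ≤ 1)
    {A : Finset TreeNode} (hA : IsFinChain A) (y : X) :
    |∑ t ∈ A, ε t * coord t y| ≤ ‖y‖ := by
  refine DenseRange.induction_on hdense
    (p := fun b => |∑ t ∈ A, ε t * coord t b| ≤ ‖b‖) y ?_ ?_
  · have hcont : Continuous fun y : X => ‖y‖ - |∑ t ∈ A, ε t * coord t y| := by
      refine (continuous_norm).sub ?_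
      exact (continuous_finset_sum A fun t _ =>
        (continuous_const.mul (coord t).continuous)).abs
    have hset : {b : X | |∑ t ∈ A, ε t * coord t b| ≤ ‖b‖}
        = (fun y : X => ‖y‖ - |∑ t ∈ A, ε t * coord t y|) ⁻¹' (Set.Ici 0) := by
      ext b; simp [sub_nonneg]
    rw [hset]
    exact IsClosed.preimage hcont isClosed_Ici
  · intro c
    have h1 : ∀ t, coord t ((fun c : TreeNode →₀ ℝ => c.sum fun t a => a • e t) c) = c t :=
      fun t => coord_JL e coord hcoord t c
    simp only [h1]
    calc |∑ t ∈ A, ε t * c t| ≤ ∑ t ∈ A, |ε t * c t| := Finset.abs_sum_le_sum_abs _ _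
      _ ≤ ∑ t ∈ A, |c t| := by
          refine Finset.sum_le_sum fun t _ => ?_
          rw [abs_mul]
          calc |ε t| * |c t| ≤ 1 * |c t| :=
            mul_le_mul_of_nonneg_right (hε t) (abs_nonneg _)
            _ = |c t| := one_mul _
      _ ≤ treeNorm c := chain_sum_le_treeNorm hA
      _ = ‖_‖ := (hnorm c).symm

lemma coord_bound (e : TreeNode → X) (coord : TreeNode → X →L[ℝ] ℝ)
    (hnorm : ∀ c : TreeNode →₀ ℝ, ‖c.sum fun t a => a • e t‖ = treeNorm c)
    (hdense : DenseRange fun c : TreeNode →₀ ℝ => c.sum fun t a => a • e t)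
    (hcoord : ∀ s t, coord s (e t) = if s = t then 1 else 0)
    (t : TreeNode) (y : X) : |coord t y| ≤ ‖y‖ := by
  have := chain_functional_bound e coord hnorm hdense hcoord (fun _ => 1) (by simp)
    (finchain_singleton t) y
  simpa using this

lemma proj_bound (e : TreeNode → X) (coord : TreeNode → X →L[ℝ] ℝ)
    (hnorm : ∀ c : TreeNode →₀ ℝ, ‖c.sum fun t a => a • e t‖ = treeNorm c)
    (hdense : DenseRange fun c : TreeNode →₀ ℝ => c.sum fun t a => a • e t)
    (hcoord : ∀ s t, coord s (e t) = if s = t then 1 else 0)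
    (F : Finset TreeNode) (y : X) :
    ‖∑ t ∈ F, coord t y • e t‖ ≤ ‖y‖ := by
  classical
  refine DenseRange.induction_on hdense
    (p := fun b => ‖∑ t ∈ F, coord t b • e t‖ ≤ ‖b‖) y ?_ ?_
  · have hcont : Continuous fun y : X => ‖y‖ - ‖∑ t ∈ F, coord t y • e t‖ := by
      refine (continuous_norm).sub ?_
      exact (continuous_finset_sum F fun t _ => ((coord t).continuous.smul continuous_const)).norm
    have hset : {b : X | ‖∑ t ∈ F, coord t b • e t‖ ≤ ‖b‖}
        = (fun y : X => ‖y‖ - ‖∑ t ∈ F, coord t y • e t‖) ⁻¹' (Set.Ici 0) := by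
      ext b; simp [sub_nonneg]
    rw [hset]
    exact IsClosed.preimage hcont isClosed_Ici
  · intro c
    have h1 : ∀ t, coord t ((fun c : TreeNode →₀ ℝ => c.sum fun t a => a • e t) c) = c t :=
      fun t => coord_JL e coord hcoord t c
    simp only [h1]
    have h2 : ∑ t ∈ F, c t • e t = JL e (c.filter (· ∈ F)) := by
      rw [show (JL e (c.filter (· ∈ F)) : X) = (c.filter (· ∈ F)).sum fun t a => a • e t from rfl]
      rw [Finsupp.sum_of_support_subset _ ?_ _ (by intros; simp)]
      · refine (Finset.sum_congr rfl fun t ht => ?_)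
        rw [Finsupp.filter_apply_pos _ _ ht]
      · intro t ht
        rw [Finsupp.support_filter, Finset.mem_filter] at ht
        exact ht.2
    rw [h2, norm_JL e hnorm, hnorm]
    refine treeNorm_le fun A hA => le_trans ?_ (chain_sum_le_treeNorm hA)
    refine Finset.sum_le_sum fun t _ => ?_
    rw [Finsupp.filter_apply]
    split <;> simp [abs_nonneg]


/-- every element with coordinates in {-1,0,1} is a finite ±1 combination of basis vectors -/
lemma rep (e : TreeNode → X) (coord : TreeNode → X →L[ℝ] ℝ)
    (hnorm : ∀ c : TreeNode →₀ ℝ, ‖c.sum fun t a => a • e t‖ = treeNorm c)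
    (hdense : DenseRange fun c : TreeNode →₀ ℝ => c.sum fun t a => a • e t)
    (hcoord : ∀ s t, coord s (e t) = if s = t then 1 else 0)
    (x : X) (hx : ∀ s : TreeNode, coord s x ∈ ({-1, 0, 1} : Set ℝ)) :
    ∃ c : TreeNode →₀ ℝ, JL e c = x ∧ ∀ t, c t = coord t x := by
  classical
  -- finite coordinate support
  obtain ⟨c₀, hc₀⟩ : ∃ c₀ : TreeNode →₀ ℝ, ‖x - JL e c₀‖ < 1/2 := by
    obtain ⟨c₀, hc₀⟩ := Metric.denseRange_iff.1 hdense x (1/2) (by norm_num)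
    exact ⟨c₀, by rwa [dist_eq_norm] at hc₀⟩
  have hsupp : ∀ t : TreeNode, t ∉ c₀.support → coord t x = 0 := by
    intro t ht
    have h1 : coord t (x - JL e c₀) = coord t x := by
      rw [map_sub, coord_JL e coord hcoord]
      simp [Finsupp.notMem_support_iff.1 ht]
    have h2 : |coord t x| < 1/2 := by
      rw [← h1]
      exact lt_of_le_of_lt (coord_bound e coord hnorm hdense hcoord t _) hc₀
    rcases hx t with h | h | h
    · rw [h] at h2; norm_num at h2
    · exact h
    · rw [h] at h2; norm_num at h2
  set S := c₀.support with hS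
  have hsp : ∀ a : TreeNode, (fun t => coord t x) a ≠ 0 → a ∈ S := by
    intro a h; by_contra ht; exact h (hsupp a ht)
  set cX := Finsupp.onFinset S (fun t => coord t x) hsp with hcX
  refine ⟨cX, ?_, fun t => rfl⟩
  -- show JL e c = x
  have hval : (JL e cX : X) = ∑ t ∈ S, coord t x • e t := by
    rw [show (JL e cX : X) = cX.sum fun t a => a • e t from rfl]
    rw [Finsupp.sum_of_support_subset _ (Finsupp.support_onFinset_subset) _ (by intros; simp)]
    exact Finset.sum_congr rfl fun t _ => by rw [Finsupp.onFinset_apply]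
  rw [hval]
  -- x = P_S x
  have key : ∀ δ : ℝ, 0 < δ → ‖x - ∑ t ∈ S, coord t x • e t‖ ≤ 2 * δ := by
    intro δ hδ
    obtain ⟨c₁, hc₁⟩ : ∃ c₁ : TreeNode →₀ ℝ, ‖x - JL e c₁‖ < δ := by
      obtain ⟨c₁, hc₁⟩ := Metric.denseRange_iff.1 hdense x δ hδ
      exact ⟨c₁, by rwa [dist_eq_norm] at hc₁⟩
    set F := S ∪ c₁.support with hF
    have hPF : ∑ t ∈ F, coord t x • e t = ∑ t ∈ S, coord t x • e t := by
      refine (Finset.sum_subset Finset.subset_union_left ?_).symm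
      intro t htF htS
      rw [hsupp t htS]
      simp
    have hJc₁ : ∑ t ∈ F, coord t (JL e c₁) • e t = JL e c₁ := by
      have : ∀ t, coord t (JL e c₁) = c₁ t := fun t => coord_JL e coord hcoord t c₁
      simp only [this]
      rw [show (JL e c₁ : X) = c₁.sum fun t a => a • e t from rfl]
      rw [Finsupp.sum_of_support_subset _ Finset.subset_union_right _ (by intros; simp)]
    have hsub : ∑ t ∈ F, coord t (JL e c₁) • e t - ∑ t ∈ F, coord t x • e t
        = ∑ t ∈ F, coord t (JL e c₁ - x) • e t := by
      rw [← Finset.sum_sub_distrib]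
      refine Finset.sum_congr rfl fun t _ => ?_
      rw [map_sub, sub_smul]
    calc ‖x - ∑ t ∈ S, coord t x • e t‖ = ‖x - ∑ t ∈ F, coord t x • e t‖ := by rw [hPF]
      _ = ‖(x - JL e c₁) + (JL e c₁ - ∑ t ∈ F, coord t x • e t)‖ := by abel_nf
      _ ≤ ‖x - JL e c₁‖ + ‖JL e c₁ - ∑ t ∈ F, coord t x • e t‖ := norm_add_le _ _
      _ = ‖x - JL e c₁‖ + ‖∑ t ∈ F, coord t (JL e c₁ - x) • e t‖ := by rw [← hsub, hJc₁]
      _ ≤ ‖x - JL e c₁‖ + ‖JL e c₁ - x‖ :=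
          add_le_add le_rfl (proj_bound e coord hnorm hdense hcoord F _)
      _ = ‖x - JL e c₁‖ + ‖x - JL e c₁‖ := by rw [norm_sub_rev]
      _ ≤ 2 * δ := by linarith
  have : ‖x - ∑ t ∈ S, coord t x • e t‖ ≤ 0 := by
    by_contra h
    push_neg at h
    have := key (‖x - ∑ t ∈ S, coord t x • e t‖ / 4) (by linarith)
    linarith
  have := le_antisymm this (norm_nonneg _)
  rw [norm_eq_zero, sub_eq_zero] at this
  exact this.symm


lemma sign_mul_abs (x : ℝ) : (if x < 0 then (-1:ℝ) else 1) * x = |x| := by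
  rcases lt_or_ge x 0 with h | h
  · rw [if_pos h, abs_of_neg h]; ring
  · rw [if_neg (not_lt.2 h), abs_of_nonneg h]; ring

/-- basis vectors along an antichain are weakly null -/
lemma antichain_weakly_null (e : TreeNode → X)
    (hnorm : ∀ c : TreeNode →₀ ℝ, ‖c.sum fun t a => a • e t‖ = treeNorm c)
    (s : ℕ → TreeNode) (hanti : ∀ k l, k ≠ l → ¬ s k <+: s l)
    (f : X →L[ℝ] ℝ) : Tendsto (fun k => f (e (s k))) atTop (𝓝 0) := by
  classical
  have hinj : ∀ k l, s k = s l → k = l := by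
    intro k l h
    by_contra hkl
    exact hanti k l hkl (h ▸ List.prefix_refl _)
  have hbound : ∀ u : Finset ℕ, ∑ k ∈ u, |f (e (s k))| ≤ ‖f‖ := by
    intro u
    rcases u.eq_empty_or_nonempty with rfl | hu
    · simp [norm_nonneg]
    set σ : ℕ → ℝ := fun k => if f (e (s k)) < 0 then -1 else 1 with hσ
    set c : TreeNode →₀ ℝ := ∑ k ∈ u, Finsupp.single (s k) (σ k) with hc
    have hcval : ∀ k ∈ u, c (s k) = σ k := by
      intro k hk
      rw [hc, Finsupp.finset_sum_apply]
      rw [Finset.sum_eq_single k]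
      · simp
      · intro l hl hlk
        exact Finsupp.single_eq_of_ne' (fun h => hlk (hinj l k h))
      · intro h; exact absurd hk h
    have hczero : ∀ t, (∀ k ∈ u, t ≠ s k) → c t = 0 := by
      intro t ht
      rw [hc, Finsupp.finset_sum_apply]
      refine Finset.sum_eq_zero fun k hk => Finsupp.single_eq_of_ne' (fun h => ht k hk h.symm)
    have habs : ∀ t, |c t| ≤ 1 := by
      intro t
      by_cases h : ∀ k ∈ u, t ≠ s k
      · rw [hczero t h]; norm_num
      · push_neg at h
        obtain ⟨k, hk, rfl⟩ := h
        rw [hcval k hk]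
        rcases lt_or_ge (f (e (s k))) 0 with h | h
        · simp [hσ, h]
        · simp [hσ, not_lt.2 h]
    have hJ : JL e c = ∑ k ∈ u, σ k • e (s k) := by
      rw [hc, map_sum]
      exact Finset.sum_congr rfl fun k _ => JL_single e _ _
    have hnormc : ‖JL e c‖ ≤ 1 := by
      rw [norm_JL e hnorm]
      refine treeNorm_le_one habs ?_
      intro t t' h1 h2 hpre
      have ht : ∃ k ∈ u, t = s k := by
        by_contra h; push_neg at h
        exact h1 (hczero t fun k hk => h k hk)
      have ht' : ∃ k ∈ u, t' = s k := by
        by_contra h; push_neg at h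
        exact h2 (hczero t' fun k hk => h k hk)
      obtain ⟨k, -, rfl⟩ := ht
      obtain ⟨l, -, rfl⟩ := ht'
      by_cases hkl : k = l
      · subst hkl; rfl
      · exact absurd hpre (hanti k l hkl)
    have heq : ∑ k ∈ u, |f (e (s k))| = f (JL e c) := by
      rw [hJ, map_sum]
      exact (Finset.sum_congr rfl fun k _ => by rw [map_smul, smul_eq_mul, hσ, sign_mul_abs]).symm
    rw [heq]
    calc f (JL e c) ≤ |f (JL e c)| := le_abs_self _
      _ ≤ ‖f‖ * ‖JL e c‖ := f.le_opNorm _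
      _ ≤ ‖f‖ * 1 := mul_le_mul_of_nonneg_left hnormc (norm_nonneg f)
      _ = ‖f‖ := mul_one _
  have hsum : Summable fun k => |f (e (s k))| :=
    summable_of_sum_le (fun k => abs_nonneg _) hbound
  have := (hsum.of_abs).tendsto_atTop_zero
  exact this

/-- convergence against all functionals implies weak convergence -/
lemma weak_tendsto (y : ℕ → X) (x : X)
    (h : ∀ f : X →L[ℝ] ℝ, Tendsto (fun k => f (y k)) atTop (𝓝 (f x))) :
    Tendsto (fun k => toWeakSpaceCLM ℝ X (y k)) atTop (𝓝 (toWeakSpaceCLM ℝ X x)) := by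
  have hinj : Function.Injective ((topDualPairing ℝ X).flip) := by
    intro a b hab
    by_contra hne
    obtain ⟨f, hf⟩ := exists_dual_vector ℝ (a - b) (norm_ne_zero_iff.2 (sub_ne_zero.2 hne))
    have h1 : (topDualPairing ℝ X).flip a f = (topDualPairing ℝ X).flip b f := by rw [hab]
    simp only [LinearMap.flip_apply, topDualPairing_apply] at h1
    have h2 : f (a - b) = 0 := by rw [map_sub, h1, sub_self]
    rw [hf.2] at h2
    exact (sub_ne_zero.2 hne) (by exact_mod_cast norm_eq_zero.1 (by exact_mod_cast h2))
    
  refine (WeakBilin.tendsto_iff_forall_eval_tendsto (B := (topDualPairing ℝ X).flip)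
    (f := fun k => toWeakSpaceCLM ℝ X (y k)) (x := toWeakSpaceCLM ℝ X x) hinj).2 ?_
  intro g
  exact h g

/-- partial sums of absolute coordinates along a chain are bounded by the norm -/
lemma chain_coord_partial_bound (e : TreeNode → X) (coord : TreeNode → X →L[ℝ] ℝ)
    (hnorm : ∀ c : TreeNode →₀ ℝ, ‖c.sum fun t a => a • e t‖ = treeNorm c)
    (hdense : DenseRange fun c : TreeNode →₀ ℝ => c.sum fun t a => a • e t)
    (hcoord : ∀ s t, coord s (e t) = if s = t then 1 else 0)
    (β : Set TreeNode) (hβ : IsSetChain β) (y : X) (u : Finset β) :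
    ∑ s ∈ u, |coord (s : TreeNode) y| ≤ ‖y‖ := by
  classical
  set A : Finset TreeNode := u.image (fun s : ↥β => s.1) with hA
  have hchain : IsFinChain A := by
    intro a ha b hb
    simp only [hA, Finset.mem_image] at ha hb
    obtain ⟨⟨a', ha'⟩, -, rfl⟩ := ha
    obtain ⟨⟨b', hb'⟩, -, rfl⟩ := hb
    exact hβ a' ha' b' hb'
  have h1 : ∑ s ∈ u, |coord (s : TreeNode) y| = ∑ t ∈ A, |coord t y| := by
    rw [hA]
    exact (Finset.sum_image (f := fun t => |coord t y|) (s := u) (g := fun s : ↥β => s.1)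
      (fun a _ b _ h => Subtype.coe_injective h)).symm
  rw [h1]
  have h2 : ∑ t ∈ A, |coord t y|
      = ∑ t ∈ A, (fun t => if coord t y < 0 then (-1:ℝ) else 1) t * coord t y :=
    (Finset.sum_congr rfl fun t _ => sign_mul_abs _).symm
  rw [h2]
  calc _ ≤ |∑ t ∈ A, (fun t => if coord t y < 0 then (-1:ℝ) else 1) t * coord t y| :=
        le_abs_self _
    _ ≤ ‖y‖ := chain_functional_bound e coord hnorm hdense hcoord _
        (fun t => by
          show |if coord t y < 0 then (-1:ℝ) else 1| ≤ 1
          rcases lt_or_ge (coord t y) 0 with h | h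
          · simp [h]
          · simp [not_lt.2 h]) hchain y

lemma chain_coord_summable (e : TreeNode → X) (coord : TreeNode → X →L[ℝ] ℝ)
    (hnorm : ∀ c : TreeNode →₀ ℝ, ‖c.sum fun t a => a • e t‖ = treeNorm c)
    (hdense : DenseRange fun c : TreeNode →₀ ℝ => c.sum fun t a => a • e t)
    (hcoord : ∀ s t, coord s (e t) = if s = t then 1 else 0)
    (β : Set TreeNode) (hβ : IsSetChain β) (y : X) :
    Summable (fun s : β => |coord (s : TreeNode) y|) :=
  summable_of_sum_le (fun s => abs_nonneg _)
    (chain_coord_partial_bound e coord hnorm hdense hcoord β hβ y)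

/-- the branch functional as a linear map -/
noncomputable def branchLin (coord : TreeNode → X →L[ℝ] ℝ) (β : Set TreeNode)
    (hsum : ∀ y : X, Summable fun s : β => |coord (s : TreeNode) y|) : X →ₗ[ℝ] ℝ where
  toFun := fun y => ∑' (s : β), coord (s : TreeNode) y
  map_add' := by
    intro a b
    simp only [map_add]
    exact Summable.tsum_add (hsum a).of_abs (hsum b).of_abs
  map_smul' := by
    intro r a
    simp only [map_smul, smul_eq_mul, RingHom.id_apply]
    exact tsum_mul_left

lemma branch_abs_tsum_le (e : TreeNode → X) (coord : TreeNode → X →L[ℝ] ℝ)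
    (hnorm : ∀ c : TreeNode →₀ ℝ, ‖c.sum fun t a => a • e t‖ = treeNorm c)
    (hdense : DenseRange fun c : TreeNode →₀ ℝ => c.sum fun t a => a • e t)
    (hcoord : ∀ s t, coord s (e t) = if s = t then 1 else 0)
    (β : Set TreeNode) (hβ : IsSetChain β) (y : X) :
    |∑' (s : β), coord (s : TreeNode) y| ≤ ‖y‖ := by
  have hs := chain_coord_summable e coord hnorm hdense hcoord β hβ y
  have habs : |∑' (s : β), coord (s : TreeNode) y| ≤ ∑' (s : β), |coord (s : TreeNode) y| := by
    rw [abs_le]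
    constructor
    · have h2 : ∑' (s : β), -(coord (s : TreeNode) y) ≤ ∑' (s : β), |coord (s : TreeNode) y| :=
        Summable.tsum_le_tsum (fun s => neg_le_abs _) hs.of_abs.neg hs
      rw [tsum_neg] at h2
      linarith
    · exact Summable.tsum_le_tsum (fun s => le_abs_self _) hs.of_abs hs
  exact le_trans habs (Summable.tsum_le_of_sum_le hs
    (chain_coord_partial_bound e coord hnorm hdense hcoord β hβ y))

noncomputable def branchFun (e : TreeNode → X) (coord : TreeNode → X →L[ℝ] ℝ)
    (hnorm : ∀ c : TreeNode →₀ ℝ, ‖c.sum fun t a => a • e t‖ = treeNorm c)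
    (hdense : DenseRange fun c : TreeNode →₀ ℝ => c.sum fun t a => a • e t)
    (hcoord : ∀ s t, coord s (e t) = if s = t then 1 else 0)
    (β : Set TreeNode) (hβ : IsSetChain β) : X →L[ℝ] ℝ :=
  LinearMap.mkContinuous
    (branchLin coord β (chain_coord_summable e coord hnorm hdense hcoord β hβ)) 1
    (fun y => by
      rw [Real.norm_eq_abs, one_mul]
      exact branch_abs_tsum_le e coord hnorm hdense hcoord β hβ y)

lemma branchFun_apply (e : TreeNode → X) (coord : TreeNode → X →L[ℝ] ℝ)
    (hnorm : ∀ c : TreeNode →₀ ℝ, ‖c.sum fun t a => a • e t‖ = treeNorm c)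
    (hdense : DenseRange fun c : TreeNode →₀ ℝ => c.sum fun t a => a • e t)
    (hcoord : ∀ s t, coord s (e t) = if s = t then 1 else 0)
    (β : Set TreeNode) (hβ : IsSetChain β) (y : X) :
    branchFun e coord hnorm hdense hcoord β hβ y = ∑' (s : β), coord (s : TreeNode) y := rfl




lemma sig_antichain {c : TreeNode →₀ ℝ} (hn : treeNorm c ≤ 1)
    (hv : ∀ t, c t ∈ ({-1, 0, 1} : Set ℝ)) :
    ∀ s t : TreeNode, c s ≠ 0 → c t ≠ 0 → s <+: t → s = t := by
  intro s t hs ht hpre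
  by_contra hne
  have habs : ∀ u : TreeNode, c u ≠ 0 → |c u| = 1 := by
    intro u hu
    have := hv u
    simp only [Set.mem_insert_iff, Set.mem_singleton_iff] at this
    rcases this with h | h | h <;> simp [h] at hu ⊢
  have hchain : IsFinChain {s, t} := by
    intro a ha b hb
    simp only [Finset.mem_insert, Finset.mem_singleton] at ha hb
    rcases ha with rfl | rfl <;> rcases hb with rfl | rfl
    · exact Or.inl (List.prefix_refl _)
    · exact Or.inl hpre
    · exact Or.inr hpre
    · exact Or.inl (List.prefix_refl _)
  have hsum := chain_sum_le_treeNorm (c := c) hchain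
  rw [Finset.sum_pair hne, habs s hs, habs t ht] at hsum
  linarith

lemma mem_Sig_of (e : TreeNode → X) (coord : TreeNode → X →L[ℝ] ℝ)
    (hnorm : ∀ c : TreeNode →₀ ℝ, ‖c.sum fun t a => a • e t‖ = treeNorm c)
    (hcoord : ∀ s t, coord s (e t) = if s = t then 1 else 0)
    (Sig : Set X)
    (hSig : Sig = {x ∈ closedBall (0 : X) 1 |
      ∀ s : TreeNode, coord s x ∈ ({-1, 0, 1} : Set ℝ)})
    {c : TreeNode →₀ ℝ} (hv : ∀ t, c t ∈ ({-1, 0, 1} : Set ℝ))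
    (hanti : ∀ s t : TreeNode, c s ≠ 0 → c t ≠ 0 → s <+: t → s = t) :
    JL e c ∈ Sig := by
  rw [hSig]
  refine ⟨?_, ?_⟩
  · rw [mem_closedBall, dist_zero_right, norm_JL e hnorm]
    refine treeNorm_le_one (fun t => ?_) hanti
    have := hv t
    simp only [Set.mem_insert_iff, Set.mem_singleton_iff] at this
    rcases this with h | h | h <;> simp [h]
  · intro s
    rw [coord_JL e coord hcoord]
    exact hv s

/-- the key step lemma -/
lemma step (e : TreeNode → X) (coord : TreeNode → X →L[ℝ] ℝ)
    (hnorm : ∀ c : TreeNode →₀ ℝ, ‖c.sum fun t a => a • e t‖ = treeNorm c)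
    (hdense : DenseRange fun c : TreeNode →₀ ℝ => c.sum fun t a => a • e t)
    (hcoord : ∀ s t, coord s (e t) = if s = t then 1 else 0)
    (Sig : Set X)
    (hSig : Sig = {x ∈ closedBall (0 : X) 1 |
      ∀ s : TreeNode, coord s x ∈ ({-1, 0, 1} : Set ℝ)})
    (A : Finset TreeNode) (hA : IsFinChain A) (V : Set X)
    (hVne : V.Nonempty) (hVopen : RelWeakOpen Sig V) :
    ∃ (x : X) (s : TreeNode), x ∈ V ∧ x ∈ Sig ∧ coord s x ≠ 0 ∧ IsFinChain (insert s A) := by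
  classical
  obtain ⟨x₀, hx₀⟩ := hVne
  obtain ⟨U, hUopen, hUeq⟩ := hVopen
  have hx₀Sig : x₀ ∈ Sig := by rw [hUeq] at hx₀; exact hx₀.1
  have hx₀U : x₀ ∈ U := by rw [hUeq] at hx₀; exact hx₀.2
  have hx₀coord : ∀ s : TreeNode, coord s x₀ ∈ ({-1, 0, 1} : Set ℝ) := by
    rw [hSig] at hx₀Sig; exact hx₀Sig.2
  have hx₀ball : ‖x₀‖ ≤ 1 := by
    rw [hSig] at hx₀Sig
    have := hx₀Sig.1
    rwa [mem_closedBall, dist_zero_right] at this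
  obtain ⟨c₀, hc₀J, hc₀val⟩ := rep e coord hnorm hdense hcoord x₀ hx₀coord
  have hc₀mem : ∀ t, c₀ t ∈ ({-1, 0, 1} : Set ℝ) := fun t => (hc₀val t) ▸ hx₀coord t
  have hc₀n : treeNorm c₀ ≤ 1 := by
    rw [← norm_JL e hnorm, hc₀J]; exact hx₀ball
  have hc₀anti := sig_antichain hc₀n hc₀mem
  by_cases hcase : ∃ u : TreeNode, c₀ u ≠ 0 ∧ ∀ a ∈ A, a <+: u ∨ u <+: a
  · obtain ⟨u, hu0, hucomp⟩ := hcase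
    refine ⟨x₀, u, hx₀, hx₀Sig, by rw [← hc₀val]; exact hu0, ?_⟩
    intro s hs t ht
    simp only [Finset.mem_insert] at hs ht
    rcases hs with rfl | hs <;> rcases ht with rfl | ht
    · exact Or.inl (List.prefix_refl _)
    · rcases hucomp t ht with h | h
      · exact Or.inr h
      · exact Or.inl h
    · exact hucomp s hs
    · exact hA s hs t ht
  · push_neg at hcase
    obtain ⟨m, hm⟩ := chain_has_top hA
    have hanti : ∀ k l : ℕ, k ≠ l → ¬ br m k <+: br m l := fun k l h => br_antichain m h
    have hApre : ∀ (k : ℕ), ∀ a ∈ A, a <+: br m k := fun k a ha =>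
      (hm a ha).trans (br_prefix m k)
    have hnoupre : ∀ (k : ℕ) (u : TreeNode), c₀ u ≠ 0 → ¬ u <+: br m k := by
      intro k u hu hup
      obtain ⟨a, haA, hnc⟩ := hcase u hu
      rcases List.prefix_or_prefix_of_prefix (hApre k a haA) hup with h | h
      · exact hnc.1 h
      · exact hnc.2 h
    have hnopreu : ∀ k : ℕ, c₀.support.sup List.length + 1 ≤ k →
        ∀ u : TreeNode, c₀ u ≠ 0 → ¬ br m k <+: u := by
      intro k hk u hu hpre
      have h1 : u.length ≤ c₀.support.sup List.length :=
        Finset.le_sup (f := List.length) (Finsupp.mem_support_iff.2 hu)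
      have h2 := hpre.length_le
      have h3 := br_length m k
      omega
    have hsnot : ∀ k : ℕ, c₀.support.sup List.length + 1 ≤ k → c₀ (br m k) = 0 := by
      intro k hk
      by_contra h
      exact hnoupre k (br m k) h (List.prefix_refl _)
    -- the perturbed points
    have hyval : ∀ k : ℕ, JL e (c₀ + Finsupp.single (br m k) 1) = x₀ + e (br m k) := by
      intro k
      rw [map_add, hc₀J, JL_single, one_smul]
    have hySig : ∀ k : ℕ, c₀.support.sup List.length + 1 ≤ k →
        JL e (c₀ + Finsupp.single (br m k) 1) ∈ Sig := by
      intro k hk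
      have happ : ∀ t, ((c₀ + Finsupp.single (br m k) 1 : TreeNode →₀ ℝ)) t
          = c₀ t + if br m k = t then 1 else 0 := by
        intro t
        rw [Finsupp.add_apply, Finsupp.single_apply]
      have hval : ∀ t, ((c₀ + Finsupp.single (br m k) 1 : TreeNode →₀ ℝ)) t ∈ ({-1, 0, 1} : Set ℝ) := by
        intro t
        rw [happ]
        by_cases h : br m k = t
        · rw [if_pos h, ← h, hsnot k hk]
          norm_num
        · rw [if_neg h, add_zero]
          exact hc₀mem t
      refine mem_Sig_of e coord hnorm hcoord Sig hSig hval ?_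
      intro a b ha hb hab
      rw [happ] at ha hb
      by_cases hax : br m k = a <;> by_cases hbx : br m k = b
      · rw [← hax, ← hbx]
      · rw [if_neg hbx, add_zero] at hb
        subst hax
        exact absurd hab (hnopreu k hk b hb)
      · rw [if_neg hax, add_zero] at ha
        subst hbx
        exact absurd hab (hnoupre k a ha)
      · rw [if_neg hax, add_zero] at ha
        rw [if_neg hbx, add_zero] at hb
        exact hc₀anti a b ha hb hab
    -- weak convergence
    have htend : Tendsto (fun k => toWeakSpaceCLM ℝ X (JL e (c₀ + Finsupp.single (br m k) 1)))
        atTop (𝓝 (toWeakSpaceCLM ℝ X x₀)) := by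
      refine weak_tendsto _ x₀ fun f => ?_
      have h0 : Tendsto (fun k => f x₀ + f (e (br m k))) atTop (𝓝 (f x₀ + 0)) :=
        tendsto_const_nhds.add (antichain_weakly_null e hnorm (br m) hanti f)
      rw [add_zero] at h0
      refine h0.congr fun k => ?_
      rw [hyval k, map_add]
    have hUev : ∀ᶠ k in atTop,
        toWeakSpaceCLM ℝ X (JL e (c₀ + Finsupp.single (br m k) 1)) ∈ U :=
      htend (hUopen.mem_nhds hx₀U)
    obtain ⟨k, hkk₀, hkU⟩ :=
      ((eventually_ge_atTop (c₀.support.sup List.length + 1)).and hUev).exists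
    have hcoordy : coord (br m k) (JL e (c₀ + Finsupp.single (br m k) 1)) = 1 := by
      rw [coord_JL e coord hcoord, Finsupp.add_apply, hsnot k hkk₀,
        Finsupp.single_apply, if_pos rfl, zero_add]
    refine ⟨_, br m k, ?_, hySig k hkk₀, by rw [hcoordy]; norm_num, ?_⟩
    · rw [hUeq]
      exact ⟨hySig k hkk₀, hkU⟩
    · intro a ha b hb
      simp only [Finset.mem_insert] at ha hb
      rcases ha with rfl | ha <;> rcases hb with rfl | hb
      · exact Or.inl (List.prefix_refl _)
      · exact Or.inr (hApre k b hb)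
      · exact Or.inl (hApre k a ha)
      · exact hA a ha b hb


/-- the master construction -/
lemma master (e : TreeNode → X) (coord : TreeNode → X →L[ℝ] ℝ)
    (hnorm : ∀ c : TreeNode →₀ ℝ, ‖c.sum fun t a => a • e t‖ = treeNorm c)
    (hdense : DenseRange fun c : TreeNode →₀ ℝ => c.sum fun t a => a • e t)
    (hcoord : ∀ s t, coord s (e t) = if s = t then 1 else 0)
    (Sig : Set X)
    (hSig : Sig = {x ∈ closedBall (0 : X) 1 |
      ∀ s : TreeNode, coord s x ∈ ({-1, 0, 1} : Set ℝ)})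
    (V : ℕ → Set X) (hV : ∀ n, (V n).Nonempty ∧ RelWeakOpen Sig (V n)) :
    ∃ (x : ℕ → X) (θ : ℕ → ℝ) (β : Set TreeNode) (tt : ℕ → TreeNode),
      IsSetChain β ∧ (∀ n, x n ∈ V n) ∧ (∀ n, θ n = 1 ∨ θ n = -1) ∧
      (∀ n, tt n ∈ β) ∧ (∀ n, coord (tt n) (x n) = θ n) ∧
      (∀ n, ∀ s ∈ β, s ≠ tt n → coord s (x n) = 0) ∧
      (∀ n : ℕ, ‖∑ i ∈ Finset.range (n + 1), θ i • x i‖ = (n + 1 : ℝ)) := by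
  classical
  -- a total step function
  have step' : ∀ p : Finset TreeNode × ℕ, ∃ q : X × TreeNode,
      IsFinChain p.1 → (q.1 ∈ V p.2 ∧ q.1 ∈ Sig ∧ coord q.2 q.1 ≠ 0 ∧
        IsFinChain (insert q.2 p.1)) := by
    intro p
    by_cases hp : IsFinChain p.1
    · obtain ⟨x, s, h1, h2, h3, h4⟩ := step e coord hnorm hdense hcoord Sig hSig p.1 hp
        (V p.2) (hV p.2).1 (hV p.2).2
      exact ⟨(x, s), fun _ => ⟨h1, h2, h3, h4⟩⟩
    · exact ⟨(0, []), fun h => absurd h hp⟩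
  choose F hF using step'
  -- the increasing chains
  let prevA : ℕ → Finset TreeNode := fun n =>
    Nat.rec ∅ (fun k Ak => insert (F (Ak, k)).2 Ak) n
  have hprevA_succ : ∀ n, prevA (n + 1) = insert (F (prevA n, n)).2 (prevA n) := fun n => rfl
  set x : ℕ → X := fun n => (F (prevA n, n)).1 with hx
  set tt : ℕ → TreeNode := fun n => (F (prevA n, n)).2 with htt
  have hchain : ∀ n, IsFinChain (prevA n) := by
    intro n
    induction n with
    | zero => intro s hs; simp [prevA] at hs
    | succ k ih =>
      rw [hprevA_succ]
      exact (hF (prevA k, k) ih).2.2.2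
  have hprops : ∀ n, x n ∈ V n ∧ x n ∈ Sig ∧ coord (tt n) (x n) ≠ 0 ∧
      IsFinChain (prevA (n + 1)) := by
    intro n
    have := hF (prevA n, n) (hchain n)
    rw [hprevA_succ]
    exact this
  have hmono : ∀ i n, i ≤ n → prevA i ⊆ prevA n := by
    intro i n hin
    induction n with
    | zero => rw [Nat.le_zero.1 hin]
    | succ k ih =>
      rcases Nat.lt_or_ge i (k+1) with h | h
      · refine (ih (by omega)).trans ?_
        rw [hprevA_succ]
        exact Finset.subset_insert _ _
      · rw [Nat.le_antisymm hin h]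
  have htmem : ∀ i n, i < n → tt i ∈ prevA n := by
    intro i n hin
    refine hmono (i+1) n hin ?_
    rw [hprevA_succ]
    exact Finset.mem_insert_self _ _
  -- the union chain
  set β : Set TreeNode := {s | ∃ n, s ∈ prevA n} with hβ
  have hβchain : IsSetChain β := by
    rintro s ⟨n₁, hs⟩ t ⟨n₂, ht⟩
    exact hchain (max n₁ n₂) s (hmono n₁ _ (le_max_left _ _) hs) t
      (hmono n₂ _ (le_max_right _ _) ht)
  have httβ : ∀ n, tt n ∈ β := fun n => ⟨n + 1, htmem n (n+1) (by omega)⟩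
  -- coordinates of x n vanish on β away from tt n
  have hvanish : ∀ n, ∀ s ∈ β, s ≠ tt n → coord s (x n) = 0 := by
    rintro n s ⟨ns, hns⟩ hne
    by_contra h0
    -- representation of x n
    have hxSig := (hprops n).2.1
    have hxcoord : ∀ u : TreeNode, coord u (x n) ∈ ({-1, 0, 1} : Set ℝ) := by
      rw [hSig] at hxSig; exact hxSig.2
    obtain ⟨c, hcJ, hcval⟩ := rep e coord hnorm hdense hcoord (x n) hxcoord
    have hcn : treeNorm c ≤ 1 := by
      rw [← norm_JL e hnorm, hcJ]
      rw [hSig] at hxSig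
      have := hxSig.1
      rwa [mem_closedBall, dist_zero_right] at this
    have hcmem : ∀ u, c u ∈ ({-1, 0, 1} : Set ℝ) := fun u => (hcval u) ▸ hxcoord u
    have hanti := sig_antichain hcn hcmem
    -- s and tt n are comparable, both in the support of c
    have hsβ : s ∈ prevA (max ns (n+1)) := hmono ns _ (le_max_left _ _) hns
    have htβ' : tt n ∈ prevA (max ns (n+1)) :=
      hmono (n+1) _ (le_max_right _ _) (htmem n (n+1) (by omega))
    have hcs : c s ≠ 0 := by rw [hcval]; exact h0
    have hct : c (tt n) ≠ 0 := by rw [hcval]; exact (hprops n).2.2.1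
    rcases hchain (max ns (n+1)) s hsβ (tt n) htβ' with h | h
    · exact hne (hanti s (tt n) hcs hct h)
    · exact hne (hanti (tt n) s hct hcs h).symm
  -- the signs
  set θ : ℕ → ℝ := fun n => coord (tt n) (x n) with hθ
  have hθval : ∀ n, θ n = 1 ∨ θ n = -1 := by
    intro n
    have hxSig := (hprops n).2.1
    have : coord (tt n) (x n) ∈ ({-1, 0, 1} : Set ℝ) := by
      rw [hSig] at hxSig; exact hxSig.2 (tt n)
    simp only [Set.mem_insert_iff, Set.mem_singleton_iff] at this
    rcases this with h | h | h
    · exact Or.inr (hθ ▸ h)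
    · exact absurd h (hprops n).2.2.1
    · exact Or.inl (hθ ▸ h)
  refine ⟨x, θ, β, tt, hβchain, fun n => (hprops n).1, hθval, httβ,
    fun n => rfl, hvanish, ?_⟩
  -- the norm computation
  intro n
  have hnormx : ∀ i, ‖x i‖ ≤ 1 := by
    intro i
    have hxSig := (hprops i).2.1
    rw [hSig] at hxSig
    have := hxSig.1
    rwa [mem_closedBall, dist_zero_right] at this
  have hθabs : ∀ i, |θ i| = 1 := by
    intro i
    rcases hθval i with h | h <;> simp [h]
  have hub : ‖∑ i ∈ Finset.range (n+1), θ i • x i‖ ≤ (n+1 : ℝ) := by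
    calc ‖∑ i ∈ Finset.range (n+1), θ i • x i‖ ≤ ∑ i ∈ Finset.range (n+1), ‖θ i • x i‖ :=
          norm_sum_le _ _
      _ ≤ ∑ _i ∈ Finset.range (n+1), (1:ℝ) := by
          refine Finset.sum_le_sum fun i _ => ?_
          rw [norm_smul, Real.norm_eq_abs, hθabs i, one_mul]
          exact hnormx i
      _ = (n+1 : ℝ) := by simp
  have hgx : ∀ i, i < n+1 → ∑ s ∈ prevA (n+1), coord s (x i) = θ i := by
    intro i hi
    rw [Finset.sum_eq_single (tt i)]
    · intro b hb hne
      exact hvanish i b ⟨n+1, hb⟩ hne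
    · intro h
      exact absurd (htmem i (n+1) hi) h
  have hsum : ∑ s ∈ prevA (n+1), coord s (∑ i ∈ Finset.range (n+1), θ i • x i)
      = (n+1 : ℝ) := by
    have h1 : ∀ s : TreeNode, coord s (∑ i ∈ Finset.range (n+1), θ i • x i)
        = ∑ i ∈ Finset.range (n+1), θ i * coord s (x i) := by
      intro s
      rw [map_sum]
      exact Finset.sum_congr rfl fun i _ => by rw [map_smul, smul_eq_mul]
    simp only [h1]
    rw [Finset.sum_comm]
    have h2 : ∀ i ∈ Finset.range (n+1), ∑ s ∈ prevA (n+1), θ i * coord s (x i) = 1 := by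
      intro i hi
      rw [← Finset.mul_sum, hgx i (Finset.mem_range.1 hi)]
      rcases hθval i with h | h <;> rw [h] <;> norm_num
    rw [Finset.sum_congr rfl h2]
    simp
  have hlb : (n+1 : ℝ) ≤ ‖∑ i ∈ Finset.range (n+1), θ i • x i‖ := by
    have hbd := chain_functional_bound e coord hnorm hdense hcoord (fun _ => 1) (by simp)
      (hprops n).2.2.2 (∑ i ∈ Finset.range (n+1), θ i • x i)
    simp only [one_mul] at hbd
    rw [hsum] at hbd
    calc (n+1 : ℝ) ≤ |(n+1 : ℝ)| := le_abs_self _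
      _ ≤ _ := hbd
  linarith

end Xsec
end BTAux

/-- **`(Σ, w)` has no countable π-base.** Let `Σ` be the set of unit-ball elements of the
binary tree space with coordinates in `{-1,0,1}`. For every sequence `(V_n)` of nonempty
relatively weakly open subsets of `Σ` there are `x_n ∈ V_n` and signs `θ_n ∈ {-1,1}` with
`‖θ_1 x_1 + ⋯ + θ_n x_n‖ = n` for all `n`; consequently `Σ` with the relative weak topology
has no countable π-base. -/
theorem binary_tree_sigma_no_countable_pi_base {X : Type*} [NormedAddCommGroup X]
    [NormedSpace ℝ X] [CompleteSpace X] (e : TreeNode → X) (coord : TreeNode → X →L[ℝ] ℝ)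
    (hnorm : ∀ c : TreeNode →₀ ℝ, ‖c.sum fun t a => a • e t‖ = treeNorm c)
    (hdense : DenseRange fun c : TreeNode →₀ ℝ => c.sum fun t a => a • e t)
    (hcoord : ∀ s t, coord s (e t) = if s = t then 1 else 0)
    (Sig : Set X)
    (hSig : Sig = {x ∈ closedBall (0 : X) 1 |
      ∀ s : TreeNode, coord s x ∈ ({-1, 0, 1} : Set ℝ)}) :
    (∀ V : ℕ → Set X, (∀ n, (V n).Nonempty ∧ RelWeakOpen Sig (V n)) →
      ∃ (x : ℕ → X) (θ : ℕ → ℝ), (∀ n, x n ∈ V n) ∧ (∀ n, θ n = 1 ∨ θ n = -1) ∧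
        ∀ n : ℕ, ‖∑ i ∈ Finset.range (n + 1), θ i • x i‖ = (n + 1 : ℝ)) ∧
    ¬ ∃ V : ℕ → Set X, (∀ n, (V n).Nonempty ∧ RelWeakOpen Sig (V n)) ∧
        ∀ W : Set X, W.Nonempty → RelWeakOpen Sig W → ∃ n, V n ⊆ W := by
  constructor
  · -- part 1: the selection result
    intro V hV
    obtain ⟨x, θ, β, tt, hβchain, hmem, hθ, httβ, hθc, hvan, hnorms⟩ :=
      BTAux.master e coord hnorm hdense hcoord Sig hSig V hV
    exact ⟨x, θ, hmem, hθ, hnorms⟩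
  · -- part 2: no countable π-base
    rintro ⟨V, hV, hbase⟩
    obtain ⟨x, θ, β, tt, hβchain, hmem, hθ, httβ, hθc, hvan, -⟩ :=
      BTAux.master e coord hnorm hdense hcoord Sig hSig V hV
    -- the branch functional
    set f : X →L[ℝ] ℝ := BTAux.branchFun e coord hnorm hdense hcoord β hβchain with hf
    have hfval : ∀ n, f (x n) = θ n := by
      intro n
      rw [hf, BTAux.branchFun_apply]
      rw [tsum_eq_single (⟨tt n, httβ n⟩ : β)]
      · exact hθc n
      · rintro ⟨s, hsβ⟩ hne
        exact hvan n s hsβ (fun h => hne (Subtype.ext h))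
    -- the bad weakly open set
    have hcont : Continuous fun xw : WeakSpace ℝ X => f xw :=
      WeakBilin.eval_continuous ((topDualPairing ℝ X).flip) f
    set U : Set (WeakSpace ℝ X) :=
      (fun xw : WeakSpace ℝ X => f xw) ⁻¹' (Set.Ioo (-(1/2)) (1/2)) with hU
    have hUopen : IsOpen U := IsOpen.preimage hcont isOpen_Ioo
    have h0Sig : (0 : X) ∈ Sig := by
      rw [hSig]
      refine ⟨by simp, fun s => by simp⟩
    have h0U : (0 : X) ∈ Sig ∩ U := by
      refine ⟨h0Sig, ?_⟩
      show f 0 ∈ Set.Ioo (-(1/2) : ℝ) (1/2)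
      rw [map_zero]
      constructor <;> norm_num
    obtain ⟨n, hn⟩ := hbase (Sig ∩ U) ⟨0, h0U⟩ ⟨U, hUopen, rfl⟩
    have hxn := hn (hmem n)
    have hlt : f (x n) ∈ Set.Ioo (-(1/2) : ℝ) (1/2) := hxn.2
    rw [hfval n] at hlt
    rcases hθ n with h | h <;> rw [h] at hlt <;>
      simp only [Set.mem_Ioo] at hlt <;> linarith [hlt.1, hlt.2]
end

section
/- A point x in the unit sphere of the binary tree space X_T is a point of continuity of the closed unit ball B_{X_T} if and only if ‖P_β(x)‖ = 1 for every branch β of T, where P_β is the canonical projection onto the closed span of {e_t : t ∈ β}. -/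
open Metric Filter Topology

/-- `x` is a point of continuity of `A`: `x` belongs to relatively weakly open subsets of `A`
of arbitrarily small diameter (equivalently, the identity `(A,w) → (A,‖·‖)` is continuous
at `x`). -/
def PointOfContinuity {X : Type*} [NormedAddCommGroup X] [NormedSpace ℝ X]
    (A : Set X) (x : X) : Prop :=
  x ∈ A ∧ ∀ ε > (0 : ℝ), ∃ V : Set X, RelWeakOpen A V ∧ x ∈ V ∧ Metric.diam V ≤ ε


set_option maxHeartbeats 1000000

namespace BTPC
open Finset

lemma IsFinChain.subset {A B : Finset TreeNode} (h : IsFinChain B) (hs : A ⊆ B) : IsFinChain A :=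
  fun s hsA t htA => h s (hs hsA) t (hs htA)

lemma treeNorm_set_nonempty (c : TreeNode →₀ ℝ) :
    {r | ∃ A : Finset TreeNode, IsFinChain A ∧ r = ∑ t ∈ A, |c t|}.Nonempty :=
  ⟨0, ∅, fun s hs => absurd hs (by simp), by simp⟩

lemma treeNorm_bddAbove (c : TreeNode →₀ ℝ) :
    BddAbove {r | ∃ A : Finset TreeNode, IsFinChain A ∧ r = ∑ t ∈ A, |c t|} := by
  refine ⟨∑ t ∈ c.support, |c t|, ?_⟩
  rintro r ⟨A, hA, rfl⟩
  calc ∑ t ∈ A, |c t| = ∑ t ∈ A ∩ c.support, |c t| := by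
        refine (Finset.sum_subset (Finset.inter_subset_left) ?_).symm
        intro t ht hts
        simp only [Finset.mem_inter, ht, true_and] at hts
        simp [Finsupp.notMem_support_iff.mp hts]
    _ ≤ ∑ t ∈ c.support, |c t| :=
        Finset.sum_le_sum_of_subset_of_nonneg (Finset.inter_subset_right)
          (fun t _ _ => abs_nonneg _)

lemma chainSum_le_treeNorm (c : TreeNode →₀ ℝ) {A : Finset TreeNode} (hA : IsFinChain A) :
    ∑ t ∈ A, |c t| ≤ treeNorm c :=
  le_csSup (treeNorm_bddAbove c) ⟨A, hA, rfl⟩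

lemma treeNorm_le {c : TreeNode →₀ ℝ} {r : ℝ}
    (h : ∀ A : Finset TreeNode, IsFinChain A → ∑ t ∈ A, |c t| ≤ r) : treeNorm c ≤ r :=
  csSup_le (treeNorm_set_nonempty c) (by rintro s ⟨A, hA, rfl⟩; exact h A hA)

lemma treeNorm_nonneg (c : TreeNode →₀ ℝ) : 0 ≤ treeNorm c :=
  le_csSup (treeNorm_bddAbove c) ⟨∅, fun s hs => absurd hs (by simp), by simp⟩


lemma branch_mem_of_prefix {β : Set TreeNode} (hβ : IsBranch β) {t p : TreeNode}
    (ht : t ∈ β) (hp : p <+: t) : p ∈ β := by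
  have hchain : IsSetChain (β ∪ {p}) := by
    rintro s (hs | hs) u (hu | hu)
    · exact hβ.1 s hs u hu
    · rw [Set.mem_singleton_iff.mp hu]
      rcases hβ.1 s hs t ht with h | h
      · exact List.prefix_or_prefix_of_prefix h hp
      · exact Or.inr (hp.trans h)
    · rcases hβ.1 u hu t ht with h | h
      · rw [Set.mem_singleton_iff.mp hs]
        exact (List.prefix_or_prefix_of_prefix hp h).imp id id
      · left; rw [Set.mem_singleton_iff.mp hs]; exact hp.trans h
    · rw [Set.mem_singleton_iff.mp hs, Set.mem_singleton_iff.mp hu]; left; exact List.prefix_refl p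
  have := hβ.2 _ hchain Set.subset_union_left
  rw [← this]; exact Or.inr rfl

lemma branch_nonempty {β : Set TreeNode} (hβ : IsBranch β) : β.Nonempty := by
  by_contra h
  rw [Set.not_nonempty_iff_eq_empty] at h
  have hchain : IsSetChain ({[]} : Set TreeNode) := by
    intro s hs t ht
    rw [Set.mem_singleton_iff.mp hs, Set.mem_singleton_iff.mp ht]; left; exact List.prefix_refl _
  have := hβ.2 {[]} hchain (by rw [h]; exact Set.empty_subset _)
  rw [h] at this
  exact (Set.singleton_nonempty ([] : TreeNode)).ne_empty this

lemma branch_exists_ge_length {β : Set TreeNode} (hβ : IsBranch β) (n : ℕ) :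
    ∃ t ∈ β, n ≤ t.length := by
  by_contra h
  push_neg at h
  have hfin : β.Finite := (List.finite_length_lt Bool n).subset (fun t ht => h t ht)
  obtain ⟨m, hm, hmax⟩ := Set.exists_max_image β List.length hfin (branch_nonempty hβ)
  have htop : ∀ t ∈ β, t <+: m := by
    intro t ht
    rcases hβ.1 t ht m hm with hh | hh
    · exact hh
    · rw [hh.eq_of_length (le_antisymm hh.length_le (hmax t ht))]
  have hchain : IsSetChain (β ∪ {m ++ [false]}) := by
    rintro s (hs | hs) u (hu | hu)
    · exact hβ.1 s hs u hu
    · left; rw [Set.mem_singleton_iff.mp hu]; exact (htop s hs).trans (List.prefix_append _ _)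
    · right; rw [Set.mem_singleton_iff.mp hs]; exact (htop u hu).trans (List.prefix_append _ _)
    · rw [Set.mem_singleton_iff.mp hs, Set.mem_singleton_iff.mp hu]; left
      exact List.prefix_refl _
  have heq := hβ.2 _ hchain Set.subset_union_left
  have : m ++ [false] ∈ β := by rw [← heq]; exact Or.inr rfl
  have := hmax _ this
  simp at this

lemma branch_exists_length {β : Set TreeNode} (hβ : IsBranch β) (n : ℕ) :
    ∃ t ∈ β, t.length = n := by
  obtain ⟨t, ht, hn⟩ := branch_exists_ge_length hβ n
  exact ⟨t.take n, branch_mem_of_prefix hβ ht (List.take_prefix n t), by simp [hn]⟩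

lemma branch_eq_of_length {β : Set TreeNode} (hβ : IsBranch β) {s t : TreeNode}
    (hs : s ∈ β) (ht : t ∈ β) (h : s.length = t.length) : s = t := by
  rcases hβ.1 s hs t ht with hh | hh
  · exact hh.eq_of_length h
  · exact (hh.eq_of_length h.symm).symm

lemma isBranch_range {p : ℕ → TreeNode} (hlen : ∀ n, (p n).length = n)
    (hpre : ∀ n, p n <+: p (n + 1)) : IsBranch (Set.range p) := by
  have hmono : ∀ m n, m ≤ n → p m <+: p n := by
    intro m n h
    induction n with
    | zero => rw [Nat.le_zero.mp h]
    | succ k ih =>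
      rcases Nat.lt_or_ge m (k+1) with h' | h'
      · exact (ih (Nat.lt_succ_iff.mp h')).trans (hpre k)
      · rw [le_antisymm h h']
  constructor
  · rintro s ⟨m, rfl⟩ t ⟨n, rfl⟩
    rcases le_total m n with h | h
    · exact Or.inl (hmono m n h)
    · exact Or.inr (hmono n m h)
  · intro γ hγ hsub
    refine Set.eq_of_subset_of_subset (fun t ht => ?_) hsub
    have hcomp := hγ t ht (p t.length) (hsub ⟨t.length, rfl⟩)
    rcases hcomp with hh | hh
    · exact ⟨t.length, (hh.eq_of_length (by rw [hlen])).symm⟩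
    · exact ⟨t.length, hh.eq_of_length (by rw [hlen])⟩

/-- König's lemma style construction: an infinite downward closed set of nodes contains
an infinite path. -/
lemma exists_path_of_infinite {S : Set TreeNode}
    (hdc : ∀ u ∈ S, ∀ p : TreeNode, p <+: u → p ∈ S) (hinf : S.Infinite) :
    ∃ p : ℕ → TreeNode, (∀ n, (p n).length = n) ∧ (∀ n, p n <+: p (n + 1)) ∧ ∀ n, p n ∈ S := by
  classical
  have hstep : ∀ b : TreeNode, ({u | u ∈ S ∧ b <+: u}).Infinite →
      ∃ bit : Bool, ({u | u ∈ S ∧ b ++ [bit] <+: u}).Infinite := by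
    intro b hb
    by_contra h
    push_neg at h
    have hsub : {u | u ∈ S ∧ b <+: u} ⊆
        {b} ∪ ({u | u ∈ S ∧ b ++ [false] <+: u} ∪ {u | u ∈ S ∧ b ++ [true] <+: u}) := by
      rintro u ⟨huS, hbu⟩
      by_cases hub : u = b
      · exact Or.inl hub
      · obtain ⟨r, hr⟩ := hbu
        match r with
        | [] => exact absurd (by rw [← hr]; simp) hub
        | bit :: r' =>
          right
          cases bit
          · left; exact ⟨huS, ⟨r', by rw [← hr]; simp⟩⟩
          · right; exact ⟨huS, ⟨r', by rw [← hr]; simp⟩⟩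
    exact hb ((((h false).union (h true)).union (Set.finite_singleton b)).subset
      (by rw [Set.union_comm] at hsub; exact hsub))
  choose bit hbit using hstep
  let P : ℕ → Type := fun n => {b : TreeNode // b.length = n ∧ ({u | u ∈ S ∧ b <+: u}).Infinite}
  have hSeq : ({u | u ∈ S ∧ [] <+: u}).Infinite := by
    have : {u | u ∈ S ∧ [] <+: u} = S := by
      ext u; simp [List.nil_prefix]
    rwa [this]
  let p0 : P 0 := ⟨[], rfl, hSeq⟩
  let ps : ∀ n, P n → P (n + 1) := fun n b =>
    ⟨b.1 ++ [bit b.1 b.2.2], by simp [b.2.1], hbit b.1 b.2.2⟩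
  let p : ∀ n, P n := fun n => Nat.rec p0 ps n
  have hmemS : ∀ n, (p n).1 ∈ S := by
    intro n
    obtain ⟨u, huS, hpu⟩ := (p n).2.2.nonempty
    exact hdc u huS _ hpu
  refine ⟨fun n => (p n).1, fun n => (p n).2.1, fun n => ?_, hmemS⟩
  exact List.prefix_append _ _


lemma weak_nbhd {X : Type*} [NormedAddCommGroup X] [NormedSpace ℝ X]
    (U : Set (WeakSpace ℝ X)) (hU : IsOpen U) (x : X) (hx : (x : WeakSpace ℝ X) ∈ U) :
    ∃ (F : Finset (X →L[ℝ] ℝ)) (ε : ℝ), 0 < ε ∧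
      ∀ y : X, (∀ f ∈ F, |f y - f x| < ε) → (y : WeakSpace ℝ X) ∈ U := by
  classical
  erw [isOpen_induced_iff] at hU
  obtain ⟨W, hW, rfl⟩ := hU
  rw [isOpen_pi_iff] at hW
  obtain ⟨I, u, hIu, hsub⟩ := hW _ hx
  have hballs : ∀ f ∈ I, ∃ ε > 0, ball (f x) ε ⊆ u f := by
    intro f hf
    obtain ⟨ε, hε, hb⟩ := Metric.isOpen_iff.mp (hIu f hf).1 (f x) (hIu f hf).2
    exact ⟨ε, hε, hb⟩
  choose! εf hεf hball using hballs
  rcases I.eq_empty_or_nonempty with hI | hI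
  · refine ⟨∅, 1, one_pos, fun y _ => ?_⟩
    apply hsub
    intro f hf
    rw [hI] at hf
    exact absurd hf (by simp)
  · obtain ⟨f0, hf0, hmin⟩ := Finset.exists_min_image I εf hI
    refine ⟨I, εf f0, hεf f0 hf0, fun y hy => ?_⟩
    apply hsub
    intro f hf
    apply hball f hf
    rw [mem_ball, Real.dist_eq]
    exact lt_of_lt_of_le (hy f hf) (hmin f hf)


section Space
variable {X : Type*} [NormedAddCommGroup X] [NormedSpace ℝ X]
  {e : TreeNode → X} {coord : TreeNode → X →L[ℝ] ℝ}

lemma hnorm_lc (hnorm : ∀ c : TreeNode →₀ ℝ, ‖c.sum fun t a => a • e t‖ = treeNorm c)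
    (c : TreeNode →₀ ℝ) : ‖Finsupp.linearCombination ℝ e c‖ = treeNorm c := by
  rw [Finsupp.linearCombination_apply]; exact hnorm c

lemma hdense_lc (hdense : DenseRange fun c : TreeNode →₀ ℝ => c.sum fun t a => a • e t) :
    DenseRange fun c : TreeNode →₀ ℝ => Finsupp.linearCombination ℝ e c := by
  simpa [Finsupp.linearCombination_apply] using hdense

lemma coord_lc (hcoord : ∀ s t, coord s (e t) = if s = t then 1 else 0)
    (c : TreeNode →₀ ℝ) (t : TreeNode) : coord t (Finsupp.linearCombination ℝ e c) = c t := by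
  rw [Finsupp.linearCombination_apply, Finsupp.sum, map_sum]
  simp only [map_smul, hcoord, smul_eq_mul]
  rw [Finset.sum_congr rfl (fun u _ => by rw [mul_ite, mul_one, mul_zero, eq_comm])]
  simp [Finset.sum_ite_eq', Finsupp.mem_support_iff]
  intro h; exact h.symm

lemma abs_chainFunc_le (hnorm : ∀ c : TreeNode →₀ ℝ, ‖c.sum fun t a => a • e t‖ = treeNorm c)
    (hdense : DenseRange fun c : TreeNode →₀ ℝ => c.sum fun t a => a • e t)
    (hcoord : ∀ s t, coord s (e t) = if s = t then 1 else 0)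
    {A : Finset TreeNode} (hA : IsFinChain A) (σ : TreeNode → ℝ) (hσ : ∀ t, |σ t| ≤ 1)
    (z : X) : |∑ t ∈ A, σ t * coord t z| ≤ ‖z‖ := by
  have hC : IsClosed {w : X | |∑ t ∈ A, σ t * coord t w| ≤ ‖w‖} := by
    apply isClosed_le
    · exact (continuous_finset_sum A fun t _ =>
        (continuous_const.mul (coord t).continuous)).abs
    · exact continuous_norm
  have hrange : Set.range (fun c : TreeNode →₀ ℝ => Finsupp.linearCombination ℝ e c) ⊆
      {w : X | |∑ t ∈ A, σ t * coord t w| ≤ ‖w‖} := by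
    rintro _ ⟨c, rfl⟩
    simp only [Set.mem_setOf_eq, coord_lc hcoord, hnorm_lc hnorm]
    calc |∑ t ∈ A, σ t * c t| ≤ ∑ t ∈ A, |σ t * c t| := Finset.abs_sum_le_sum_abs _ _
      _ ≤ ∑ t ∈ A, |c t| := by
          refine Finset.sum_le_sum fun t _ => ?_
          rw [abs_mul]
          calc |σ t| * |c t| ≤ 1 * |c t| := by
                exact mul_le_mul_of_nonneg_right (hσ t) (abs_nonneg _)
            _ = |c t| := one_mul _
      _ ≤ treeNorm c := chainSum_le_treeNorm c hA
  have hz : z ∈ closure (Set.range fun c : TreeNode →₀ ℝ => Finsupp.linearCombination ℝ e c) :=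
    (hdense_lc hdense).closure_range ▸ Set.mem_univ z
  exact hC.closure_subset_iff.mpr hrange hz

lemma chainSum_le_norm (hnorm : ∀ c : TreeNode →₀ ℝ, ‖c.sum fun t a => a • e t‖ = treeNorm c)
    (hdense : DenseRange fun c : TreeNode →₀ ℝ => c.sum fun t a => a • e t)
    (hcoord : ∀ s t, coord s (e t) = if s = t then 1 else 0)
    {A : Finset TreeNode} (hA : IsFinChain A) (z : X) :
    ∑ t ∈ A, |coord t z| ≤ ‖z‖ := by
  set σ : TreeNode → ℝ := fun t => if 0 ≤ coord t z then 1 else -1 with hσdef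
  have h1 : ∀ t, σ t * coord t z = |coord t z| := by
    intro t
    by_cases h : 0 ≤ coord t z
    · simp [hσdef, h, abs_of_nonneg]
    · simp only [hσdef, h, if_false, neg_one_mul]
      rw [abs_of_neg (lt_of_not_ge h)]
  calc ∑ t ∈ A, |coord t z| = ∑ t ∈ A, σ t * coord t z := by simp [h1]
    _ ≤ |∑ t ∈ A, σ t * coord t z| := le_abs_self _
    _ ≤ ‖z‖ := abs_chainFunc_le hnorm hdense hcoord hA σ
        (fun t => by by_cases h : 0 ≤ coord t z <;> simp [hσdef, h]) z

lemma coord_abs_le_norm (hnorm : ∀ c : TreeNode →₀ ℝ, ‖c.sum fun t a => a • e t‖ = treeNorm c)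
    (hdense : DenseRange fun c : TreeNode →₀ ℝ => c.sum fun t a => a • e t)
    (hcoord : ∀ s t, coord s (e t) = if s = t then 1 else 0)
    (t : TreeNode) (z : X) : |coord t z| ≤ ‖z‖ := by
  have := chainSum_le_norm hnorm hdense hcoord
    (A := {t}) (fun s hs u hu => by simp_all) z
  simpa using this

lemma norm_le_of_chainSum (hnorm : ∀ c : TreeNode →₀ ℝ, ‖c.sum fun t a => a • e t‖ = treeNorm c)
    (hdense : DenseRange fun c : TreeNode →₀ ℝ => c.sum fun t a => a • e t)
    (hcoord : ∀ s t, coord s (e t) = if s = t then 1 else 0)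
    {z : X} {r : ℝ}
    (h : ∀ A : Finset TreeNode, IsFinChain A → ∑ t ∈ A, |coord t z| ≤ r) : ‖z‖ ≤ r := by
  refine le_of_forall_pos_le_add fun η hη => ?_
  obtain ⟨c, hc⟩ := (hdense_lc hdense).exists_dist_lt z (half_pos hη)
  rw [dist_eq_norm] at hc
  have h1 : treeNorm c ≤ r + η / 2 := by
    refine treeNorm_le fun A hA => ?_
    calc ∑ t ∈ A, |c t|
        ≤ ∑ t ∈ A, (|coord t z| + |coord t (Finsupp.linearCombination ℝ e c - z)|) := by
          refine Finset.sum_le_sum fun t _ => ?_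
          rw [← coord_lc (coord := coord) hcoord c t]
          have e1 : coord t (Finsupp.linearCombination ℝ e c)
              = coord t z + coord t (Finsupp.linearCombination ℝ e c - z) := by
            rw [map_sub]; ring
          rw [e1]; exact abs_add_le _ _
      _ = ∑ t ∈ A, |coord t z| + ∑ t ∈ A, |coord t (Finsupp.linearCombination ℝ e c - z)| :=
          Finset.sum_add_distrib
      _ ≤ r + η / 2 := by
          have h2 : ∑ t ∈ A, |coord t (Finsupp.linearCombination ℝ e c - z)| ≤ η / 2 :=
            le_of_lt (lt_of_le_of_lt (chainSum_le_norm hnorm hdense hcoord hA _)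
              (by rwa [norm_sub_rev]))
          exact add_le_add (h A hA) h2
  calc ‖z‖ ≤ ‖Finsupp.linearCombination ℝ e c‖ + ‖z - Finsupp.linearCombination ℝ e c‖ := by
        rw [show z = Finsupp.linearCombination ℝ e c + (z - Finsupp.linearCombination ℝ e c)
          from by abel]
        exact (norm_add_le _ _).trans (by rw [show Finsupp.linearCombination ℝ e c
          + (z - Finsupp.linearCombination ℝ e c) - Finsupp.linearCombination ℝ e c
          = z - Finsupp.linearCombination ℝ e c from by abel])
    _ ≤ (r + η / 2) + η / 2 := add_le_add (by rw [hnorm_lc hnorm]; exact h1) hc.le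
    _ = r + η := by ring


lemma norm_e (hnorm : ∀ c : TreeNode →₀ ℝ, ‖c.sum fun t a => a • e t‖ = treeNorm c)
    (t : TreeNode) : ‖e t‖ = 1 := by
  have h1 : e t = Finsupp.linearCombination ℝ e (Finsupp.single t 1) := by
    rw [Finsupp.linearCombination_single, one_smul]
  rw [h1, Finsupp.linearCombination_apply, hnorm]
  apply le_antisymm
  · refine treeNorm_le fun A hA => ?_
    have : ∀ u ∈ A, |Finsupp.single t (1:ℝ) u| = if t = u then 1 else 0 := by
      intro u _
      rw [Finsupp.single_apply]
      split <;> simp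
    rw [Finset.sum_congr rfl this, Finset.sum_ite_eq]
    split <;> norm_num
  · have := chainSum_le_treeNorm (Finsupp.single t (1:ℝ))
      (A := {t}) (fun s hs u hu => by simp_all)
    simpa using this

lemma norm_antichain_comb
    (hnorm : ∀ c : TreeNode →₀ ℝ, ‖c.sum fun t a => a • e t‖ = treeNorm c)
    {m : ℕ} (s : Fin m → TreeNode)
    (hanti : ∀ i j, i ≠ j → ¬ s i <+: s j) (σ : Fin m → ℝ) (hσ : ∀ i, |σ i| ≤ 1) :
    ‖∑ i : Fin m, σ i • e (s i)‖ ≤ 1 := by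
  classical
  have hinj : Function.Injective s := by
    intro i j hij
    by_contra h
    exact hanti i j h (hij ▸ List.prefix_refl _)
  set c : TreeNode →₀ ℝ := ∑ i : Fin m, Finsupp.single (s i) (σ i) with hc
  have h1 : ∑ i : Fin m, σ i • e (s i) = Finsupp.linearCombination ℝ e c := by
    rw [hc, map_sum]
    exact Finset.sum_congr rfl fun i _ => by rw [Finsupp.linearCombination_single]
  have hcval : ∀ j, c (s j) = σ j := by
    intro j
    rw [hc, Finset.sum_apply']
    simp only [Finsupp.single_apply]
    rw [Finset.sum_eq_single j (fun i _ hij => if_neg (fun h => hij (hinj h)))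
      (fun h => absurd (Finset.mem_univ j) h)]
    rw [if_pos rfl]
  have hczero : ∀ t, (¬ ∃ i, s i = t) → c t = 0 := by
    intro t ht
    rw [hc, Finset.sum_apply']
    refine Finset.sum_eq_zero fun i _ => ?_
    rw [Finsupp.single_apply, if_neg (fun h => ht ⟨i, h⟩)]
  rw [h1, Finsupp.linearCombination_apply, hnorm]
  refine treeNorm_le fun A hA => ?_
  by_cases hex : ∃ i, s i ∈ A
  · obtain ⟨i0, hi0⟩ := hex
    have hz : ∀ t ∈ A, t ≠ s i0 → |c t| = 0 := by
      intro t htA hne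
      rw [abs_eq_zero]
      by_cases hrange : ∃ i, s i = t
      · obtain ⟨i, rfl⟩ := hrange
        have hii : i ≠ i0 := fun h => hne (by rw [h])
        rcases hA _ htA _ hi0 with h | h
        · exact absurd h (hanti i i0 hii)
        · exact absurd h (hanti i0 i (Ne.symm hii))
      · exact hczero t hrange
    calc ∑ t ∈ A, |c t| = ∑ t ∈ A, if t = s i0 then |c (s i0)| else 0 := by
          refine Finset.sum_congr rfl fun t htA => ?_
          by_cases h : t = s i0
          · rw [if_pos h, h]
          · rw [if_neg h, hz t htA h]
      _ ≤ 1 := by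
          rw [Finset.sum_ite_eq' A (s i0) (fun _ => |c (s i0)|)]
          rw [if_pos hi0, hcval]
          exact hσ i0
  · push_neg at hex
    have : ∀ t ∈ A, |c t| = 0 := fun t htA => by
      rw [abs_eq_zero]; exact hczero t (fun ⟨i, h⟩ => hex i (h ▸ htA))
    rw [Finset.sum_congr rfl this]
    simp

/-- The standard antichain below `t*`. -/
def anti (tstar : TreeNode) (j : ℕ) : TreeNode := tstar ++ List.replicate j false ++ [true]

lemma anti_incomp (tstar : TreeNode) {i j : ℕ} (hij : i ≠ j) :
    ¬ anti tstar i <+: anti tstar j := by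
  intro h
  rcases Nat.lt_or_ge i j with hlt | hge
  · have hilen : tstar.length + i < (anti tstar i).length := by simp [anti]
    have h1 : (anti tstar i)[tstar.length + i]'hilen = true := by
      simp [anti, List.getElem_append]
    have h2 : (anti tstar j)[tstar.length + i]'(hilen.trans_le h.length_le) = false := by
      simp [anti, List.getElem_append, hlt]
    rw [h.getElem hilen] at h1
    rw [h1] at h2
    simp at h2
  · have : i = j := by
      have := h.length_le
      simp [anti] at this
      omega
    exact hij this


end Space

lemma finsum_subset_le_tsum {β : Set TreeNode} (g : TreeNode → ℝ) (hg : ∀ t, 0 ≤ g t)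
    (hsum : Summable (fun t : ↑β => g ↑t)) (A : Finset TreeNode) (hA : ∀ t ∈ A, t ∈ β) :
    ∑ t ∈ A, g t ≤ ∑' t : ↑β, g ↑t := by
  classical
  let emb : {t // t ∈ A} ↪ ↑β :=
    ⟨fun t => ⟨t.1, hA t.1 t.2⟩, by
      intro s t hst
      have h := Subtype.ext_iff.mp hst
      exact Subtype.ext h⟩
  have h1 : ∑ t ∈ A, g t = ∑ s ∈ A.attach.map emb, g ↑s := by
    rw [Finset.sum_map, ← Finset.sum_attach A g]
    exact Finset.sum_congr rfl fun t _ => rfl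
  rw [h1]
  exact Summable.sum_le_tsum _ (fun t _ => hg ↑t) hsum

section Fwd
variable {X : Type*} [NormedAddCommGroup X] [NormedSpace ℝ X]
  {e : TreeNode → X} {coord : TreeNode → X →L[ℝ] ℝ}

lemma forward_dir
    (hnorm : ∀ c : TreeNode →₀ ℝ, ‖c.sum fun t a => a • e t‖ = treeNorm c)
    (hdense : DenseRange fun c : TreeNode →₀ ℝ => c.sum fun t a => a • e t)
    (hcoord : ∀ s t, coord s (e t) = if s = t then 1 else 0)
    (x : X) (hx : ‖x‖ = 1)
    (hpc : PointOfContinuity (closedBall (0 : X) 1) x)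
    (β : Set TreeNode) (hβ : IsBranch β) : ∑' t : β, |coord (↑t) x| = 1 := by
  classical
  -- partial sums bounded by 1
  have hbound : ∀ u : Finset ↑β, ∑ t ∈ u, |coord (↑t) x| ≤ 1 := by
    intro u
    have himg : IsFinChain (u.image Subtype.val) := by
      intro s hs t ht
      simp only [Finset.mem_image] at hs ht
      obtain ⟨s', _, rfl⟩ := hs
      obtain ⟨t', _, rfl⟩ := ht
      exact hβ.1 _ s'.2 _ t'.2
    have := chainSum_le_norm hnorm hdense hcoord himg x
    rw [Finset.sum_image (fun s _ t _ h => Subtype.val_injective h)] at this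
    rw [hx] at this
    exact this
  have hsumm : Summable (fun t : ↑β => |coord (↑t) x|) :=
    summable_of_sum_le (fun t => abs_nonneg _) hbound
  have ha1 : ∑' t : ↑β, |coord (↑t) x| ≤ 1 := Summable.tsum_le_of_sum_le hsumm hbound
  by_contra hne
  set a : ℝ := ∑' t : ↑β, |coord (↑t) x| with hadef
  have halt : a < 1 := lt_of_le_of_ne ha1 hne
  set δ : ℝ := (1 - a) / 8 with hδdef
  have hδpos : 0 < δ := by rw [hδdef]; linarith
  set lam : ℝ := 1 - a - δ with hlamdef
  have hlampos : 0 < lam := by rw [hlamdef, hδdef]; linarith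
  -- the point of continuity gives a small relatively weakly open set
  obtain ⟨V, ⟨U, hU, rfl⟩, ⟨hxB, hxU⟩, hdiam⟩ := hpc.2 ((1 - a) / 4) (by linarith)
  obtain ⟨F, ε', hε', himp⟩ := weak_nbhd U hU x hxU
  -- finitely supported approximation
  obtain ⟨c, hc⟩ := (hdense_lc hdense).exists_dist_lt x hδpos
  rw [dist_eq_norm] at hc
  set N : ℕ := 1 + c.support.sup List.length with hNdef
  have hcN : ∀ t : TreeNode, N ≤ t.length → c t = 0 := by
    intro t ht
    by_contra h
    have := Finset.le_sup (f := List.length) (Finsupp.mem_support_iff.mpr h)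
    omega
  obtain ⟨tstar, htstarβ, htstarlen⟩ := branch_exists_length hβ N
  -- choose the number of antichain candidates
  obtain ⟨M, hM⟩ := exists_nat_gt ((∑ f ∈ F, ‖f‖) * lam / ε')
  have hMpos : 0 < M := by
    have h0 : (0:ℝ) ≤ (∑ f ∈ F, ‖f‖) * lam / ε' := by
      apply div_nonneg _ hε'.le
      exact mul_nonneg (Finset.sum_nonneg fun f _ => norm_nonneg f) hlampos.le
    exact_mod_cast h0.trans_lt hM
  -- the antichain averaging: some candidate is small on all functionals of F
  have hcand : ∃ j : Fin M, ∑ f ∈ F, |f (e (anti tstar j))| < ε' / lam := by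
    by_contra h
    push_neg at h
    have hlow : (M : ℝ) * (ε' / lam) ≤ ∑ j : Fin M, ∑ f ∈ F, |f (e (anti tstar j))| := by
      calc (M : ℝ) * (ε' / lam) = ∑ _j : Fin M, (ε' / lam) := by
            rw [Finset.sum_const, Finset.card_univ, Fintype.card_fin, nsmul_eq_mul]
        _ ≤ _ := Finset.sum_le_sum fun j _ => h j
    have hhigh : ∑ j : Fin M, ∑ f ∈ F, |f (e (anti tstar j))| ≤ ∑ f ∈ F, ‖f‖ := by
      rw [Finset.sum_comm]
      refine Finset.sum_le_sum fun f _ => ?_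
      set σ : Fin M → ℝ := fun j => if 0 ≤ f (e (anti tstar j)) then 1 else -1 with hσdef
      have hterm : ∀ j : Fin M, σ j * f (e (anti tstar j)) = |f (e (anti tstar j))| := by
        intro j
        by_cases hj : 0 ≤ f (e (anti tstar j))
        · simp [hσdef, hj, abs_of_nonneg]
        · simp only [hσdef, hj, if_false, neg_one_mul]
          rw [abs_of_neg (lt_of_not_ge hj)]
      calc ∑ j : Fin M, |f (e (anti tstar j))|
          = f (∑ j : Fin M, σ j • e (anti tstar j)) := by
            rw [map_sum]
            exact Finset.sum_congr rfl fun j _ => by rw [map_smul, smul_eq_mul, hterm j]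
        _ ≤ |f (∑ j : Fin M, σ j • e (anti tstar j))| := le_abs_self _
        _ ≤ ‖f‖ * ‖∑ j : Fin M, σ j • e (anti tstar j)‖ := f.le_opNorm _
        _ ≤ ‖f‖ * 1 := by
            refine mul_le_mul_of_nonneg_left ?_ (norm_nonneg f)
            refine norm_antichain_comb hnorm _ ?_ σ ?_
            · intro i j hij
              exact anti_incomp tstar (fun h => hij (Fin.val_injective h))
            · intro j; by_cases hj : 0 ≤ f (e (anti tstar j)) <;> simp [hσdef, hj]
        _ = ‖f‖ := mul_one _
    have hMS : (M:ℝ) * (ε'/lam) ≤ ∑ f ∈ F, ‖f‖ := hlow.trans hhigh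
    have h3 : (M:ℝ) * ε' ≤ (∑ f ∈ F, ‖f‖) * lam := by
      calc (M:ℝ) * ε' = ((M:ℝ) * (ε'/lam)) * lam := by field_simp
        _ ≤ (∑ f ∈ F, ‖f‖) * lam := mul_le_mul_of_nonneg_right hMS hlampos.le
    have h4 : (M:ℝ) ≤ (∑ f ∈ F, ‖f‖) * lam / ε' := (le_div_iff₀ hε').mpr h3
    linarith
  obtain ⟨j0, hj0⟩ := hcand
  set s0 : TreeNode := anti tstar j0 with hs0def
  set y : X := x + lam • e s0 with hydef
  -- y is close to x in the weak neighborhood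
  have hyU : (y : WeakSpace ℝ X) ∈ U := by
    apply himp
    intro f hf
    have h1 : f y - f x = lam * f (e s0) := by rw [hydef]; simp [mul_comm]
    rw [h1, abs_mul, abs_of_pos hlampos]
    have h2 : |f (e s0)| ≤ ∑ g ∈ F, |g (e s0)| :=
      Finset.single_le_sum (f := fun g => |g (e s0)|) (fun g _ => abs_nonneg _) hf
    calc lam * |f (e s0)| ≤ lam * (∑ g ∈ F, |g (e s0)|) :=
          mul_le_mul_of_nonneg_left h2 hlampos.le
      _ < lam * (ε' / lam) := by
          exact mul_lt_mul_of_pos_left hj0 hlampos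
      _ = ε' := by field_simp
  -- y is in the unit ball
  have hs0_not_pre : ¬ s0 <+: tstar := by
    intro h
    have := h.length_le
    simp [hs0def, anti, htstarlen] at this
  have htstar_pre_s0 : tstar <+: s0 := by
    rw [hs0def]
    show tstar <+: tstar ++ List.replicate (j0:ℕ) false ++ [true]
    rw [List.append_assoc]
    exact List.prefix_append _ _
  have hyball : ‖y‖ ≤ 1 := by
    refine norm_le_of_chainSum hnorm hdense hcoord fun A hA => ?_
    have hcoordy : ∀ t, coord t y = coord t x + (if t = s0 then lam else 0) := by
      intro t
      rw [hydef, map_add, map_smul, hcoord, smul_eq_mul]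
      split <;> ring
    by_cases hs0A : s0 ∈ A
    · -- split the chain at tstar
      rw [← Finset.sum_filter_add_sum_filter_not A (· <+: tstar)]
      have hlow : ∑ t ∈ A.filter (· <+: tstar), |coord t y| ≤ a := by
        have hsub : ∀ t ∈ A.filter (· <+: tstar), t ∈ β := by
          intro t ht
          rw [Finset.mem_filter] at ht
          exact branch_mem_of_prefix hβ htstarβ ht.2
        have heq : ∀ t ∈ A.filter (· <+: tstar), |coord t y| = |coord t x| := by
          intro t ht
          rw [Finset.mem_filter] at ht
          rw [hcoordy, if_neg (fun h => hs0_not_pre (by rw [← h]; exact ht.2)), add_zero]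
        rw [Finset.sum_congr rfl heq]
        exact finsum_subset_le_tsum _ (fun t => abs_nonneg _) hsumm _ hsub
      have hhigh : ∑ t ∈ A.filter (¬ · <+: tstar), |coord t y| ≤ δ + lam := by
        have hext : ∀ t ∈ A.filter (¬ · <+: tstar), tstar <+: t := by
          intro t ht
          rw [Finset.mem_filter] at ht
          rcases hA t ht.1 s0 hs0A with h | h
          · rcases List.prefix_or_prefix_of_prefix h htstar_pre_s0 with h2 | h2
            · exact absurd h2 ht.2
            · exact h2
          · exact (htstar_pre_s0.trans h)
        have hczero : ∀ t ∈ A.filter (¬ · <+: tstar), c t = 0 := by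
          intro t ht
          refine hcN t ?_
          have := (hext t ht).length_le
          omega
        have hterm : ∀ t ∈ A.filter (¬ · <+: tstar),
            |coord t y| ≤ |coord t (x - Finsupp.linearCombination ℝ e c)| +
              (if t = s0 then lam else 0) := by
          intro t ht
          have hcx : coord t (x - Finsupp.linearCombination ℝ e c) = coord t x := by
            rw [map_sub, coord_lc hcoord, hczero t ht, sub_zero]
          rw [hcoordy, hcx]
          split
          · exact (abs_add_le _ _).trans (by rw [abs_of_pos hlampos])
          · rw [add_zero, add_zero]
        calc ∑ t ∈ A.filter (¬ · <+: tstar), |coord t y|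
            ≤ ∑ t ∈ A.filter (¬ · <+: tstar),
                (|coord t (x - Finsupp.linearCombination ℝ e c)| +
                  (if t = s0 then lam else 0)) := Finset.sum_le_sum hterm
          _ = ∑ t ∈ A.filter (¬ · <+: tstar),
                |coord t (x - Finsupp.linearCombination ℝ e c)| +
              ∑ t ∈ A.filter (¬ · <+: tstar), (if t = s0 then lam else 0) :=
              Finset.sum_add_distrib
          _ ≤ δ + lam := by
              refine add_le_add ?_ ?_
              · refine le_of_lt (lt_of_le_of_lt ?_ hc)
                exact chainSum_le_norm hnorm hdense hcoord
                  (fun s hs t ht => hA s (Finset.mem_filter.mp hs).1 t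
                    (Finset.mem_filter.mp ht).1) _
              · rw [Finset.sum_ite_eq' _ s0 (fun _ => lam)]
                rw [if_pos (Finset.mem_filter.mpr ⟨hs0A, hs0_not_pre⟩)]
      linarith
    · -- s0 not in the chain: y agrees with x on it
      have heq : ∀ t ∈ A, |coord t y| = |coord t x| := by
        intro t ht
        rw [hcoordy, if_neg (fun h => hs0A (by rw [← h]; exact ht)), add_zero]
      rw [Finset.sum_congr rfl heq]
      have := chainSum_le_norm hnorm hdense hcoord hA x
      rw [hx] at this
      exact this
  -- contradiction with the small diameter
  have hyB : y ∈ closedBall (0 : X) 1 := by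
    rw [mem_closedBall_zero_iff]; exact hyball
  have hyV : y ∈ closedBall (0 : X) 1 ∩ U := ⟨hyB, hyU⟩
  have hdist : dist x y = lam := by
    rw [dist_eq_norm, hydef]
    rw [show x - (x + lam • e s0) = -(lam • e s0) from by abel]
    rw [norm_neg, norm_smul, norm_e hnorm, Real.norm_eq_abs, abs_of_pos hlampos, mul_one]
  have hbdd : Bornology.IsBounded (closedBall (0 : X) 1 ∩ U) :=
    (isBounded_closedBall).subset Set.inter_subset_left
  have := Metric.dist_le_diam_of_mem hbdd ⟨hxB, hxU⟩ hyV
  rw [hdist] at this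
  have : lam ≤ (1 - a) / 4 := this.trans hdiam
  rw [hlamdef, hδdef] at this
  linarith

end Fwd

section Space2
variable {X : Type*} [NormedAddCommGroup X] [NormedSpace ℝ X]
  {e : TreeNode → X} {coord : TreeNode → X →L[ℝ] ℝ}

lemma mem_ofFn_image (u : List Bool) (n : ℕ) (hu : u.length = n) :
    u ∈ (Finset.univ : Finset (Fin n → Bool)).image (fun v => List.ofFn v) := by
  subst hu
  exact Finset.mem_image.mpr ⟨u.get, Finset.mem_univ _, List.ofFn_get u⟩

lemma backward_dir
    (hnorm : ∀ c : TreeNode →₀ ℝ, ‖c.sum fun t a => a • e t‖ = treeNorm c)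
    (hdense : DenseRange fun c : TreeNode →₀ ℝ => c.sum fun t a => a • e t)
    (hcoord : ∀ s t, coord s (e t) = if s = t then 1 else 0)
    (x : X) (hx : ‖x‖ = 1)
    (hβall : ∀ β : Set TreeNode, IsBranch β → ∑' t : β, |coord (↑t) x| = 1) :
    PointOfContinuity (closedBall (0 : X) 1) x := by
  classical
  refine ⟨by rw [mem_closedBall_zero_iff]; exact hx.le, fun ε hε => ?_⟩
  set δ : ℝ := min (ε / 6) (1/2) with hδdef
  have hδpos : 0 < δ := lt_min (by positivity) (by norm_num)
  have hδle : δ ≤ 1/2 := min_le_right _ _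
  have hδε : δ ≤ ε / 6 := min_le_left _ _
  set g : TreeNode → ℝ := fun u => ∑ k ∈ Finset.range (u.length + 1), |coord (u.take k) x|
    with hgdef
  set S : Set TreeNode := {u | g u ≤ 1 - δ} with hSdef
  -- prefix sums are monotone, so S is downward closed
  have hgmono : ∀ p u : TreeNode, p <+: u → g p ≤ g u := by
    intro p u hpu
    have htake : ∀ k, k ≤ p.length → p.take k = u.take k := by
      intro k hk
      have hp : p = u.take p.length := List.prefix_iff_eq_take.mp hpu
      rw [hp, List.take_take, min_eq_left hk]
    have h1 : g p = ∑ k ∈ Finset.range (p.length + 1), |coord (u.take k) x| := by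
      refine Finset.sum_congr rfl fun k hk => ?_
      rw [Finset.mem_range] at hk
      rw [htake k (by omega)]
    rw [h1]
    refine Finset.sum_le_sum_of_subset_of_nonneg ?_ (fun k _ _ => abs_nonneg _)
    exact Finset.range_subset_range.mpr (by have := hpu.length_le; omega)
  have hSdc : ∀ u ∈ S, ∀ p : TreeNode, p <+: u → p ∈ S := by
    intro u hu p hpu
    exact le_trans (hgmono p u hpu) hu
  -- S is finite, else König's lemma produces a branch of mass ≤ 1 - δ
  have hSfin : S.Finite := by
    by_contra hinf
    obtain ⟨p, hplen, hppre, hpS⟩ := exists_path_of_infinite hSdc hinf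
    set β : Set TreeNode := Set.range p with hβdef
    have hβ : IsBranch β := isBranch_range hplen hppre
    have hmono : ∀ m n, m ≤ n → p m <+: p n := by
      intro m n h
      induction n with
      | zero => rw [Nat.le_zero.mp h]
      | succ k ih =>
        rcases Nat.lt_or_ge m (k+1) with h' | h'
        · exact (ih (Nat.lt_succ_iff.mp h')).trans (hppre k)
        · rw [le_antisymm h h']
    have hbound : ∀ u : Finset ↑β, ∑ t ∈ u, |coord (↑t) x| ≤ 1 - δ := by
      intro u
      rcases u.eq_empty_or_nonempty with rfl | hne
      · simp only [Finset.sum_empty]; linarith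
      · -- all elements are p k for k ≤ n, with n the max length
        set n : ℕ := u.sup (fun t => (↑t : TreeNode).length) with hndef
        have hsub : (u.image Subtype.val) ⊆ (Finset.range (n+1)).image ((p n).take) := by
          intro t ht
          rw [Finset.mem_image] at ht
          obtain ⟨t', ht', rfl⟩ := ht
          obtain ⟨k, hk⟩ := t'.2
          have hkn : k ≤ n := by
            have h0 := Finset.le_sup (f := fun t : ↑β => (↑t : TreeNode).length) ht'
            have h2 : (p k).length ≤ n := by rw [hk]; exact h0
            rwa [hplen k] at h2
          rw [Finset.mem_image]
          refine ⟨k, Finset.mem_range.mpr (by omega), ?_⟩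
          have : p k = (p n).take k := by
            have h1 := List.prefix_iff_eq_take.mp (hmono k n hkn)
            rwa [hplen k] at h1
          rw [← this, hk]
        calc ∑ t ∈ u, |coord (↑t) x|
            = ∑ t ∈ u.image Subtype.val, |coord t x| := by
              rw [Finset.sum_image (fun s _ t _ h => Subtype.val_injective h)]
          _ ≤ ∑ t ∈ (Finset.range (n+1)).image ((p n).take), |coord t x| :=
              Finset.sum_le_sum_of_subset_of_nonneg hsub (fun t _ _ => abs_nonneg _)
          _ = ∑ k ∈ Finset.range (n+1), |coord ((p n).take k) x| := by
              refine Finset.sum_image fun i hi j hj hij => ?_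
              rw [Finset.mem_coe, Finset.mem_range] at hi hj
              have : ((p n).take i).length = ((p n).take j).length := by rw [hij]
              rw [List.length_take, List.length_take, hplen n] at this
              omega
          _ = g (p n) := by rw [hgdef]; simp only [hplen n]
          _ ≤ 1 - δ := hpS n
    have hsumm : Summable (fun t : ↑β => |coord (↑t) x|) :=
      summable_of_sum_le (fun t => abs_nonneg _) hbound
    have := Summable.tsum_le_of_sum_le hsumm hbound
    rw [hβall β hβ] at this
    linarith
  -- the cut-off level N
  set N : ℕ := hSfin.toFinset.sup List.length + 1 with hNdef
  have hNS : ∀ u : TreeNode, u.length = N → 1 - δ < g u := by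
    intro u hu
    by_contra h
    push_neg at h
    have huS : u ∈ S := h
    have := Finset.le_sup (f := List.length) (hSfin.mem_toFinset.mpr huS)
    omega
  -- sign pattern and branch functionals
  set sgn : TreeNode → ℝ := fun t => if 0 ≤ coord t x then 1 else -1 with hsgndef
  have hsgnmul : ∀ t : TreeNode, sgn t * coord t x = |coord t x| := by
    intro t
    by_cases h : 0 ≤ coord t x
    · simp [hsgndef, h, abs_of_nonneg]
    · simp only [hsgndef, h, if_false, neg_one_mul]
      rw [abs_of_neg (lt_of_not_ge h)]
  set fu : TreeNode → X →L[ℝ] ℝ :=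
    fun u => ∑ k ∈ Finset.range (N+1), sgn (u.take k) • coord (u.take k) with hfudef
  have hfuapp : ∀ u (z : X), fu u z = ∑ k ∈ Finset.range (N+1), sgn (u.take k) *
      coord (u.take k) z := by
    intro u z
    rw [hfudef]
    simp [ContinuousLinearMap.sum_apply]
  have hfux : ∀ u : TreeNode, u.length = N → fu u x = g u := by
    intro u hu
    rw [hfuapp, hgdef]
    simp only [hu]
    exact Finset.sum_congr rfl fun k _ => hsgnmul _
  have hfu_le : ∀ u (z : X), fu u z ≤ ∑ k ∈ Finset.range (N+1), |coord (u.take k) z| := by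
    intro u z
    rw [hfuapp]
    refine Finset.sum_le_sum fun k _ => ?_
    calc sgn (u.take k) * coord (u.take k) z ≤ |sgn (u.take k) * coord (u.take k) z| :=
          le_abs_self _
      _ = |coord (u.take k) z| := by
          rw [abs_mul, show |sgn (u.take k)| = 1 from by
            by_cases h : 0 ≤ coord (u.take k) x <;> simp [hsgndef, h], one_mul]
  -- the finsets of nodes of length N and of length ≤ N
  set LN : Finset TreeNode := (Finset.univ : Finset (Fin N → Bool)).image
    (fun v => List.ofFn v) with hLNdef
  have hLNmem : ∀ u : TreeNode, u.length = N → u ∈ LN := by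
    intro u hu
    rw [hLNdef]
    exact mem_ofFn_image u N hu
  have hLNlen : ∀ u ∈ LN, u.length = N := by
    intro u hu
    rw [hLNdef, Finset.mem_image] at hu
    obtain ⟨v, _, rfl⟩ := hu
    exact List.length_ofFn
  set SH : Finset TreeNode := (Finset.range (N+1)).biUnion
    (fun n => (Finset.univ : Finset (Fin n → Bool)).image (fun v => List.ofFn v)) with hSHdef
  have hSHmem : ∀ t : TreeNode, t.length ≤ N → t ∈ SH := by
    intro t ht
    rw [hSHdef, Finset.mem_biUnion]
    exact ⟨t.length, Finset.mem_range.mpr (by omega), mem_ofFn_image t t.length rfl⟩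
  set η : ℝ := δ / (N + 1) with hηdef
  have hηpos : 0 < η := by positivity
  -- the weakly open set
  set U : Set (WeakSpace ℝ X) :=
    (⋂ u ∈ LN, (fun y : WeakSpace ℝ X => fu u y) ⁻¹' Set.Ioi (1 - δ)) ∩
    (⋂ t ∈ SH, (fun y : WeakSpace ℝ X => coord t y) ⁻¹' Metric.ball (coord t x) η)
    with hUdef
  have hUopen : IsOpen U := by
    refine IsOpen.inter ?_ ?_
    · refine isOpen_biInter_finset fun u _ => ?_
      exact (WeakBilin.eval_continuous _ (fu u)).isOpen_preimage _ isOpen_Ioi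
    · refine isOpen_biInter_finset fun t _ => ?_
      exact (WeakBilin.eval_continuous _ (coord t)).isOpen_preimage _ isOpen_ball
  have hUmem : ∀ y : X, (y : WeakSpace ℝ X) ∈ U ↔
      (∀ u ∈ LN, 1 - δ < fu u y) ∧ (∀ t ∈ SH, |coord t y - coord t x| < η) := by
    intro y
    change @Membership.mem (WeakSpace ℝ X) _ _ U y ↔ _
    erw [hUdef, Set.mem_inter_iff]
    erw [Set.mem_iInter₂, Set.mem_iInter₂]
    exact Iff.rfl
  have hxU : (x : WeakSpace ℝ X) ∈ U := by
    rw [hUmem]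
    constructor
    · intro u hu
      rw [hfux u (hLNlen u hu)]
      exact hNS u (hLNlen u hu)
    · intro t _
      simpa using hηpos
  -- every element of the slice is within 3δ of x
  have hclose : ∀ y : X, y ∈ closedBall (0 : X) 1 → (y : WeakSpace ℝ X) ∈ U →
      ‖y - x‖ ≤ 3 * δ := by
    intro y hyB hyU
    rw [hUmem] at hyU
    rw [mem_closedBall_zero_iff] at hyB
    refine norm_le_of_chainSum hnorm hdense hcoord fun A hA => ?_
    rw [← Finset.sum_filter_add_sum_filter_not A (fun t => t.length ≤ N)]
    have hshallow : ∑ t ∈ A.filter (fun t => t.length ≤ N), |coord t (y - x)| ≤ δ := by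
      have hcard : (A.filter (fun t => t.length ≤ N)).card ≤ N + 1 := by
        have hinj : Set.InjOn List.length
            (↑(A.filter (fun t => t.length ≤ N)) : Set TreeNode) := by
          intro s hs t ht hst
          rw [Finset.mem_coe, Finset.mem_filter] at hs ht
          rcases hA s hs.1 t ht.1 with h | h
          · exact h.eq_of_length hst
          · exact (h.eq_of_length hst.symm).symm
        have hmaps : ∀ t ∈ A.filter (fun t => t.length ≤ N),
            List.length t ∈ Finset.range (N+1) := by
          intro t ht
          rw [Finset.mem_filter] at ht
          rw [Finset.mem_range]
          omega
        calc (A.filter (fun t => t.length ≤ N)).card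
            ≤ (Finset.range (N+1)).card := Finset.card_le_card_of_injOn _ hmaps hinj
          _ = N + 1 := Finset.card_range _
      have hterm : ∀ t ∈ A.filter (fun t => t.length ≤ N), |coord t (y - x)| ≤ η := by
        intro t ht
        rw [Finset.mem_filter] at ht
        have := hyU.2 t (hSHmem t ht.2)
        rw [map_sub]
        exact this.le
      calc ∑ t ∈ A.filter (fun t => t.length ≤ N), |coord t (y - x)|
          ≤ (A.filter (fun t => t.length ≤ N)).card • η := Finset.sum_le_card_nsmul _ _ _ hterm
        _ = ((A.filter (fun t => t.length ≤ N)).card : ℝ) * η := nsmul_eq_mul _ _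
        _ ≤ (N + 1 : ℝ) * η := by
            refine mul_le_mul_of_nonneg_right ?_ hηpos.le
            exact_mod_cast hcard
        _ = δ := by rw [hηdef]; field_simp
    have hdeep : ∑ t ∈ A.filter (fun t => ¬ t.length ≤ N), |coord t (y - x)| ≤ 2 * δ := by
      set D : Finset TreeNode := A.filter (fun t => ¬ t.length ≤ N) with hDdef
      rcases D.eq_empty_or_nonempty with hD | hD
      · rw [hD]; simp; linarith
      obtain ⟨t0, ht0D, ht0min⟩ := Finset.exists_min_image D List.length hD
      have ht0len : N < t0.length := by
        have := (Finset.mem_filter.mp ht0D).2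
        omega
      set u : TreeNode := t0.take N with hudef
      have hulen : u.length = N := by rw [hudef, List.length_take]; omega
      have huLN : u ∈ LN := hLNmem u hulen
      have hDt : ∀ t ∈ D, u <+: t := by
        intro t htD
        have htA := (Finset.mem_filter.mp htD).1
        have ht0A := (Finset.mem_filter.mp ht0D).1
        have h1 : t0 <+: t := by
          rcases hA t0 ht0A t htA with h | h
          · exact h
          · rw [h.eq_of_length (le_antisymm h.length_le (ht0min t htD))]
        exact (List.take_prefix N t0).trans h1
      -- the chain of prefixes of u together with D
      set P : Finset TreeNode := (Finset.range (N+1)).image u.take with hPdef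
      have hPinj : ∀ i ∈ Finset.range (N+1), ∀ j ∈ Finset.range (N+1),
          u.take i = u.take j → i = j := by
        intro i hi j hj hij
        rw [Finset.mem_range] at hi hj
        have hlen2 : (u.take i).length = (u.take j).length := by rw [hij]
        simp only [List.length_take, hulen] at hlen2
        omega
      have hPD : Disjoint P D := by
        rw [Finset.disjoint_left]
        intro t htP htD
        rw [hPdef, Finset.mem_image] at htP
        obtain ⟨k, hk, rfl⟩ := htP
        have h1 : (u.take k).length ≤ N := by
          rw [List.length_take, hulen]
          rw [Finset.mem_range] at hk
          omega
        have := (Finset.mem_filter.mp htD).2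
        omega
      have hPDchain : IsFinChain (P ∪ D) := by
        intro s hs t ht
        rw [Finset.mem_union] at hs ht
        have hmem : ∀ w, w ∈ P → w <+: u := by
          intro w hw
          rw [hPdef, Finset.mem_image] at hw
          obtain ⟨k, _, rfl⟩ := hw
          exact List.take_prefix k u
        rcases hs with hs | hs <;> rcases ht with ht | ht
        · rcases List.prefix_or_prefix_of_prefix (hmem s hs) (hmem t ht) with h | h
          · exact Or.inl h
          · exact Or.inr h
        · exact Or.inl ((hmem s hs).trans (hDt t ht))
        · exact Or.inr ((hmem t ht).trans (hDt s hs))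
        · exact hA s (Finset.mem_filter.mp hs).1 t (Finset.mem_filter.mp ht).1
      have hPsum : ∀ z : X, ∑ t ∈ P, |coord t z| = ∑ k ∈ Finset.range (N+1),
          |coord (u.take k) z| := by
        intro z
        rw [hPdef]
        exact Finset.sum_image hPinj
      have hkey : ∀ z : X, ‖z‖ ≤ 1 → 1 - δ < fu u z →
          ∑ t ∈ D, |coord t z| ≤ δ := by
        intro z hz hfz
        have h1 : ∑ t ∈ P ∪ D, |coord t z| ≤ 1 :=
          le_trans (chainSum_le_norm hnorm hdense hcoord hPDchain z) hz
        rw [Finset.sum_union hPD] at h1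
        have h2 : fu u z ≤ ∑ t ∈ P, |coord t z| := by
          rw [hPsum]
          exact hfu_le u z
        linarith
      have hky : ∑ t ∈ D, |coord t y| ≤ δ := hkey y hyB (hyU.1 u huLN)
      have hkx : ∑ t ∈ D, |coord t x| ≤ δ := by
        refine hkey x (le_of_eq hx) ?_
        rw [hfux u hulen]
        exact hNS u hulen
      calc ∑ t ∈ D, |coord t (y - x)| ≤ ∑ t ∈ D, (|coord t y| + |coord t x|) := by
            refine Finset.sum_le_sum fun t _ => ?_
            rw [map_sub]
            exact abs_sub _ _
        _ = ∑ t ∈ D, |coord t y| + ∑ t ∈ D, |coord t x| := Finset.sum_add_distrib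
        _ ≤ 2 * δ := by linarith
    linarith
  -- assemble the relatively weakly open set
  refine ⟨closedBall (0 : X) 1 ∩ U, ⟨U, hUopen, rfl⟩, ⟨by
    rw [mem_closedBall_zero_iff]; exact hx.le, hxU⟩, ?_⟩
  refine Metric.diam_le_of_forall_dist_le hε.le fun y hy z hz => ?_
  have h1 := hclose y hy.1 hy.2
  have h2 := hclose z hz.1 hz.2
  calc dist y z = ‖(y - x) - (z - x)‖ := by
        rw [dist_eq_norm, show y - z = (y - x) - (z - x) from by abel]
    _ ≤ ‖y - x‖ + ‖z - x‖ := norm_sub_le _ _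
    _ ≤ 6 * δ := by linarith
    _ ≤ ε := by linarith


end Space2
end BTPC

/-- **Points of continuity of `B_{X_T}`.** A norm-one point `x` of the binary tree space is a
point of continuity of the closed unit ball if and only if for every branch `β` of the tree
the projection of `x` onto the branch has norm one, i.e. `∑_{t ∈ β} |x(t)| = 1` (the basis
along a branch being isometrically an `ℓ_1`-basis). -/
theorem binary_tree_point_of_continuity_iff {X : Type*} [NormedAddCommGroup X]
    [NormedSpace ℝ X] [CompleteSpace X] (e : TreeNode → X) (coord : TreeNode → X →L[ℝ] ℝ)
    (hnorm : ∀ c : TreeNode →₀ ℝ, ‖c.sum fun t a => a • e t‖ = treeNorm c)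
    (hdense : DenseRange fun c : TreeNode →₀ ℝ => c.sum fun t a => a • e t)
    (hcoord : ∀ s t, coord s (e t) = if s = t then 1 else 0)
    (x : X) (hx : ‖x‖ = 1) :
    PointOfContinuity (closedBall (0 : X) 1) x ↔
      ∀ β : Set TreeNode, IsBranch β → ∑' t : β, |coord (↑t) x| = 1 := by
  constructor
  · intro hpc β hβ
    exact BTPC.forward_dir hnorm hdense hcoord x hx hpc β hβ
  · intro h
    exact BTPC.backward_dir hnorm hdense hcoord x hx h
end

section
/- Let X_T be the binary tree space, B the set of branches of T, and for f ∈ X_T* and a branch β define l_β(f) = limsup_{t∈β} |f(e_t)| (limsup along the linearly ordered branch). Then ∑_{β∈B} l_β(f) ≤ ‖f‖; in particular l_β(f) = 0 for all but countably many branches β. -/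
open Metric Filter Topology

/-- The node of length `n` lying on the (infinite) branch determined by `b : ℕ → Bool`. -/
def branchNode (b : ℕ → Bool) (n : ℕ) : TreeNode := List.ofFn fun i : Fin n => b i

/-! Finitely many distinct branches split below some depth `N`, so nodes picked on them at depths
`≥ N` form an antichain `S`. A chain meets an antichain at most once, so
`x = ∑_{t ∈ S} sign (f e_t) • e_t` has norm `≤ 1`, while `f x = ∑_{t ∈ S} |f e_t|`. Picking on each
branch a deep node where `|f e_t|` nearly attains its limsup then bounds every finite partial sum
of the limsups by `‖f‖`. -/

open Finset

lemma Finset.sum_limsup_le_of_forall_ge_sum_le {ι α : Type*} [Preorder α] (S : Finset ι)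
    {u : ι → α → ℝ} {C : ℝ} (hu : ∀ i ∈ S, IsCoboundedUnder (· ≤ ·) atTop (u i))
    (h : ∃ N, ∀ n : ι → α, (∀ i ∈ S, N ≤ n i) → ∑ i ∈ S, u i (n i) ≤ C) :
    ∑ i ∈ S, limsup (u i) atTop ≤ C := by
  obtain ⟨N, hN⟩ := h
  refine le_of_forall_pos_le_add fun ε hε => ?_
  set δ := ε / (#S + 1)
  have hδ : 0 < δ := by positivity
  have hpick : ∀ i ∈ S, ∃ n, N ≤ n ∧ limsup (u i) atTop - δ < u i n := fun i hi =>
    ((eventually_ge_atTop N).and_frequently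
      (frequently_lt_of_lt_limsup (hu i hi) (sub_lt_self _ hδ))).exists
  have : Nonempty α := ⟨N⟩
  choose! n hnN hn using hpick
  calc ∑ i ∈ S, limsup (u i) atTop ≤ ∑ i ∈ S, (u i (n i) + δ) :=
        sum_le_sum fun i hi => by linarith [hn i hi]
    _ = ∑ i ∈ S, u i (n i) + #S * δ := by rw [sum_add_distrib, sum_const, nsmul_eq_mul]
    _ ≤ C + (#S + 1) * δ := by gcongr; exacts [hN n hnN, le_add_of_nonneg_right zero_le_one]
    _ = C + ε := by rw [mul_div_cancel₀ _ (by positivity)]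

lemma IsFinChain.card_inter_le_one {A S : Finset TreeNode} (hA : IsFinChain A)
    (hS : IsTreeAntichain (S : Set TreeNode)) : #(A ∩ S) ≤ 1 := by
  refine card_le_one.2 fun s hs t ht => by_contra fun hne => ?_
  rw [mem_inter] at hs ht
  rcases hA s hs.1 t ht.1 with h | h
  exacts [(hS s hs.2 t ht.2 hne).1 h, (hS s hs.2 t ht.2 hne).2 h]

lemma treeNorm_le_of_isTreeAntichain {c : TreeNode →₀ ℝ} {r : ℝ} (hr : 0 ≤ r)
    (hc : ∀ t, |c t| ≤ r) (hS : IsTreeAntichain (c.support : Set TreeNode)) :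
    treeNorm c ≤ r := by
  refine Real.sSup_le ?_ hr
  rintro _ ⟨A, hA, rfl⟩
  calc ∑ t ∈ A, |c t| = ∑ t ∈ A ∩ c.support, |c t| :=
        (sum_subset inter_subset_left fun t ht hnot => by simp_all).symm
    _ ≤ #(A ∩ c.support) • r := sum_le_card_nsmul _ _ _ fun t _ => hc t
    _ ≤ r := by
      rw [nsmul_eq_mul]
      exact mul_le_of_le_one_left hr (by exact_mod_cast hA.card_inter_le_one hS)

lemma sum_abs_le_opNorm_of_isTreeAntichain {X : Type*} [NormedAddCommGroup X] [NormedSpace ℝ X]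
    {e : TreeNode → X} (hnorm : ∀ c : TreeNode →₀ ℝ, ‖c.sum fun t a => a • e t‖ ≤ treeNorm c)
    (f : X →L[ℝ] ℝ) {S : Finset TreeNode} (hS : IsTreeAntichain (S : Set TreeNode)) :
    ∑ t ∈ S, |f (e t)| ≤ ‖f‖ := by
  set c : TreeNode →₀ ℝ := Finsupp.indicator S fun t _ => (SignType.sign (f (e t)) : ℝ)
  set x := c.sum fun t a => a • e t
  have hcS : ↑c.support ⊆ (S : Set TreeNode) :=
    coe_subset.2 (Finsupp.support_indicator_subset _ _)
  have hc : ∀ t, |c t| ≤ 1 := fun t => by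
    simp only [c, Finsupp.indicator_apply]
    split_ifs
    · rcases lt_trichotomy (f (e t)) 0 with h | h | h <;> simp [h]
    · simp
  have hx : ‖x‖ ≤ 1 := (hnorm c).trans <| treeNorm_le_of_isTreeAntichain zero_le_one hc
    fun s hs t ht => hS s (hcS hs) t (hcS ht)
  have hfx : f x = ∑ t ∈ S, |f (e t)| := by
    have hx : x = ∑ t ∈ S, c t • e t :=
      (Finsupp.linearCombination_apply ℝ c).symm.trans
        (Finsupp.linearCombination_apply_of_mem_supported ℝ hcS)
    rw [hx, map_sum]
    refine sum_congr rfl fun t ht => ?_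
    simp [c, Finsupp.indicator_of_mem ht]
  calc ∑ t ∈ S, |f (e t)| = f x := hfx.symm
    _ ≤ ‖f‖ * ‖x‖ := (le_abs_self _).trans (f.le_opNorm x)
    _ ≤ ‖f‖ := mul_le_of_le_one_right (norm_nonneg f) hx

lemma branchNode_not_prefix {b b' : ℕ → Bool} {m k k' : ℕ} (h : b m ≠ b' m) (hk : m < k) :
    ¬ branchNode b k <+: branchNode b' k' := fun hp => h <| by
  simpa [branchNode] using hp.getElem (by simpa [branchNode] using hk)

lemma exists_separation_depth (S : Finset (ℕ → Bool)) :
    ∃ N, ∀ b ∈ S, ∀ b' ∈ S, b ≠ b' → ∃ m < N, b m ≠ b' m := by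
  refine Eventually.exists (f := atTop) <|
    (eventually_all_finset S).2 fun b _ => (eventually_all_finset S).2 fun b' _ => ?_
  by_cases h : b = b'
  · exact Eventually.of_forall fun _ hne => absurd h hne
  · obtain ⟨m, hm⟩ := Function.ne_iff.1 h
    exact (eventually_gt_atTop m).mono fun N hN _ => ⟨m, hN, hm⟩

lemma sum_abs_branchNode_le_opNorm {X : Type*} [NormedAddCommGroup X] [NormedSpace ℝ X]
    {e : TreeNode → X} (hnorm : ∀ c : TreeNode →₀ ℝ, ‖c.sum fun t a => a • e t‖ ≤ treeNorm c)
    (f : X →L[ℝ] ℝ) {S : Finset (ℕ → Bool)} {N : ℕ}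
    (hN : ∀ b ∈ S, ∀ b' ∈ S, b ≠ b' → ∃ m < N, b m ≠ b' m) {n : (ℕ → Bool) → ℕ}
    (hn : ∀ b ∈ S, N ≤ n b) :
    ∑ b ∈ S, |f (e (branchNode b (n b)))| ≤ ‖f‖ := by
  have hsep : ∀ b ∈ S, ∀ b' ∈ S, b ≠ b' → ¬ branchNode b (n b) <+: branchNode b' (n b') := by
    intro b hb b' hb' hne
    obtain ⟨m, hmN, hm⟩ := hN b hb b' hb' hne
    exact branchNode_not_prefix hm (hmN.trans_le (hn b hb))
  have hinj : Set.InjOn (fun b => branchNode b (n b)) S :=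
    fun b hb b' hb' (heq : branchNode b (n b) = branchNode b' (n b')) =>
      by_contra fun hne => hsep b hb b' hb' hne (heq ▸ List.prefix_refl _)
  have hanti : IsTreeAntichain ((S.image fun b => branchNode b (n b) : Finset _) : Set _) := by
    simp only [coe_image, IsTreeAntichain, Set.forall_mem_image]
    intro b hb b' hb' hne
    have hbb : b ≠ b' := fun h => hne (h ▸ rfl)
    exact ⟨hsep b hb b' hb' hbb, hsep b' hb' b hb hbb.symm⟩
  simpa only [sum_image hinj] using sum_abs_le_opNorm_of_isTreeAntichain hnorm f hanti

theorem binary_tree_branch_limsups_summable_general {X : Type*} [NormedAddCommGroup X]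
    [NormedSpace ℝ X] (e : TreeNode → X)
    (hnorm : ∀ c : TreeNode →₀ ℝ, ‖c.sum fun t a => a • e t‖ = treeNorm c)
    (f : X →L[ℝ] ℝ) :
    Summable (fun b : ℕ → Bool => limsup (fun n => |f (e (branchNode b n))|) atTop) ∧
    (∑' b : ℕ → Bool, limsup (fun n => |f (e (branchNode b n))|) atTop) ≤ ‖f‖ ∧
    {b : ℕ → Bool | limsup (fun n => |f (e (branchNode b n))|) atTop ≠ 0}.Countable := by
  have hnorm_le c := (hnorm c).le
  have hle : ∀ b n, |f (e (branchNode b n))| ≤ ‖f‖ := fun b n => by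
    simpa using sum_abs_le_opNorm_of_isTreeAntichain hnorm_le f (S := {branchNode b n})
      (by simp [IsTreeAntichain])
  have hnonneg : 0 ≤ fun b => limsup (fun n => |f (e (branchNode b n))|) atTop := fun b =>
    le_limsup_of_frequently_le (.of_forall fun _ => abs_nonneg _) (isBoundedUnder_of ⟨‖f‖, hle b⟩)
  have hsum : ∀ S : Finset (ℕ → Bool),
      ∑ b ∈ S, limsup (fun n => |f (e (branchNode b n))|) atTop ≤ ‖f‖ := fun S =>
    S.sum_limsup_le_of_forall_ge_sum_le
      (fun _ _ => isCoboundedUnder_le_of_le (atTop : Filter ℕ) fun _ => abs_nonneg _)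
      (let ⟨N, hN⟩ := exists_separation_depth S
       ⟨N, fun _ hn => sum_abs_branchNode_le_opNorm hnorm_le f hN hn⟩)
  have hsumm := summable_of_sum_le hnonneg hsum
  exact ⟨hsumm, hsumm.tsum_le_of_sum_le hsum, hsumm.countable_support⟩

/-- **The branch limsups of a functional are summable, with sum at most `‖f‖`.** For the
binary tree space and `f ∈ X_T^*`, set `l_β(f) = limsup_{t ∈ β} |f(e_t)|` along each branch
`β` (branches being parametrized by `b : ℕ → Bool`). Then the family `(l_β(f))_β` is
summable with `∑_β l_β(f) ≤ ‖f‖`; in particular `l_β(f) = 0` for all but countably many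
branches. -/
theorem binary_tree_branch_limsups_summable {X : Type*} [NormedAddCommGroup X]
    [NormedSpace ℝ X] [CompleteSpace X] (e : TreeNode → X)
    (hnorm : ∀ c : TreeNode →₀ ℝ, ‖c.sum fun t a => a • e t‖ = treeNorm c)
    (hdense : DenseRange fun c : TreeNode →₀ ℝ => c.sum fun t a => a • e t)
    (f : X →L[ℝ] ℝ) :
    Summable (fun b : ℕ → Bool => limsup (fun n => |f (e (branchNode b n))|) atTop) ∧
    (∑' b : ℕ → Bool, limsup (fun n => |f (e (branchNode b n))|) atTop) ≤ ‖f‖ ∧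
    {b : ℕ → Bool | limsup (fun n => |f (e (branchNode b n))|) atTop ≠ 0}.Countable :=
  binary_tree_branch_limsups_summable_general e hnorm f
end

section
/- Let X_T be the binary tree space, f ∈ X_T*, and ε > 0. Then there exist finitely many branches β_1,...,β_k of T and n ∈ ℕ such that |f(e_s)| < ε for every s ∈ T with |s| > n and s ∉ β_1 ∪ ⋯ ∪ β_k. -/
open Metric Filter Topology

/-!
A functional `f` of norm `‖f‖` has `∑_{a ∈ A} |f(e_a)| ≤ ‖f‖` on every antichain `A`, because the
signed sum `∑_{a ∈ A} ± e_a` has tree norm at most one. Hence the nodes `s` with `ε ≤ |f(e_s)|`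
contain no antichain with more than `K = ⌊‖f‖/ε⌋` elements. Such a set `S` is, above some level,
covered by `K` branches: if `S` has arbitrarily long nodes, König's lemma yields a branch `b`
every node of which has extensions in `S`, and then the nodes of `S` off `b` contain no antichain
with `K` elements, since a long enough extension in `S` of a node of `b` is incomparable with all
of them; induct on `K`.
-/

lemma branchNode_length (b : ℕ → Bool) (n : ℕ) : (branchNode b n).length = n := by
  simp [branchNode]

lemma branchNode_succ (b : ℕ → Bool) (n : ℕ) :
    branchNode b (n + 1) = branchNode b n ++ [b n] := by
  rw [branchNode, List.ofFn_succ', List.concat_eq_append]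
  rfl

lemma branchNode_prefix_branchNode (b : ℕ → Bool) {k m : ℕ} (h : k ≤ m) :
    branchNode b k <+: branchNode b m := by
  induction m, h using Nat.le_induction with
  | base => exact List.prefix_rfl
  | succ m _ ih => exact ih.trans ⟨[b m], (branchNode_succ b m).symm⟩

lemma eq_branchNode_of_prefix {b : ℕ → Bool} {a : TreeNode} {m : ℕ}
    (h : a <+: branchNode b m) : a = branchNode b a.length := by
  have hlen : a.length ≤ m := branchNode_length b m ▸ h.length_le
  exact (List.prefix_of_prefix_length_le h (branchNode_prefix_branchNode b hlen)
    (by rw [branchNode_length])).eq_of_length (branchNode_length b _).symm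

lemma exists_forall_branchNode {P : TreeNode → Prop} (h₀ : P [])
    (hstep : ∀ t, P t → ∃ c, P (t ++ [c])) : ∃ b : ℕ → Bool, ∀ n, P (branchNode b n) := by
  have : ∀ t, ∃ c, P t → P (t ++ [c]) := fun t => by
    by_cases ht : P t
    · exact (hstep t ht).imp fun _ hc _ => hc
    · exact ⟨true, fun h => absurd h ht⟩
  choose g hg using this
  let path : ℕ → TreeNode := fun n => Nat.rec [] (fun _ t => t ++ [g t]) n
  have hpath : ∀ n, path n = branchNode (fun n => g (path n)) n := fun n => by
    induction n with
    | zero => rfl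
    | succ n ih => rw [branchNode_succ, ← ih]
  refine ⟨fun n => g (path n), fun n => hpath n ▸ ?_⟩
  induction n with
  | zero => exact h₀
  | succ n ih => exact hg _ ih

def HasLongExtensions (S : Set TreeNode) (t : TreeNode) : Prop :=
  ∀ n, ∃ s ∈ S, t <+: s ∧ n < s.length

lemma HasLongExtensions.exists_child {S : Set TreeNode} {t : TreeNode}
    (h : HasLongExtensions S t) : ∃ c, HasLongExtensions S (t ++ [c]) := by
  unfold HasLongExtensions at h ⊢
  by_contra! hbound
  choose N hN using hbound
  obtain ⟨s, hsS, ⟨r, rfl⟩, hlen⟩ := h (max (max (N true) (N false)) t.length)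
  cases r with
  | nil => simp at hlen
  | cons c r =>
    have := hN c _ hsS ⟨r, by simp⟩
    cases c <;> omega

lemma exists_branch_forall_prefix {S : Set TreeNode} (hS : ∀ n, ∃ s ∈ S, n < s.length) :
    ∃ b : ℕ → Bool, ∀ m, ∃ s ∈ S, branchNode b m <+: s := by
  have h₀ : HasLongExtensions S [] := fun n =>
    (hS n).imp fun s ⟨hs, hlen⟩ => ⟨hs, List.nil_prefix, hlen⟩
  obtain ⟨b, hb⟩ := exists_forall_branchNode h₀ fun _ ht => ht.exists_child
  exact ⟨b, fun m => (hb m 0).imp fun _ ⟨hs, hpre, _⟩ => ⟨hs, hpre⟩⟩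

lemma not_prefix_and_not_prefix_of_ne_branchNode {b : ℕ → Bool} {a s : TreeNode} {m : ℕ}
    (ha : a ≠ branchNode b a.length) (hm : a.length ≤ m) (hs : branchNode b m <+: s) :
    ¬ a <+: s ∧ ¬ s <+: a := by
  have hlen : m ≤ s.length := branchNode_length b m ▸ hs.length_le
  refine ⟨fun has => ha (eq_branchNode_of_prefix (m := m) ?_), fun hsa => ha ?_⟩
  · exact List.prefix_of_prefix_length_le has hs (by rwa [branchNode_length])
  · have hsa_len := hsa.length_le
    have hm' : a.length = m := by omega
    obtain rfl : s = a := hsa.eq_of_length (by omega)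
    rw [hm']
    exact (hs.eq_of_length (by rw [branchNode_length]; omega)).symm

lemma exists_insert_isAntichain_of_forall_ne_branchNode {S : Set TreeNode} {b : ℕ → Bool}
    (hb : ∀ m, ∃ s ∈ S, branchNode b m <+: s) {A : Finset TreeNode}
    (hA : IsAntichain (· <+: ·) (A : Set TreeNode)) (hoff : ∀ a ∈ A, a ≠ branchNode b a.length) :
    ∃ s ∈ S, s ∉ A ∧ IsAntichain (· <+: ·) (insert s (A : Set TreeNode)) := by
  obtain ⟨s, hsS, hs⟩ := hb (A.sup List.length)
  have hinc : ∀ a ∈ A, ¬ a <+: s ∧ ¬ s <+: a := fun a haA =>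
    not_prefix_and_not_prefix_of_ne_branchNode (hoff a haA) (Finset.le_sup haA) hs
  exact ⟨s, hsS, fun hsA => (hinc s hsA).2 List.prefix_rfl,
    hA.insert (fun a ha _ => (hinc a ha).1) (fun a ha _ => (hinc a ha).2)⟩

theorem exists_finite_branches_of_isAntichain_card_le (K : ℕ) (S : Set TreeNode)
    (hS : ∀ A : Finset TreeNode, ↑A ⊆ S → IsAntichain (· <+: ·) (A : Set TreeNode) →
      A.card ≤ K) :
    ∃ Bs : Set (ℕ → Bool), Bs.Finite ∧ ∃ n : ℕ,
      ∀ s ∈ S, n < s.length → ∃ b ∈ Bs, s = branchNode b s.length := by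
  induction K generalizing S with
  | zero =>
    refine ⟨∅, Set.finite_empty, 0, fun s hs _ => ?_⟩
    have := hS {s} (by simpa using hs) (by simp)
    simp at this
  | succ K ih =>
    by_cases hbdd : ∃ n, ∀ s ∈ S, s.length ≤ n
    · obtain ⟨n, hn⟩ := hbdd
      exact ⟨∅, Set.finite_empty, n, fun s hs hlen => absurd (hn s hs) (by omega)⟩
    push Not at hbdd
    obtain ⟨b, hb⟩ := exists_branch_forall_prefix hbdd
    obtain ⟨Bs, hBs, n, hcover⟩ := ih {s ∈ S | s ≠ branchNode b s.length} fun A hAS hA => by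
      obtain ⟨s, hsS, hsA, hins⟩ :=
        exists_insert_isAntichain_of_forall_ne_branchNode hb hA fun a ha => (hAS ha).2
      have := hS (insert s A) (Finset.coe_insert s A ▸ Set.insert_subset hsS fun a ha => (hAS ha).1) (by simpa using hins)
      rw [Finset.card_insert_of_notMem hsA] at this
      omega
    refine ⟨insert b Bs, hBs.insert b, n, fun s hs hlen => ?_⟩
    by_cases hsb : s = branchNode b s.length
    · exact ⟨b, Set.mem_insert _ _, hsb⟩
    · obtain ⟨b', hb', hsb'⟩ := hcover s ⟨hs, hsb⟩ hlen
      exact ⟨b', Set.mem_insert_of_mem _ hb', hsb'⟩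

lemma treeNorm_le_one_of_isAntichain (c : TreeNode →₀ ℝ) (hc : ∀ t, |c t| ≤ 1)
    (hA : IsAntichain (· <+: ·) (c.support : Set TreeNode)) : treeNorm c ≤ 1 := by
  classical
  refine Real.sSup_le (fun r ⟨B, hB, hr⟩ => hr ▸ ?_) zero_le_one
  have hsub : ((B ∩ c.support : Finset TreeNode) : Set TreeNode).Subsingleton := by
    rw [Finset.coe_inter]
    exact subsingleton_of_isChain_of_isAntichain
      (fun s hs t ht _ => hB s hs.1 t ht.1) (hA.subset Set.inter_subset_right)
  calc ∑ t ∈ B, |c t| = ∑ t ∈ B ∩ c.support, |c t| :=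
        (Finset.sum_subset Finset.inter_subset_left fun t htB ht => by
          simp_all).symm
    _ ≤ ∑ _t ∈ B ∩ c.support, (1 : ℝ) := Finset.sum_le_sum fun t _ => hc t
    _ ≤ 1 := by simpa using Finset.card_le_one.2 fun x hx y hy => hsub hx hy

lemma sum_abs_apply_le_opNorm_of_isAntichain {X : Type*} [NormedAddCommGroup X]
    [NormedSpace ℝ X] (e : TreeNode → X)
    (hnorm : ∀ c : TreeNode →₀ ℝ, ‖c.sum fun t a => a • e t‖ = treeNorm c)
    (f : X →L[ℝ] ℝ) {A : Finset TreeNode} (hA : IsAntichain (· <+: ·) (A : Set TreeNode)) :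
    ∑ a ∈ A, |f (e a)| ≤ ‖f‖ := by
  classical
  let c : TreeNode →₀ ℝ := Finsupp.onFinset A
    (fun t => if t ∈ A then (SignType.sign (f (e t)) : ℝ) else 0)
    fun t ht => by by_contra htA; simp [htA] at ht
  have hc : ∀ t, |c t| ≤ 1 := fun t => by
    simp only [c, Finsupp.onFinset_apply]
    split_ifs
    · rcases SignType.sign (f (e t)) with _ | _ | _ <;> simp
    · simp
  have hfc : f (c.sum fun t a => a • e t) = ∑ a ∈ A, |f (e a)| := by
    rw [Finsupp.onFinset_sum _ fun t => zero_smul ℝ (e t), map_sum]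
    exact Finset.sum_congr rfl fun t ht => by simp [ht]
  calc ∑ a ∈ A, |f (e a)| = f (c.sum fun t a => a • e t) := hfc.symm
    _ ≤ ‖f‖ * ‖c.sum fun t a => a • e t‖ := (le_abs_self _).trans (f.le_opNorm _)
    _ ≤ ‖f‖ * 1 := by
        rw [hnorm]
        exact mul_le_mul_of_nonneg_left (treeNorm_le_one_of_isAntichain c hc
          (hA.subset Finsupp.support_onFinset_subset)) (norm_nonneg f)
    _ = ‖f‖ := mul_one _

theorem binary_tree_functional_small_off_branches_general {X : Type*} [NormedAddCommGroup X]
    [NormedSpace ℝ X] (e : TreeNode → X)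
    (hnorm : ∀ c : TreeNode →₀ ℝ, ‖c.sum fun t a => a • e t‖ = treeNorm c)
    (f : X →L[ℝ] ℝ) (ε : ℝ) (hε : 0 < ε) :
    ∃ Bs : Set (ℕ → Bool), Bs.Finite ∧ ∃ n : ℕ,
      ∀ s : TreeNode, n < s.length → (∀ b ∈ Bs, s ≠ branchNode b s.length) →
        |f (e s)| < ε := by
  have hcard : ∀ A : Finset TreeNode, ↑A ⊆ {s | ε ≤ |f (e s)|} →
      IsAntichain (· <+: ·) (A : Set TreeNode) → A.card ≤ ⌊‖f‖ / ε⌋₊ := by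
    intro A hAε hA
    refine Nat.le_floor ((le_div_iff₀ hε).2 ?_)
    calc (A.card : ℝ) * ε = ∑ _a ∈ A, ε := by rw [Finset.sum_const, nsmul_eq_mul]
      _ ≤ ∑ a ∈ A, |f (e a)| := Finset.sum_le_sum fun a ha => hAε ha
      _ ≤ ‖f‖ := sum_abs_apply_le_opNorm_of_isAntichain e hnorm f hA
  obtain ⟨Bs, hBs, n, hcover⟩ := exists_finite_branches_of_isAntichain_card_le _ _ hcard
  refine ⟨Bs, hBs, n, fun s hlen hoff => lt_of_not_ge fun hs => ?_⟩
  obtain ⟨b, hb, hsb⟩ := hcover s hs hlen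
  exact hoff b hb hsb

/-- **Functionals are small off finitely many branches.** For every functional `f` on the
binary tree space and every `ε > 0` there are finitely many branches `β_1, …, β_k`
(parametrized by `b : ℕ → Bool`) and `n ∈ ℕ` such that `|f(e_s)| < ε` for every node `s`
of length `> n` lying on none of the branches `β_i`. -/
theorem binary_tree_functional_small_off_branches {X : Type*} [NormedAddCommGroup X]
    [NormedSpace ℝ X] [CompleteSpace X] (e : TreeNode → X)
    (hnorm : ∀ c : TreeNode →₀ ℝ, ‖c.sum fun t a => a • e t‖ = treeNorm c)
    (hdense : DenseRange fun c : TreeNode →₀ ℝ => c.sum fun t a => a • e t)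
    (f : X →L[ℝ] ℝ) (ε : ℝ) (hε : 0 < ε) :
    ∃ Bs : Set (ℕ → Bool), Bs.Finite ∧ ∃ n : ℕ,
      ∀ s : TreeNode, n < s.length → (∀ b ∈ Bs, s ≠ branchNode b s.length) →
        |f (e s)| < ε :=
  binary_tree_functional_small_off_branches_general e hnorm f ε hε
end

section
/- The points of continuity of the closed unit ball B_{X_T} of the binary tree space are weakly dense in B_{X_T}. In particular, (B_{X_T}, weak topology) has a countable π-base. -/
open Metric Filter Topology

namespace BTaux

lemma prefix_comparable {u s t : TreeNode} (hs : s <+: u) (ht : t <+: u) :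
    s <+: t ∨ t <+: s := by
  rcases le_total s.length t.length with h | h
  · exact Or.inl (List.prefix_of_prefix_length_le hs ht h)
  · exact Or.inr (List.prefix_of_prefix_length_le ht hs h)

lemma isFinChain_of_prefix {A : Finset TreeNode} {u : TreeNode} (h : ∀ t ∈ A, t <+: u) :
    IsFinChain A := fun s hs t ht => prefix_comparable (h s hs) (h t ht)

lemma isFinChain_singleton (t : TreeNode) : IsFinChain {t} := by
  intro a ha b hb
  simp only [Finset.mem_singleton] at ha hb
  subst ha; subst hb; exact Or.inl (List.prefix_refl _)

lemma isFinChain_subset {A B : Finset TreeNode} (h : A ⊆ B) (hB : IsFinChain B) :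
    IsFinChain A := fun s hs t ht => hB s (h hs) t (h ht)

lemma chain_exists_top {A : Finset TreeNode} (hA : IsFinChain A) (hne : A.Nonempty) :
    ∃ u ∈ A, ∀ t ∈ A, t <+: u := by
  obtain ⟨u, hu, hmax⟩ := A.exists_max_image List.length hne
  refine ⟨u, hu, fun t ht => ?_⟩
  rcases hA t ht u hu with h | h
  · exact h
  · have : u = t := h.eq_of_length (le_antisymm h.length_le (hmax t ht))
    rw [this]

noncomputable def pathSum (c : TreeNode →₀ ℝ) (u : TreeNode) : ℝ :=
  ∑ k ∈ Finset.range (u.length + 1), |c (u.take k)|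

lemma take_injOn (u : TreeNode) :
    ∀ k ∈ Finset.range (u.length + 1), ∀ k' ∈ Finset.range (u.length + 1),
      u.take k = u.take k' → k = k' := by
  intro k hk k' hk' h
  rw [Finset.mem_range] at hk hk'
  have h1 : (u.take k).length = k := by rw [List.length_take]; omega
  have h2 : (u.take k').length = k' := by rw [List.length_take]; omega
  rw [← h1, ← h2, h]

lemma sum_le_pathSum (c : TreeNode →₀ ℝ) {A : Finset TreeNode} {u : TreeNode}
    (h : ∀ t ∈ A, t <+: u) : ∑ t ∈ A, |c t| ≤ pathSum c u := by
  classical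
  have hinj : ∀ x ∈ A, ∀ y ∈ A, x.length = y.length → x = y := fun x hx y hy hxy =>
    (List.prefix_of_prefix_length_le (h x hx) (h y hy) (le_of_eq hxy)).eq_of_length hxy
  have himg : ∑ k ∈ A.image List.length, |c (u.take k)| = ∑ t ∈ A, |c (u.take t.length)| :=
    Finset.sum_image hinj
  have heq : ∑ t ∈ A, |c (u.take t.length)| = ∑ t ∈ A, |c t| := by
    refine Finset.sum_congr rfl fun t ht => ?_
    rw [← List.prefix_iff_eq_take.mp (h t ht)]
  rw [← heq, ← himg]
  apply Finset.sum_le_sum_of_subset_of_nonneg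
  · intro k hk
    rw [Finset.mem_range]
    obtain ⟨t, ht, rfl⟩ := Finset.mem_image.mp hk
    exact Nat.lt_succ_of_le (h t ht).length_le
  · intros; positivity

lemma treeNorm_bddAbove (c : TreeNode →₀ ℝ) :
    BddAbove {r | ∃ A : Finset TreeNode, IsFinChain A ∧ r = ∑ t ∈ A, |c t|} := by
  classical
  refine ⟨∑ t ∈ c.support, |c t|, ?_⟩
  rintro r ⟨A, hA, rfl⟩
  have h1 : ∑ t ∈ A ∩ c.support, |c t| = ∑ t ∈ A, |c t| := by
    apply Finset.sum_subset Finset.inter_subset_left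
    intro x hx hnx
    have : c x = 0 := by
      by_contra hne
      exact hnx (Finset.mem_inter.mpr ⟨hx, Finsupp.mem_support_iff.mpr hne⟩)
    simp [this]
  rw [← h1]
  exact Finset.sum_le_sum_of_subset_of_nonneg Finset.inter_subset_right (by intros; positivity)

lemma sum_chain_le_treeNorm (c : TreeNode →₀ ℝ) {A : Finset TreeNode} (hA : IsFinChain A) :
    ∑ t ∈ A, |c t| ≤ treeNorm c :=
  le_csSup (treeNorm_bddAbove c) ⟨A, hA, rfl⟩

lemma treeNorm_le (c : TreeNode →₀ ℝ) {r : ℝ} (hr : 0 ≤ r)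
    (h : ∀ A : Finset TreeNode, IsFinChain A → ∑ t ∈ A, |c t| ≤ r) : treeNorm c ≤ r := by
  apply Real.sSup_le _ hr
  rintro x ⟨A, hA, rfl⟩
  exact h A hA

lemma abs_le_treeNorm (c : TreeNode →₀ ℝ) (t : TreeNode) : |c t| ≤ treeNorm c := by
  have := sum_chain_le_treeNorm c (isFinChain_singleton t)
  simpa using this

lemma pathSum_le_treeNorm (c : TreeNode →₀ ℝ) (u : TreeNode) :
    pathSum c u ≤ treeNorm c := by
  classical
  set P : Finset TreeNode := (Finset.range (u.length + 1)).image (u.take ·) with hP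
  have himg : ∑ t ∈ P, |c t| = ∑ k ∈ Finset.range (u.length + 1), |c (u.take k)| :=
    Finset.sum_image (take_injOn u)
  have hchain : IsFinChain P := by
    apply isFinChain_of_prefix (u := u)
    intro t ht
    obtain ⟨k, _, rfl⟩ := Finset.mem_image.mp ht
    exact List.take_prefix k u
  calc pathSum c u = ∑ t ∈ P, |c t| := himg.symm
    _ ≤ treeNorm c := sum_chain_le_treeNorm c hchain

lemma treeNorm_le_sum_support (c : TreeNode →₀ ℝ) :
    treeNorm c ≤ ∑ t ∈ c.support, |c t| := by
  apply treeNorm_le c (by positivity)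
  intro A hA
  classical
  have h1 : ∑ t ∈ A ∩ c.support, |c t| = ∑ t ∈ A, |c t| := by
    apply Finset.sum_subset Finset.inter_subset_left
    intro x hx hnx
    have : c x = 0 := by
      by_contra hne
      exact hnx (Finset.mem_inter.mpr ⟨hx, Finsupp.mem_support_iff.mpr hne⟩)
    simp [this]
  rw [← h1]
  exact Finset.sum_le_sum_of_subset_of_nonneg Finset.inter_subset_right (by intros; positivity)

def levelFinset (j : ℕ) : Finset TreeNode :=
  (Finset.univ : Finset (Fin j → Bool)).image (fun v => List.ofFn v)

lemma mem_levelFinset {t : TreeNode} {j : ℕ} : t ∈ levelFinset j ↔ t.length = j := by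
  simp only [levelFinset, Finset.mem_image, Finset.mem_univ, true_and]
  constructor
  · rintro ⟨v, rfl⟩; exact List.length_ofFn
  · rintro rfl; exact ⟨t.get, List.ofFn_get t⟩


variable {X : Type*} [NormedAddCommGroup X] [NormedSpace ℝ X]

noncomputable def Emb (e : TreeNode → X) : (TreeNode →₀ ℝ) →ₗ[ℝ] X :=
  Finsupp.linearCombination ℝ e

lemma Emb_apply (e : TreeNode → X) (c : TreeNode →₀ ℝ) :
    Emb e c = c.sum fun t a => a • e t := Finsupp.linearCombination_apply ℝ c

lemma Emb_single (e : TreeNode → X) (t : TreeNode) : Emb e (Finsupp.single t 1) = e t := by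
  rw [Emb, Finsupp.linearCombination_single, one_smul]

noncomputable def ratCast (c : TreeNode →₀ ℚ) : TreeNode →₀ ℝ :=
  Finsupp.mapRange Rat.cast Rat.cast_zero c

lemma ratCast_apply (c : TreeNode →₀ ℚ) (t : TreeNode) : ratCast c t = (c t : ℝ) :=
  Finsupp.mapRange_apply

lemma ratCast_add (c d : TreeNode →₀ ℚ) : ratCast (c + d) = ratCast c + ratCast d :=
  Finsupp.mapRange_add (by push_cast; simp) c d

lemma ratCast_smul (q : ℚ) (c : TreeNode →₀ ℚ) :
    ratCast (q • c) = (q : ℝ) • ratCast c := by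
  ext t
  simp only [ratCast_apply, Finsupp.smul_apply, smul_eq_mul]
  push_cast; ring

lemma ratCast_support (c : TreeNode →₀ ℚ) : (ratCast c).support ⊆ c.support :=
  Finsupp.support_mapRange

section withE
variable (e : TreeNode → X) (coord : TreeNode → X →L[ℝ] ℝ)

lemma coord_Emb (hcoord : ∀ s t, coord s (e t) = if s = t then 1 else 0)
    (c : TreeNode →₀ ℝ) (s : TreeNode) : coord s (Emb e c) = c s := by
  classical
  rw [Emb_apply, Finsupp.sum, map_sum]
  simp only [map_smul, hcoord, smul_eq_mul, mul_ite, mul_one, mul_zero]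
  rw [Finset.sum_ite_eq]
  split
  · rfl
  · exact (Finsupp.notMem_support_iff.mp ‹_›).symm

lemma norm_e (hnormE : ∀ c : TreeNode →₀ ℝ, ‖Emb e c‖ = treeNorm c) (t : TreeNode) : ‖e t‖ = 1 := by
  rw [← Emb_single e t, hnormE]
  apply le_antisymm
  · apply treeNorm_le _ zero_le_one
    intro A hA
    classical
    calc ∑ s ∈ A, |(Finsupp.single t (1:ℝ)) s| = ∑ s ∈ A, if t = s then 1 else 0 := by
          refine Finset.sum_congr rfl fun s _ => ?_
          rw [Finsupp.single_apply]
          split <;> simp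
      _ ≤ 1 := by rw [Finset.sum_ite_eq]; split <;> norm_num
  · have := sum_chain_le_treeNorm (Finsupp.single t (1:ℝ)) (isFinChain_singleton t)
    simpa using this

lemma coord_le_norm (hnormE : ∀ c : TreeNode →₀ ℝ, ‖Emb e c‖ = treeNorm c) (hdenseE : DenseRange (Emb e))
    (hcoord : ∀ s t, coord s (e t) = if s = t then 1 else 0)
    (t : TreeNode) (x : X) : |coord t x| ≤ ‖x‖ := by
  have hsub : Set.range (Emb e) ⊆ {x : X | |coord t x| ≤ ‖x‖} := by
    rintro _ ⟨c, rfl⟩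
    simp only [Set.mem_setOf_eq, coord_Emb e coord hcoord, hnormE]
    exact abs_le_treeNorm c t
  have hcl : IsClosed {x : X | |coord t x| ≤ ‖x‖} :=
    isClosed_le ((coord t).continuous.abs) continuous_norm
  have : (Set.univ : Set X) ⊆ {x : X | |coord t x| ≤ ‖x‖} := by
    rw [← hdenseE.closure_range]
    exact closure_minimal hsub hcl
  exact this (Set.mem_univ x)

lemma level_sum_le (hnormE : ∀ c : TreeNode →₀ ℝ, ‖Emb e c‖ = treeNorm c) (f : X →L[ℝ] ℝ) (j : ℕ) (A : Finset TreeNode)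
    (hA : ∀ t ∈ A, t.length = j) : ∑ t ∈ A, |f (e t)| ≤ ‖f‖ := by
  classical
  set σ : TreeNode → ℝ := fun t => if 0 ≤ f (e t) then 1 else -1 with hσ
  set w : TreeNode →₀ ℝ := Finsupp.onFinset A (fun t => if t ∈ A then σ t else 0)
    (fun t h => by by_contra hn; simp [hn] at h) with hw
  have hwa : ∀ t, w t = if t ∈ A then σ t else 0 := fun t => Finsupp.onFinset_apply
  have habs : ∀ t, |σ t| = 1 := by
    intro t
    by_cases h : 0 ≤ f (e t) <;> simp [hσ, h]
  have hnw : ‖Emb e w‖ ≤ 1 := by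
    rw [hnormE]
    apply treeNorm_le _ zero_le_one
    intro C hC
    have h1 : ∑ t ∈ C ∩ A, |w t| = ∑ t ∈ C, |w t| := by
      apply Finset.sum_subset Finset.inter_subset_left
      intro x hx hnx
      have hxA : x ∉ A := fun h => hnx (Finset.mem_inter.mpr ⟨hx, h⟩)
      simp [hwa, hxA]
    rw [← h1]
    have hcard : (C ∩ A).card ≤ 1 := by
      rw [Finset.card_le_one]
      intro a ha b hb
      have haC := Finset.mem_inter.mp ha
      have hbC := Finset.mem_inter.mp hb
      have hlen : a.length = b.length := by rw [hA a haC.2, hA b hbC.2]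
      rcases hC a haC.1 b hbC.1 with h | h
      · exact h.eq_of_length hlen
      · exact (h.eq_of_length hlen.symm).symm
    calc ∑ t ∈ C ∩ A, |w t| ≤ (C ∩ A).card • (1:ℝ) := by
          apply Finset.sum_le_card_nsmul
          intro t ht
          rw [hwa, if_pos (Finset.mem_inter.mp ht).2, habs]
      _ ≤ 1 := by
          rw [nsmul_eq_mul, mul_one]
          exact_mod_cast hcard
  have hEw : Emb e w = ∑ t ∈ A, w t • e t := by
    rw [Emb_apply]
    apply Finsupp.sum_of_support_subset
    · exact Finsupp.support_onFinset_subset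
    · intros; simp
  have hfw : f (Emb e w) = ∑ t ∈ A, |f (e t)| := by
    rw [hEw, map_sum]
    refine Finset.sum_congr rfl fun t ht => ?_
    rw [map_smul, smul_eq_mul, hwa, if_pos ht]
    by_cases h : 0 ≤ f (e t)
    · simp [hσ, h, abs_of_nonneg h]
    · simp [hσ, h, abs_of_neg (lt_of_not_ge h)]
  calc ∑ t ∈ A, |f (e t)| = f (Emb e w) := hfw.symm
    _ ≤ |f (Emb e w)| := le_abs_self _
    _ ≤ ‖f‖ * ‖Emb e w‖ := f.le_opNorm _
    _ ≤ ‖f‖ * 1 := by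
        apply mul_le_mul_of_nonneg_left hnw (norm_nonneg f)
    _ = ‖f‖ := mul_one _

end withE

lemma greedy {α β : Type*} [DecidableEq α] (s : Finset β) (K : Finset α) (v : α → β → ℝ) :
    ∃ ε : α → ℝ, (∀ t, ε t = 1 ∨ ε t = -1) ∧
      ∑ f ∈ s, (∑ t ∈ K, ε t * v t f) ^ 2 ≤ ∑ t ∈ K, ∑ f ∈ s, (v t f) ^ 2 := by
  classical
  induction K using Finset.cons_induction with
  | empty => exact ⟨fun _ => 1, fun _ => Or.inl rfl, by simp⟩
  | cons a K ha ih =>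
    obtain ⟨ε, hε, hsum⟩ := ih
    set S : β → ℝ := fun f => ∑ t ∈ K, ε t * v t f with hS
    set Xc : ℝ := ∑ f ∈ s, S f * v a f with hXc
    set σ : ℝ := if Xc ≤ 0 then 1 else -1 with hσ
    have hσ2 : σ * σ = 1 := by rw [hσ]; split <;> norm_num
    have hcross : σ * Xc ≤ 0 := by
      rw [hσ]; split
      · rw [one_mul]; assumption
      · rw [neg_one_mul]; linarith [lt_of_not_ge ‹¬ Xc ≤ 0›]
    refine ⟨Function.update ε a σ, ?_, ?_⟩
    · intro t
      by_cases h : t = a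
      · subst h; rw [Function.update_self]; rw [hσ]; split
        · exact Or.inl rfl
        · exact Or.inr rfl
      · rw [Function.update_of_ne h]; exact hε t
    · have hKs : ∀ f, ∑ t ∈ K, Function.update ε a σ t * v t f = S f := by
        intro f
        refine Finset.sum_congr rfl fun t ht => ?_
        have hta : t ≠ a := by rintro rfl; exact ha ht
        rw [Function.update_of_ne hta]
      have hstep : ∀ f, ∑ t ∈ Finset.cons a K ha, Function.update ε a σ t * v t f
          = σ * v a f + S f := by
        intro f
        rw [Finset.sum_cons, hKs, Function.update_self]
      calc ∑ f ∈ s, (∑ t ∈ Finset.cons a K ha, Function.update ε a σ t * v t f) ^ 2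
          = ∑ f ∈ s, ((σ*σ) * (v a f)^2 + 2 * σ * (S f * v a f) + (S f)^2) := by
            refine Finset.sum_congr rfl fun f _ => ?_
            rw [hstep]; ring
        _ = ∑ f ∈ s, (v a f)^2 + 2 * (σ * Xc) + ∑ f ∈ s, (S f)^2 := by
            rw [hXc, Finset.mul_sum, Finset.mul_sum, ← Finset.sum_add_distrib,
              ← Finset.sum_add_distrib]
            exact Finset.sum_congr rfl fun f _ => by rw [hσ2]; ring
        _ ≤ ∑ f ∈ s, (v a f)^2 + ∑ t ∈ K, ∑ f ∈ s, (v t f)^2 := by linarith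
        _ = ∑ t ∈ Finset.cons a K ha, ∑ f ∈ s, (v t f)^2 := by rw [Finset.sum_cons]


lemma dense_ball (e : TreeNode → X)
    (hnormE : ∀ c : TreeNode →₀ ℝ, ‖Emb e c‖ = treeNorm c)
    (hdenseE : DenseRange ⇑(Emb e)) (x : X) (hx : ‖x‖ ≤ 1)
    {θ : ℝ} (hθ : 0 < θ) (hθ1 : θ ≤ 1) :
    ∃ c : TreeNode →₀ ℚ, ‖Emb e (ratCast c)‖ ≤ 1 ∧ ‖x - Emb e (ratCast c)‖ < θ := by
  classical
  obtain ⟨c₀, hc₀⟩ : ∃ c₀, dist x (Emb e c₀) < θ/6 :=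
    hdenseE.exists_dist_lt x (by positivity)
  rw [dist_eq_norm] at hc₀
  set N : ℕ := c₀.support.card with hN
  have hquot : ∀ t : TreeNode, ∃ q : ℚ, |c₀ t - (q:ℝ)| ≤ θ/(6*(N+1)) ∧ (c₀ t = 0 → q = 0) := by
    intro t
    by_cases h : c₀ t = 0
    · refine ⟨0, ?_, fun _ => rfl⟩
      rw [h]; simp; positivity
    · obtain ⟨q, hq⟩ := exists_rat_near (c₀ t) (show (0:ℝ) < θ/(6*(N+1)) by positivity)
      exact ⟨q, le_of_lt hq, fun h' => absurd h' h⟩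
  choose qf hqf hqf0 using hquot
  set c₁ : TreeNode →₀ ℚ := Finsupp.onFinset c₀.support (fun t => qf t)
      (fun t h => Finsupp.mem_support_iff.mpr (fun h0 => h (hqf0 t h0))) with hc₁
  have hc₁a : ∀ t, c₁ t = qf t := fun t => rfl
  have happrox : ‖Emb e c₀ - Emb e (ratCast c₁)‖ ≤ θ/6 := by
    rw [← map_sub, hnormE]
    have hsupp : (c₀ - ratCast c₁).support ⊆ c₀.support := by
      intro t ht
      rw [Finsupp.mem_support_iff] at ht ⊢
      intro h0
      apply ht
      simp [Finsupp.sub_apply, ratCast_apply, hc₁a, hqf0 t h0, h0]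
    calc treeNorm (c₀ - ratCast c₁)
        ≤ ∑ t ∈ (c₀ - ratCast c₁).support, |(c₀ - ratCast c₁) t| := treeNorm_le_sum_support _
      _ ≤ ∑ t ∈ c₀.support, |(c₀ - ratCast c₁) t| :=
          Finset.sum_le_sum_of_subset_of_nonneg hsupp (by intros; positivity)
      _ ≤ ∑ _t ∈ c₀.support, θ/(6*(N+1)) := by
          apply Finset.sum_le_sum
          intro t _
          rw [Finsupp.sub_apply, ratCast_apply, hc₁a]
          exact hqf t
      _ = (N:ℝ) * (θ/(6*(N+1))) := by rw [Finset.sum_const, nsmul_eq_mul, hN]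
      _ ≤ ((N:ℝ)+1) * (θ/(6*((N:ℝ)+1))) := by
          have hpos : (0:ℝ) ≤ θ/(6*((N:ℝ)+1)) := by positivity
          have hN1 : (N:ℝ) ≤ (N:ℝ)+1 := by linarith
          exact mul_le_mul_of_nonneg_right hN1 hpos
      _ = θ/6 := by
          have : ((N:ℝ)+1) ≠ 0 := by positivity
          field_simp
  have h2 : ‖x - Emb e (ratCast c₁)‖ < θ/3 := by
    have htri := dist_triangle x (Emb e c₀) (Emb e (ratCast c₁))
    simp only [dist_eq_norm] at htri
    linarith
  set r : ℝ := ‖Emb e (ratCast c₁)‖ with hr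
  have hrle : r ≤ 1 + θ/3 := by
    have h4 : ‖x - (x - Emb e (ratCast c₁))‖ ≤ ‖x‖ + ‖x - Emb e (ratCast c₁)‖ :=
      norm_sub_le _ _
    rw [show x - (x - Emb e (ratCast c₁)) = Emb e (ratCast c₁) by abel] at h4
    rw [hr]
    linarith
  by_cases hcase : r ≤ 1
  · exact ⟨c₁, hcase, lt_of_lt_of_le h2 (by linarith)⟩
  · push_neg at hcase
    have hrpos : (0:ℝ) < r := lt_trans one_pos hcase
    have hlt : 1 - θ/3 < 1/r := by
      have h3 : 1/(1+θ/3) ≤ 1/r := by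
        apply one_div_le_one_div_of_le hrpos hrle
      have h4 : 1 - θ/3 < 1/(1+θ/3) := by
        rw [lt_div_iff₀ (by positivity)]; nlinarith
      linarith
    obtain ⟨q, hq1, hq2⟩ := exists_rat_btwn hlt
    have hq0 : 0 < (q:ℝ) := by linarith
    have h1r : 1/r < 1 := by rw [div_lt_one hrpos]; exact hcase
    have hq11 : (q:ℝ) < 1 := by linarith
    refine ⟨q • c₁, ?_, ?_⟩
    · rw [ratCast_smul, map_smul, norm_smul, Real.norm_eq_abs, abs_of_pos hq0, ← hr]
      calc (q:ℝ) * r ≤ (1/r) * r := mul_le_mul_of_nonneg_right (le_of_lt hq2) (le_of_lt hrpos)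
        _ = 1 := by field_simp
    · have hEsub : x - Emb e (ratCast (q • c₁))
          = (x - Emb e (ratCast c₁)) + (1 - (q:ℝ)) • Emb e (ratCast c₁) := by
        rw [ratCast_smul, map_smul, sub_smul, one_smul]; abel
      rw [hEsub]
      have h5 : ‖(1 - (q:ℝ)) • Emb e (ratCast c₁)‖ ≤ (θ/3) * (1 + θ/3) := by
        rw [norm_smul, Real.norm_eq_abs, abs_of_nonneg (by linarith : (0:ℝ) ≤ 1 - (q:ℝ)), ← hr]
        apply mul_le_mul (by linarith) hrle (by linarith) (by positivity)
      calc ‖(x - Emb e (ratCast c₁)) + (1 - (q:ℝ)) • Emb e (ratCast c₁)‖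
          ≤ ‖x - Emb e (ratCast c₁)‖ + ‖(1 - (q:ℝ)) • Emb e (ratCast c₁)‖ := norm_add_le _ _
        _ < θ/3 + (θ/3) * (1 + θ/3) := by linarith
        _ ≤ θ := by nlinarith

def goodQ (c : TreeNode →₀ ℚ) (D : ℕ) : Prop :=
  (∀ t ∈ c.support, t.length ≤ D) ∧
  ∀ t : TreeNode, t.length = D → ∑ k ∈ Finset.range (D+1), |c (t.take k)| = 1

lemma good_pathSum {c : TreeNode →₀ ℚ} {D : ℕ} (hc : goodQ c D) {t : TreeNode}
    (ht : t.length = D) : pathSum (ratCast c) t = 1 := by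
  have h := hc.2 t ht
  have h2 : ((∑ k ∈ Finset.range (D + 1), |c (t.take k)| : ℚ) : ℝ) = 1 := by
    exact_mod_cast congrArg (fun q : ℚ => (q : ℝ)) h
  rw [pathSum, ht, ← h2]
  push_cast [ratCast_apply]
  rfl

lemma good_treeNorm_le_one {c : TreeNode →₀ ℚ} {D : ℕ} (hc : goodQ c D) :
    treeNorm (ratCast c) ≤ 1 := by
  classical
  apply treeNorm_le _ zero_le_one
  intro A hA
  set d := ratCast c with hd
  set A' := A.filter (fun t => d t ≠ 0) with hA'
  have hsum : ∑ t ∈ A', |d t| = ∑ t ∈ A, |d t| := by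
    apply Finset.sum_subset (Finset.filter_subset _ _)
    intro t htA htn
    rw [Finset.mem_filter] at htn
    push_neg at htn
    rw [htn htA, abs_zero]
  rw [← hsum]
  rcases Finset.eq_empty_or_nonempty A' with he | hne
  · rw [he]; simp
  · obtain ⟨u, huA, hutop⟩ :=
      chain_exists_top (isFinChain_subset (Finset.filter_subset _ _) hA) hne
    have hulen : u.length ≤ D := by
      have h1 : d u ≠ 0 := (Finset.mem_filter.mp huA).2
      have h2 : c u ≠ 0 := by
        intro hc0
        exact h1 (by rw [hd, ratCast_apply, hc0, Rat.cast_zero])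
      exact hc.1 u (Finsupp.mem_support_iff.mpr h2)
    set ustar : TreeNode := u ++ List.replicate (D - u.length) false with hustar
    have hlen : ustar.length = D := by
      rw [hustar, List.length_append, List.length_replicate]; omega
    have hpref : ∀ t ∈ A', t <+: ustar := fun t ht =>
      (hutop t ht).trans ⟨List.replicate (D - u.length) false, rfl⟩
    calc ∑ t ∈ A', |d t| ≤ pathSum d ustar := sum_le_pathSum d hpref
      _ = 1 := good_pathSum hc hlen

lemma weak_basis {Y : Type*} [NormedAddCommGroup Y] [NormedSpace ℝ Y]
    (U : Set (WeakSpace ℝ Y)) (hU : IsOpen U) (x : Y) (hx : x ∈ U) :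
    ∃ (s : Finset (Y →L[ℝ] ℝ)) (δ : ℝ), 0 < δ ∧
      ∀ y : Y, (∀ f ∈ s, |f y - f x| < δ) → y ∈ U := by
  classical
  obtain ⟨O, hO, hpre⟩ :
      ∃ O : Set ((Y →L[ℝ] ℝ) → ℝ), IsOpen O ∧
        (fun (z : Y) (f : Y →L[ℝ] ℝ) => f z) ⁻¹' O = U := isOpen_induced_iff.mp hU
  have hxO : (fun f : Y →L[ℝ] ℝ => f x) ∈ O :=
    ((Set.ext_iff.mp hpre) x).mpr hx
  obtain ⟨I, u, h1, h2⟩ := isOpen_pi_iff.mp hO _ hxO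
  have hball : ∀ g : Y →L[ℝ] ℝ, ∃ δ : ℝ, 0 < δ ∧ (g ∈ I → Metric.ball (g x) δ ⊆ u g) := by
    intro g
    by_cases hg : g ∈ I
    · obtain ⟨δ, hδ, hb⟩ := Metric.isOpen_iff.mp (h1 g hg).1 (g x) (h1 g hg).2
      exact ⟨δ, hδ, fun _ => hb⟩
    · exact ⟨1, one_pos, fun h => absurd h hg⟩
  choose gδ hgδ hgball using hball
  have hTne : (insert (1:ℝ) (I.image gδ)).Nonempty := ⟨1, Finset.mem_insert_self _ _⟩
  refine ⟨I, (insert (1:ℝ) (I.image gδ)).min' hTne, ?_, ?_⟩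
  · have hmem := (insert (1:ℝ) (I.image gδ)).min'_mem hTne
    rcases Finset.mem_insert.mp hmem with h | h
    · rw [h]; exact one_pos
    · obtain ⟨g, _, hgeq⟩ := Finset.mem_image.mp h
      rw [← hgeq]; exact hgδ g
  · intro y hy
    apply ((Set.ext_iff.mp hpre) y).mp
    apply h2
    rw [Set.mem_pi]
    intro g hg
    apply hgball g hg
    rw [Metric.mem_ball, Real.dist_eq]
    have hle : (insert (1:ℝ) (I.image gδ)).min' hTne ≤ gδ g :=
      Finset.min'_le _ _ (Finset.mem_insert_of_mem (Finset.mem_image_of_mem gδ hg))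
    exact lt_of_lt_of_le (hy g hg) hle

set_option maxHeartbeats 1000000 in
lemma good_PC (e : TreeNode → X) (coord : TreeNode → X →L[ℝ] ℝ)
    (hnormE : ∀ c : TreeNode →₀ ℝ, ‖Emb e c‖ = treeNorm c)
    (hdenseE : DenseRange ⇑(Emb e))
    (hcoord : ∀ s t, coord s (e t) = if s = t then 1 else 0)
    {c : TreeNode →₀ ℚ} {D : ℕ} (hc : goodQ c D) :
    PointOfContinuity (Metric.closedBall (0:X) 1) (Emb e (ratCast c)) := by
  classical
  set d := ratCast c with hd
  have hmem : Emb e d ∈ Metric.closedBall (0:X) 1 := by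
    rw [mem_closedBall_zero_iff, hnormE]; exact good_treeNorm_le_one hc
  refine ⟨hmem, ?_⟩
  intro ε hε
  set η : ℝ := ε / (4 * ((D:ℝ)+1)) with hη
  have hηpos : 0 < η := by rw [hη]; positivity
  set TD : Finset TreeNode := (Finset.range (D+1)).biUnion levelFinset with hTD
  have hmemTD : ∀ t : TreeNode, t.length ≤ D → t ∈ TD := by
    intro t ht
    rw [hTD, Finset.mem_biUnion]
    exact ⟨t.length, Finset.mem_range.mpr (Nat.lt_succ_of_le ht), mem_levelFinset.mpr rfl⟩
  set U : Set (WeakSpace ℝ X) := {y | ∀ t ∈ TD, |coord t y - coord t (Emb e d)| < η} with hU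
  have hUopen : IsOpen U := by
    have hrw : U = ⋂ t ∈ TD,
        (fun y : WeakSpace ℝ X => coord t y) ⁻¹' Metric.ball (coord t (Emb e d)) η := by
      ext y
      simp only [hU, Set.mem_setOf_eq, Set.mem_iInter, Set.mem_preimage, Metric.mem_ball,
        Real.dist_eq]
    rw [hrw]
    exact isOpen_biInter_finset fun t _ =>
      IsOpen.preimage (WeakBilin.eval_continuous _ (coord t)) Metric.isOpen_ball
  have hkey : ∀ y : X, y ∈ Metric.closedBall (0:X) 1 →
      (∀ t ∈ TD, |coord t y - coord t (Emb e d)| < η) →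
      ‖y - Emb e d‖ ≤ 2*((D:ℝ)+1)*η := by
    intro y hyB hyU
    rw [mem_closedBall_zero_iff] at hyB
    apply le_of_forall_pos_le_add
    intro ρ hρ
    set C : ℝ := 1 + 2*((D:ℝ)+1) with hC
    have hCpos : 0 < C := by rw [hC]; positivity
    set θ : ℝ := min 1 (ρ / C) with hθdef
    have hθpos : 0 < θ := lt_min one_pos (by positivity)
    have hθ1 : θ ≤ 1 := min_le_left _ _
    have hθρ : θ * C ≤ ρ := by
      have hm : θ ≤ ρ / C := min_le_right _ _
      calc θ * C ≤ (ρ/C) * C := mul_le_mul_of_nonneg_right hm (le_of_lt hCpos)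
        _ = ρ := by field_simp
    obtain ⟨c', hc'1, hc'2⟩ := dense_ball e hnormE hdenseE y hyB hθpos hθ1
    set d' := ratCast c' with hd'
    have hcoorddiff : ∀ t ∈ TD, |d' t - d t| < η + θ := by
      intro t ht
      have h1 : d' t = coord t (Emb e d') := (coord_Emb e coord hcoord d' t).symm
      have h2 : d t = coord t (Emb e d) := (coord_Emb e coord hcoord d t).symm
      have h3 : |coord t (Emb e d') - coord t y| ≤ θ := by
        have h4 := coord_le_norm e coord hnormE hdenseE hcoord t (Emb e d' - y)
        rw [map_sub] at h4
        calc |coord t (Emb e d') - coord t y| ≤ ‖Emb e d' - y‖ := h4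
          _ ≤ θ := by rw [norm_sub_rev]; exact le_of_lt hc'2
      have h4 := hyU t ht
      rw [h1, h2]
      calc |coord t (Emb e d') - coord t (Emb e d)|
          ≤ |coord t (Emb e d') - coord t y| + |coord t y - coord t (Emb e d)| :=
            abs_sub_le _ _ _
        _ < θ + η := add_lt_add_of_le_of_lt h3 h4
        _ = η + θ := add_comm _ _
    have htn : ‖Emb e d' - Emb e d‖ ≤ 2*((D:ℝ)+1)*(η+θ) := by
      rw [← map_sub, hnormE]
      apply treeNorm_le _ (by positivity)
      intro A hA
      rw [← Finset.sum_filter_add_sum_filter_not A (fun t => t.length ≤ D)]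
      have hshallow : ∑ t ∈ A.filter (fun t => t.length ≤ D), |(d' - d) t|
          ≤ ((D:ℝ)+1)*(η+θ) := by
        set As := A.filter (fun t => t.length ≤ D) with hAs
        have hcard : As.card ≤ D+1 := by
          calc As.card ≤ (Finset.range (D+1)).card := by
                apply Finset.card_le_card_of_injOn List.length
                · intro t ht
                  rw [Finset.mem_coe, Finset.mem_range]
                  exact Nat.lt_succ_of_le (Finset.mem_filter.mp ht).2
                · intro a haf b hbf hab
                  have haA : a ∈ A := (Finset.mem_filter.mp haf).1
                  have hbA : b ∈ A := (Finset.mem_filter.mp hbf).1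
                  rcases hA a haA b hbA with h | h
                  · exact h.eq_of_length hab
                  · exact (h.eq_of_length hab.symm).symm
            _ = D+1 := Finset.card_range _
        calc ∑ t ∈ As, |(d' - d) t| ≤ As.card • (η+θ) := by
              apply Finset.sum_le_card_nsmul
              intro t ht
              rw [Finsupp.sub_apply]
              exact le_of_lt (hcoorddiff t (hmemTD t (Finset.mem_filter.mp ht).2))
          _ ≤ ((D:ℝ)+1) * (η+θ) := by
              rw [nsmul_eq_mul]
              apply mul_le_mul_of_nonneg_right _ (by positivity)
              exact_mod_cast hcard
      have hdeep : ∑ t ∈ A.filter (fun t => ¬ t.length ≤ D), |(d' - d) t|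
          ≤ ((D:ℝ)+1)*(η+θ) := by
        set Ad := A.filter (fun t => ¬ t.length ≤ D) with hAd
        have hdz : ∀ t ∈ Ad, |(d' - d) t| = |d' t| := by
          intro t ht
          have hlen := (Finset.mem_filter.mp ht).2
          have h0 : d t = 0 := by
            by_contra h0
            have hct : c t ≠ 0 := by
              intro hc0
              exact h0 (by rw [hd, ratCast_apply, hc0, Rat.cast_zero])
            exact hlen (hc.1 t (Finsupp.mem_support_iff.mpr hct))
          rw [Finsupp.sub_apply, h0, sub_zero]
        rcases Finset.eq_empty_or_nonempty Ad with he | hne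
        · rw [he]; simp; positivity
        · obtain ⟨u, huAd, hutop⟩ :=
            chain_exists_top (isFinChain_subset (Finset.filter_subset _ _) hA) hne
          have hulen : D < u.length := by
            have := (Finset.mem_filter.mp huAd).2
            omega
          set P : Finset TreeNode := (Finset.range (D+1)).image (u.take ·) with hP
          have hPsum : ∑ t ∈ P, |d' t| = ∑ k ∈ Finset.range (D+1), |d' (u.take k)| := by
            apply Finset.sum_image
            intro k hk k' hk' hkk
            rw [Finset.mem_coe, Finset.mem_range] at hk hk'
            have l1 : (u.take k).length = k := by rw [List.length_take]; omega
            have l2 : (u.take k').length = k' := by rw [List.length_take]; omega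
            rw [← l1, ← l2]; exact congrArg List.length hkk
          have hdisj : Disjoint P Ad := by
            rw [Finset.disjoint_left]
            intro t htP htAd
            obtain ⟨k, hk, rfl⟩ := Finset.mem_image.mp htP
            rw [Finset.mem_range] at hk
            have hlen : (u.take k).length ≤ D := by rw [List.length_take]; omega
            exact (Finset.mem_filter.mp htAd).2 hlen
          have hchain2 : IsFinChain (P ∪ Ad) := by
            apply isFinChain_of_prefix (u := u)
            intro t ht
            rcases Finset.mem_union.mp ht with h | h
            · obtain ⟨k, _, rfl⟩ := Finset.mem_image.mp h
              exact List.take_prefix _ _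
            · exact hutop t h
          have hsum_le : ∑ t ∈ P, |d' t| + ∑ t ∈ Ad, |d' t| ≤ 1 := by
            rw [← Finset.sum_union hdisj]
            calc ∑ t ∈ P ∪ Ad, |d' t| ≤ treeNorm d' := sum_chain_le_treeNorm _ hchain2
              _ = ‖Emb e d'‖ := (hnormE d').symm
              _ ≤ 1 := hc'1
          have hPlow : 1 - ((D:ℝ)+1)*(η+θ) ≤ ∑ t ∈ P, |d' t| := by
            rw [hPsum]
            have hlenD : (u.take D).length = D := by rw [List.length_take]; omega
            have hone : ∑ k ∈ Finset.range (D+1), |d (u.take k)| = 1 := by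
              have hps := good_pathSum hc hlenD
              rw [pathSum, hlenD] at hps
              rw [← hps]
              apply Finset.sum_congr rfl
              intro k hk
              rw [Finset.mem_range] at hk
              rw [List.take_take, Nat.min_def]
              have : k ≤ D := by omega
              simp [this, hd]
            have hterm : ∀ k ∈ Finset.range (D+1), |d (u.take k)| - (η+θ) ≤ |d' (u.take k)| := by
              intro k hk
              rw [Finset.mem_range] at hk
              have hmem' : (u.take k) ∈ TD := hmemTD _ (by rw [List.length_take]; omega)
              have hdiff := hcoorddiff _ hmem'
              have habs := abs_sub_abs_le_abs_sub (d (u.take k)) (d' (u.take k))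
              rw [abs_sub_comm (d (u.take k)) (d' (u.take k))] at habs
              linarith
            calc 1 - ((D:ℝ)+1)*(η+θ)
                = ∑ k ∈ Finset.range (D+1), (|d (u.take k)| - (η+θ)) := by
                  rw [Finset.sum_sub_distrib, hone, Finset.sum_const, Finset.card_range,
                    nsmul_eq_mul]
                  push_cast
                  ring
              _ ≤ ∑ k ∈ Finset.range (D+1), |d' (u.take k)| := Finset.sum_le_sum hterm
          have hAdle : ∑ t ∈ Ad, |d' t| ≤ ((D:ℝ)+1)*(η+θ) := by linarith
          calc ∑ t ∈ Ad, |(d' - d) t| = ∑ t ∈ Ad, |d' t| :=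
                Finset.sum_congr rfl (fun t ht => hdz t ht)
            _ ≤ ((D:ℝ)+1)*(η+θ) := hAdle
      linarith
    calc ‖y - Emb e d‖ ≤ ‖y - Emb e d'‖ + ‖Emb e d' - Emb e d‖ := by
          have htri := dist_triangle y (Emb e d') (Emb e d)
          simpa [dist_eq_norm] using htri
      _ ≤ θ + 2*((D:ℝ)+1)*(η+θ) := add_le_add (le_of_lt hc'2) htn
      _ = 2*((D:ℝ)+1)*η + θ*C := by rw [hC]; ring
      _ ≤ 2*((D:ℝ)+1)*η + ρ := by linarith
  refine ⟨Metric.closedBall (0:X) 1 ∩ U, ⟨U, hUopen, rfl⟩, ⟨hmem, ?_⟩, ?_⟩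
  · show ∀ t ∈ TD, |coord t (Emb e d) - coord t (Emb e d)| < η
    intro t _
    simpa using hηpos
  · apply Metric.diam_le_of_forall_dist_le (le_of_lt hε)
    intro y₁ hy₁ y₂ hy₂
    have k₁ := hkey y₁ hy₁.1 hy₁.2
    have k₂ := hkey y₂ hy₂.1 hy₂.2
    calc dist y₁ y₂ ≤ dist y₁ (Emb e d) + dist (Emb e d) y₂ := dist_triangle _ _ _
      _ ≤ 2*((D:ℝ)+1)*η + 2*((D:ℝ)+1)*η := by
          rw [dist_eq_norm, dist_eq_norm']
          exact add_le_add k₁ k₂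
      _ = ε := by
          rw [hη]
          have hD1 : ((D:ℝ)+1) ≠ 0 := by positivity
          field_simp
          ring

set_option maxHeartbeats 1000000 in
lemma construct (e : TreeNode → X) (coord : TreeNode → X →L[ℝ] ℝ)
    (hnormE : ∀ c : TreeNode →₀ ℝ, ‖Emb e c‖ = treeNorm c)
    (hdenseE : DenseRange ⇑(Emb e))
    (hcoord : ∀ s t, coord s (e t) = if s = t then 1 else 0)
    (x : X) (hx : ‖x‖ ≤ 1) (s : Finset (X →L[ℝ] ℝ)) {δ : ℝ} (hδ : 0 < δ) :
    ∃ (c : TreeNode →₀ ℚ) (D : ℕ), goodQ c D ∧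
      ∀ f ∈ s, |f (Emb e (ratCast c)) - f x| < δ := by
  classical
  set F : ℝ := 1 + ∑ f ∈ s, ‖f‖ with hF
  have hsum0 : (0:ℝ) ≤ ∑ f ∈ s, ‖f‖ := Finset.sum_nonneg fun f _ => norm_nonneg f
  have hFpos : 0 < F := by rw [hF]; linarith
  have hFf : ∀ f ∈ s, ‖f‖ ≤ F := by
    intro f hf
    have h1 : ‖f‖ ≤ ∑ g ∈ s, ‖g‖ := Finset.single_le_sum (fun g _ => norm_nonneg g) hf
    rw [hF]; linarith
  set θ : ℝ := min 1 (δ/(2*F)) with hθdef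
  have hθpos : 0 < θ := lt_min one_pos (by positivity)
  have hθ1 : θ ≤ 1 := min_le_left _ _
  obtain ⟨c₀, hc₀1, hc₀2⟩ := dense_ball e hnormE hdenseE x hx hθpos hθ1
  set D : ℕ := c₀.support.sup List.length with hD
  have hsupp₀ : ∀ t ∈ c₀.support, t.length ≤ D := fun t ht => Finset.le_sup ht
  obtain ⟨M₀, hM₀⟩ := exists_nat_gt ((s.card : ℝ) * F^2 / (δ/2)^2)
  set M : ℕ := M₀ + 1 with hM
  have hMpos : 0 < M := Nat.succ_pos _
  have hMR : (0:ℝ) < M := by exact_mod_cast hMpos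
  have hMkey : (s.card : ℝ) * F^2 / M < (δ/2)^2 := by
    have hMbig : (s.card : ℝ) * F^2 / (δ/2)^2 < M := by
      calc (s.card : ℝ) * F^2 / (δ/2)^2 < (M₀:ℝ) := hM₀
        _ ≤ M := by exact_mod_cast Nat.le_succ _
    rw [div_lt_iff₀ hMR]
    rw [div_lt_iff₀ (by positivity : (0:ℝ) < (δ/2)^2)] at hMbig
    linarith
  set slQ : TreeNode → ℚ := fun w => 1 - ∑ k ∈ Finset.range (D+1), |c₀ (w.take k)| with hslQ
  have hsl01 : ∀ w : TreeNode, w.length = D → 0 ≤ slQ w ∧ slQ w ≤ 1 := by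
    intro w hw
    have hq0 : (0:ℚ) ≤ ∑ k ∈ Finset.range (D+1), |c₀ (w.take k)| := by positivity
    have hq1 : (∑ k ∈ Finset.range (D+1), |c₀ (w.take k)| : ℚ) ≤ 1 := by
      have hreal : ((∑ k ∈ Finset.range (D+1), |c₀ (w.take k)| : ℚ) : ℝ) ≤ 1 := by
        have h1 : pathSum (ratCast c₀) w ≤ treeNorm (ratCast c₀) := pathSum_le_treeNorm _ _
        have h2 : treeNorm (ratCast c₀) ≤ 1 := by rw [← hnormE]; exact hc₀1
        have h3 : pathSum (ratCast c₀) w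
            = ((∑ k ∈ Finset.range (D+1), |c₀ (w.take k)| : ℚ) : ℝ) := by
          rw [pathSum, hw]
          push_cast [ratCast_apply]
          rfl
        linarith
      exact_mod_cast hreal
    constructor
    · simp only [hslQ]; linarith
    · simp only [hslQ]; linarith
  set Kfin : Finset TreeNode := (Finset.Icc (D+1) (D+M)).biUnion levelFinset with hKfin
  have hmemK : ∀ t : TreeNode, t ∈ Kfin ↔ (D+1 ≤ t.length ∧ t.length ≤ D+M) := by
    intro t
    rw [hKfin, Finset.mem_biUnion]
    constructor
    · rintro ⟨j, hj, hjl⟩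
      rw [Finset.mem_Icc] at hj
      rw [mem_levelFinset.mp hjl]
      exact hj
    · rintro ⟨h1, h2⟩
      exact ⟨t.length, Finset.mem_Icc.mpr ⟨h1, h2⟩, mem_levelFinset.mpr rfl⟩
  have htakeD : ∀ t ∈ Kfin, (t.take D).length = D := by
    intro t ht
    have := ((hmemK t).mp ht).1
    rw [List.length_take]; omega
  set v : TreeNode → (X →L[ℝ] ℝ) → ℝ :=
    fun t f => (((slQ (t.take D)) : ℝ)/(M:ℝ)) * f (e t) with hv
  obtain ⟨ε, hεpm, hgsum⟩ := greedy s Kfin v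
  set εq : TreeNode → ℚ := fun t => if ε t = 1 then 1 else -1 with hεq
  have hεcast : ∀ t, ((εq t : ℚ) : ℝ) = ε t := by
    intro t
    rcases hεpm t with h | h
    · simp only [hεq, h, if_pos rfl]; norm_num
    · have hne : ε t ≠ 1 := by rw [h]; norm_num
      simp only [hεq, h, if_neg hne]; norm_num
  have habsεq : ∀ t, |εq t| = 1 := by
    intro t
    simp only [hεq]
    split <;> norm_num
  set zfun : TreeNode → ℚ := fun t =>
    if D+1 ≤ t.length ∧ t.length ≤ D+M then εq t * slQ (t.take D) / M else 0 with hzfun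
  set z : TreeNode →₀ ℚ := Finsupp.onFinset Kfin zfun (fun t h => by
    rw [hmemK]
    by_contra hmem
    apply h
    simp only [hzfun]
    rw [if_neg hmem]) with hz
  have hza : ∀ t, z t = zfun t := fun t => rfl
  have hzsupp : z.support ⊆ Kfin := Finsupp.support_onFinset_subset
  set cQ : TreeNode →₀ ℚ := c₀ + z with hcQ
  have hMQ : (M:ℚ) ≠ 0 := by exact_mod_cast hMpos.ne'
  have hgood : goodQ cQ (D+M) := by
    constructor
    · intro t ht
      have hmem := Finsupp.support_add ht
      rcases Finset.mem_union.mp hmem with h | h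
      · exact le_trans (hsupp₀ t h) (Nat.le_add_right _ _)
      · exact ((hmemK t).mp (hzsupp h)).2
    · intro t ht
      set w : TreeNode := t.take D with hw
      have hwlen : w.length = D := by rw [hw, List.length_take]; omega
      have htake : ∀ k, k ≤ D+M → (t.take k).length = k := by
        intro k hk; rw [List.length_take]; omega
      have hsplit : ∑ k ∈ Finset.range (D+M+1), |cQ (t.take k)|
          = ∑ k ∈ Finset.Ico 0 (D+1), |cQ (t.take k)|
            + ∑ k ∈ Finset.Ico (D+1) (D+M+1), |cQ (t.take k)| := by
        rw [Finset.sum_Ico_consecutive _ (Nat.zero_le _) (by omega), ← Finset.range_eq_Ico]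
      have hlow : ∀ k ∈ Finset.Ico 0 (D+1), |cQ (t.take k)| = |c₀ (t.take k)| := by
        intro k hk
        rw [Finset.mem_Ico] at hk
        have hzk : z (t.take k) = 0 := by
          rw [hza]
          simp only [hzfun]
          have hcond : ¬ (D+1 ≤ (t.take k).length ∧ (t.take k).length ≤ D+M) := by
            rw [htake k (by omega)]; omega
          rw [if_neg hcond]
        rw [hcQ, Finsupp.add_apply, hzk, add_zero]
      have hhigh : ∀ k ∈ Finset.Ico (D+1) (D+M+1), |cQ (t.take k)| = slQ w / M := by
        intro k hk
        rw [Finset.mem_Ico] at hk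
        have hlen : (t.take k).length = k := htake k (by omega)
        have hc0k : c₀ (t.take k) = 0 := by
          by_contra h0
          have := hsupp₀ _ (Finsupp.mem_support_iff.mpr h0)
          omega
        have htk : (t.take k).take D = w := by
          rw [List.take_take, hw, Nat.min_def]
          have : D ≤ k := by omega
          simp [this]
        have hzk : z (t.take k) = εq (t.take k) * slQ w / M := by
          rw [hza]
          simp only [hzfun]
          have hcond : D+1 ≤ (t.take k).length ∧ (t.take k).length ≤ D+M := by
            rw [hlen]; omega
          rw [if_pos hcond, htk]
        rw [hcQ, Finsupp.add_apply, hc0k, hzk, zero_add, abs_div, abs_mul, habsεq, one_mul,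
          abs_of_nonneg (hsl01 w hwlen).1]
        congr 1
        rw [abs_of_nonneg (by positivity : (0:ℚ) ≤ (M:ℚ))]
      have hfirst : ∑ k ∈ Finset.Ico 0 (D+1), |c₀ (t.take k)| = 1 - slQ w := by
        rw [← Finset.range_eq_Ico]
        have hcong : ∀ k ∈ Finset.range (D+1), |c₀ (w.take k)| = |c₀ (t.take k)| := by
          intro k hk
          rw [Finset.mem_range] at hk
          rw [hw, List.take_take, Nat.min_def]
          have : k ≤ D := by omega
          simp [this]
        simp only [hslQ]
        rw [← Finset.sum_congr rfl hcong]
        ring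
      have hS1 : ∑ k ∈ Finset.Ico 0 (D+1), |cQ (t.take k)| = 1 - slQ w := by
        rw [Finset.sum_congr rfl hlow]; exact hfirst
      have hS2 : ∑ k ∈ Finset.Ico (D+1) (D+M+1), |cQ (t.take k)| = slQ w := by
        rw [Finset.sum_congr rfl hhigh, Finset.sum_const, Nat.card_Ico]
        have hM' : (D+M+1) - (D+1) = M := by omega
        rw [hM', nsmul_eq_mul, mul_div_cancel₀ _ hMQ]
      rw [hsplit, hS1, hS2]; ring
  refine ⟨cQ, D+M, hgood, ?_⟩
  intro f hf
  have hsplitf : f (Emb e (ratCast cQ)) - f x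
      = (f (Emb e (ratCast c₀)) - f x) + f (Emb e (ratCast z)) := by
    rw [hcQ, ratCast_add, map_add, map_add]; ring
  have hpart1 : |f (Emb e (ratCast c₀)) - f x| ≤ δ/2 := by
    rw [← map_sub]
    calc |f (Emb e (ratCast c₀) - x)| ≤ ‖f‖ * ‖Emb e (ratCast c₀) - x‖ := f.le_opNorm _
      _ ≤ F * θ := by
          apply mul_le_mul (hFf f hf) _ (norm_nonneg _) (le_of_lt hFpos)
          rw [norm_sub_rev]; exact le_of_lt hc₀2
      _ ≤ F * (δ/(2*F)) := mul_le_mul_of_nonneg_left (min_le_right _ _) (le_of_lt hFpos)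
      _ = δ/2 := by field_simp
  have hEz : f (Emb e (ratCast z)) = ∑ t ∈ Kfin, ε t * v t f := by
    have hEz1 : Emb e (ratCast z) = ∑ t ∈ Kfin, (ratCast z) t • e t := by
      rw [Emb_apply]
      apply Finsupp.sum_of_support_subset
      · exact subset_trans (ratCast_support z) hzsupp
      · intros; simp
    rw [hEz1, map_sum]
    refine Finset.sum_congr rfl fun t ht => ?_
    rw [map_smul, smul_eq_mul, ratCast_apply, hza]
    simp only [hzfun]
    rw [if_pos ((hmemK t).mp ht)]
    simp only [hv]
    push_cast
    rw [hεcast]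
    ring
  have hpart2 : |f (Emb e (ratCast z))| < δ/2 := by
    rw [hEz]
    have h1 : (∑ t ∈ Kfin, ε t * v t f)^2 ≤ ∑ g ∈ s, (∑ t ∈ Kfin, ε t * v t g)^2 :=
      Finset.single_le_sum (f := fun g => (∑ t ∈ Kfin, ε t * v t g)^2)
        (fun g _ => sq_nonneg _) hf
    have h2 : ∑ t ∈ Kfin, ∑ g ∈ s, (v t g)^2 ≤ (s.card : ℝ) * F^2 / M := by
      rw [Finset.sum_comm]
      have hper : ∀ g ∈ s, ∑ t ∈ Kfin, (v t g)^2 ≤ F^2/M := by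
        intro g hg
        have hlevels : ∑ t ∈ Kfin, |g (e t)| ≤ (M:ℝ) * ‖g‖ := by
          have hdisjlvl : (↑(Finset.Icc (D+1) (D+M)) : Set ℕ).PairwiseDisjoint levelFinset := by
            intro j _ j' _ hjj
            apply Finset.disjoint_left.mpr
            intro a haj haj'
            exact hjj (by rw [← mem_levelFinset.mp haj, ← mem_levelFinset.mp haj'])
          rw [hKfin, Finset.sum_biUnion hdisjlvl]
          calc ∑ j ∈ Finset.Icc (D+1) (D+M), ∑ t ∈ levelFinset j, |g (e t)|
              ≤ ∑ _j ∈ Finset.Icc (D+1) (D+M), ‖g‖ := by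
                apply Finset.sum_le_sum
                intro j _
                exact level_sum_le e hnormE g j _ (fun t ht => mem_levelFinset.mp ht)
            _ = (M:ℝ) * ‖g‖ := by
                rw [Finset.sum_const, Nat.card_Icc, nsmul_eq_mul]
                congr 1
                have : D + M + 1 - (D+1) = M := by omega
                rw [this]
        have hgeT : ∀ t, |g (e t)| ≤ ‖g‖ := by
          intro t
          have h3 := g.le_opNorm (e t)
          rw [norm_e e hnormE t, mul_one, Real.norm_eq_abs] at h3
          exact h3
        have hb : ∀ t ∈ Kfin, (v t g)^2 ≤ (1/(M:ℝ)^2) * (g (e t))^2 := by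
          intro t ht
          have hlenD := htakeD t ht
          have hr0 : (0:ℝ) ≤ ((slQ (t.take D) : ℚ) : ℝ) := by
            exact_mod_cast (hsl01 _ hlenD).1
          have hr1 : ((slQ (t.take D) : ℚ) : ℝ) ≤ 1 := by
            exact_mod_cast (hsl01 _ hlenD).2
          have hveq : (v t g)^2
              = (((slQ (t.take D) : ℚ) : ℝ))^2 * ((g (e t))^2 * (1/(M:ℝ)^2)) := by
            simp only [hv]; ring
          rw [hveq]
          have h1le : (((slQ (t.take D) : ℚ) : ℝ))^2 ≤ 1 := by nlinarith
          have hnn : (0:ℝ) ≤ (g (e t))^2 * (1/(M:ℝ)^2) := by positivity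
          calc _ ≤ 1 * ((g (e t))^2 * (1/(M:ℝ)^2)) := mul_le_mul_of_nonneg_right h1le hnn
            _ = (1/(M:ℝ)^2) * (g (e t))^2 := by ring
        calc ∑ t ∈ Kfin, (v t g)^2 ≤ ∑ t ∈ Kfin, (1/(M:ℝ)^2) * (g (e t))^2 :=
              Finset.sum_le_sum hb
          _ = (1/(M:ℝ)^2) * ∑ t ∈ Kfin, (g (e t))^2 := by rw [Finset.mul_sum]
          _ ≤ (1/(M:ℝ)^2) * ((M:ℝ) * ‖g‖^2) := by
              apply mul_le_mul_of_nonneg_left _ (by positivity)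
              have hsq : ∀ t ∈ Kfin, (g (e t))^2 ≤ ‖g‖ * |g (e t)| := by
                intro t _
                nlinarith [hgeT t, abs_nonneg (g (e t)), sq_abs (g (e t))]
              calc ∑ t ∈ Kfin, (g (e t))^2 ≤ ∑ t ∈ Kfin, ‖g‖ * |g (e t)| :=
                    Finset.sum_le_sum hsq
                _ = ‖g‖ * ∑ t ∈ Kfin, |g (e t)| := by rw [Finset.mul_sum]
                _ ≤ ‖g‖ * ((M:ℝ) * ‖g‖) := mul_le_mul_of_nonneg_left hlevels (norm_nonneg g)
                _ = (M:ℝ) * ‖g‖^2 := by ring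
          _ ≤ F^2/M := by
              have hgF : ‖g‖^2 ≤ F^2 := by
                have := hFf g hg
                nlinarith [norm_nonneg g]
              have hMne : (M:ℝ) ≠ 0 := ne_of_gt hMR
              rw [show (1/(M:ℝ)^2) * ((M:ℝ) * ‖g‖^2) = ‖g‖^2/M by field_simp]
              gcongr
      calc ∑ g ∈ s, ∑ t ∈ Kfin, (v t g)^2 ≤ ∑ _g ∈ s, F^2/M := Finset.sum_le_sum hper
        _ = (s.card : ℝ) * (F^2/M) := by rw [Finset.sum_const, nsmul_eq_mul]
        _ = (s.card : ℝ) * F^2/M := by ring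
    have h3 : (∑ t ∈ Kfin, ε t * v t f)^2 < (δ/2)^2 :=
      lt_of_le_of_lt (le_trans h1 (le_trans hgsum h2)) hMkey
    by_contra hcon
    push_neg at hcon
    have h4 : (δ/2)^2 ≤ (∑ t ∈ Kfin, ε t * v t f)^2 := by
      calc (δ/2)^2 ≤ |∑ t ∈ Kfin, ε t * v t f|^2 := by
            apply pow_le_pow_left₀ (by positivity) hcon
        _ = (∑ t ∈ Kfin, ε t * v t f)^2 := sq_abs _
    linarith
  calc |f (Emb e (ratCast cQ)) - f x|
      = |(f (Emb e (ratCast c₀)) - f x) + f (Emb e (ratCast z))| := by rw [hsplitf]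
    _ ≤ |f (Emb e (ratCast c₀)) - f x| + |f (Emb e (ratCast z))| := abs_add_le _ _
    _ < δ/2 + δ/2 := add_lt_add_of_le_of_lt hpart1 hpart2
    _ = δ := by ring

end BTaux

set_option maxHeartbeats 1600000 in
open BTaux in
/-- **The points of continuity of `B_{X_T}` are weakly dense.** In the binary tree space, the
closed unit ball is contained in the weak closure of its set of points of continuity; in
particular `(B_{X_T}, w)` has a countable π-base. -/
theorem binary_tree_points_of_continuity_weakly_dense {X : Type*} [NormedAddCommGroup X]
    [NormedSpace ℝ X] [CompleteSpace X] (e : TreeNode → X) (coord : TreeNode → X →L[ℝ] ℝ)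
    (hnorm : ∀ c : TreeNode →₀ ℝ, ‖c.sum fun t a => a • e t‖ = treeNorm c)
    (hdense : DenseRange fun c : TreeNode →₀ ℝ => c.sum fun t a => a • e t)
    (hcoord : ∀ s t, coord s (e t) = if s = t then 1 else 0) :
    closedBall (0 : X) 1 ⊆
      closure (X := WeakSpace ℝ X) {x | PointOfContinuity (closedBall (0 : X) 1) x} ∧
    ∃ V : ℕ → Set X,
      (∀ n, (V n).Nonempty ∧ RelWeakOpen (closedBall (0 : X) 1) (V n)) ∧
      ∀ W : Set X, W.Nonempty → RelWeakOpen (closedBall (0 : X) 1) W →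
        ∃ n, V n ⊆ W := by
  classical
  have hEfun : (fun c : TreeNode →₀ ℝ => c.sum fun t a => a • e t) = ⇑(Emb e) :=
    funext fun c => (Emb_apply e c).symm
  have hnormE : ∀ c : TreeNode →₀ ℝ, ‖Emb e c‖ = treeNorm c := by
    intro c; rw [Emb_apply]; exact hnorm c
  have hdenseE : DenseRange ⇑(Emb e) := hEfun ▸ hdense
  have hP : ∀ (c : TreeNode →₀ ℚ) (D : ℕ), goodQ c D →
      PointOfContinuity (closedBall (0:X) 1) (Emb e (ratCast c)) :=
    fun c D hg => good_PC e coord hnormE hdenseE hcoord hg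
  constructor
  · intro x hx
    rw [mem_closedBall_zero_iff] at hx
    apply (_root_.mem_closure_iff (X := WeakSpace ℝ X)).mpr
    intro o ho hxo
    obtain ⟨s, δ, hδ, hs⟩ := weak_basis o ho x hxo
    obtain ⟨c, D, hg, hf⟩ := construct e coord hnormE hdenseE hcoord x hx s hδ
    exact ⟨Emb e (ratCast c), hs _ (fun f hfs => hf f hfs), hP c D hg⟩
  · -- countable π-base
    have hQ0 : goodQ (Finsupp.single ([] : TreeNode) (1:ℚ)) 0 := by
      constructor
      · intro t ht
        have hmem := Finsupp.support_single_subset ht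
        rw [Finset.mem_singleton] at hmem
        rw [hmem]
        exact le_refl 0
      · intro t ht
        rw [List.length_eq_zero_iff] at ht
        subst ht
        simp
    have hQne : Nonempty {p : (TreeNode →₀ ℚ) × ℕ // goodQ p.1 p.2} :=
      ⟨⟨(Finsupp.single ([] : TreeNode) (1:ℚ), 0), hQ0⟩⟩
    obtain ⟨u, hu⟩ := exists_surjective_nat {p : (TreeNode →₀ ℚ) × ℕ // goodQ p.1 p.2}
    have hchoice : ∀ (m k : ℕ), ∃ V : Set X,
        RelWeakOpen (closedBall (0:X) 1) V ∧ Emb e (ratCast (u m).1.1) ∈ V ∧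
        Metric.diam V ≤ 1/((k:ℝ)+1) := by
      intro m k
      exact (hP (u m).1.1 (u m).1.2 (u m).2).2 (1/((k:ℝ)+1)) (by positivity)
    choose Vf hV1 hV2 hV3 using hchoice
    refine ⟨fun n => Vf n.unpair.1 n.unpair.2,
      fun n => ⟨⟨_, hV2 n.unpair.1 n.unpair.2⟩, hV1 n.unpair.1 n.unpair.2⟩, ?_⟩
    intro W hWne hWopen
    obtain ⟨U, hUopen, rfl⟩ := hWopen
    obtain ⟨y, hyB, hyU⟩ := hWne
    obtain ⟨s, δ, hδ, hs⟩ := weak_basis U hUopen y hyU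
    set F : ℝ := 1 + ∑ f ∈ s, ‖f‖ with hF
    have hsum0 : (0:ℝ) ≤ ∑ f ∈ s, ‖f‖ := Finset.sum_nonneg fun f _ => norm_nonneg f
    have hFpos : 0 < F := by rw [hF]; linarith
    have hFf : ∀ f ∈ s, ‖f‖ ≤ F := by
      intro f hf
      have h1 : ‖f‖ ≤ ∑ g ∈ s, ‖g‖ := Finset.single_le_sum (fun g _ => norm_nonneg g) hf
      rw [hF]; linarith
    obtain ⟨k, hk⟩ := exists_nat_gt (2*F/δ)
    have hkk : F * (1/((k:ℝ)+1)) < δ/2 := by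
      have hk1 : (0:ℝ) < (k:ℝ)+1 := by positivity
      rw [div_lt_iff₀ hδ] at hk
      have hklt : 2*F < δ * ((k:ℝ)+1) := by
        have : (k:ℝ) ≤ (k:ℝ)+1 := by linarith
        nlinarith
      rw [mul_one_div, div_lt_iff₀ hk1]
      linarith
    obtain ⟨c, D, hg, hf⟩ :=
      construct e coord hnormE hdenseE hcoord y (mem_closedBall_zero_iff.mp hyB) s
        (by positivity : (0:ℝ) < δ/2)
    obtain ⟨m, hm⟩ := hu ⟨(c, D), hg⟩
    refine ⟨Nat.pair m k, ?_⟩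
    simp only [Nat.unpair_pair]
    have hpc : (u m).1.1 = c := by rw [hm]
    set p : X := Emb e (ratCast (u m).1.1) with hpdef
    have hVsub : Vf m k ⊆ closedBall (0:X) 1 := by
      obtain ⟨U', _, hVeq⟩ := hV1 m k
      rw [hVeq]; exact Set.inter_subset_left
    have hbdd : Bornology.IsBounded (Vf m k) :=
      Metric.isBounded_closedBall.subset hVsub
    intro w hw
    have hwB : w ∈ closedBall (0:X) 1 := hVsub hw
    have hdistwp : dist w p ≤ 1/((k:ℝ)+1) :=
      le_trans (Metric.dist_le_diam_of_mem hbdd hw (hV2 m k)) (hV3 m k)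
    refine ⟨hwB, hs w ?_⟩
    intro f hfs
    have h1 : |f w - f p| ≤ ‖f‖ * (1/((k:ℝ)+1)) := by
      rw [← map_sub]
      calc |f (w - p)| ≤ ‖f‖ * ‖w - p‖ := f.le_opNorm _
        _ ≤ ‖f‖ * (1/((k:ℝ)+1)) := by
            apply mul_le_mul_of_nonneg_left _ (norm_nonneg f)
            rw [← dist_eq_norm]
            exact hdistwp
    have h2 : |f p - f y| < δ/2 := by
      rw [hpdef, hpc]
      exact hf f hfs
    calc |f w - f y| ≤ |f w - f p| + |f p - f y| := abs_sub_le _ _ _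
      _ < ‖f‖ * (1/((k:ℝ)+1)) + δ/2 := by linarith
      _ ≤ F * (1/((k:ℝ)+1)) + δ/2 := by
          have := hFf f hfs
          have hpos : (0:ℝ) ≤ 1/((k:ℝ)+1) := by positivity
          nlinarith
      _ < δ/2 + δ/2 := by linarith
      _ = δ := by ring
end
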